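/- arXiv:1802.04106 — 15 statements merged into one kernel-verified Lean document; each statement's English description precedes it below -/
import Mathlib

section
/- For a countably infinite group G, the set PT_G of all prethick subsets of G is a G_delta-sigma subset of P_G, and the sets S_G of all small subsets and EL_G of all extralarge subsets of G are F_sigma-delta subsets of P_G. -/
open Pointwise

/-- A subset `A` of a group `G` is large if `G = F * A` for some finite `F ⊆ G`. -/
def IsLargeSub {G : Type*} [Group G] (A : Set G) : Prop :=
  ∃ F : Finset G, (F : Set G) * A = Set.univ

/-- A subset `A` of a group `G` is thick if for every finite `F ⊆ G` there is
`a ∈ A` with `F * a ⊆ A`. -/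
def IsThickSub {G : Type*} [Group G] (A : Set G) : Prop :=
  ∀ F : Finset G, ∃ a ∈ A, (F : Set G) * ({a} : Set G) ⊆ A

/-- A subset `A` of a group `G` is prethick if `F * A` is thick for some finite `F`. -/
def IsPrethickSub {G : Type*} [Group G] (A : Set G) : Prop :=
  ∃ F : Finset G, IsThickSub ((F : Set G) * A)

/-- A subset `A` of a group `G` is small if `L \ A` is large for every large `L`. -/
def IsSmallSub {G : Type*} [Group G] (A : Set G) : Prop :=
  ∀ L : Set G, IsLargeSub L → IsLargeSub (L \ A)

/-- A subset `A` of a group `G` is extralarge if `G \ A` is small. -/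
def IsExtralargeSub {G : Type*} [Group G] (A : Set G) : Prop :=
  IsSmallSub Aᶜ

/-- A subset of a topological space is `F_σ` if it is a countable union of closed sets. -/
def IsFsigmaSet {X : Type*} [TopologicalSpace X] (s : Set X) : Prop :=
  ∃ C : ℕ → Set X, (∀ n, IsClosed (C n)) ∧ s = ⋃ n, C n

/-- A subset of a topological space is `G_δ` if it is a countable intersection of open sets. -/
def IsGdeltaSet {X : Type*} [TopologicalSpace X] (s : Set X) : Prop :=
  ∃ U : ℕ → Set X, (∀ n, IsOpen (U n)) ∧ s = ⋂ n, U n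

/-- A subset of a topological space is `G_δσ` if it is a countable union of `G_δ` sets. -/
def IsGdeltaSigmaSet {X : Type*} [TopologicalSpace X] (s : Set X) : Prop :=
  ∃ C : ℕ → Set X, (∀ n, IsGdeltaSet (C n)) ∧ s = ⋃ n, C n

/-- A subset of a topological space is `F_σδ` if it is a countable intersection of `F_σ` sets. -/
def IsFsigmaDeltaSet {X : Type*} [TopologicalSpace X] (s : Set X) : Prop :=
  ∃ C : ℕ → Set X, (∀ n, IsFsigmaSet (C n)) ∧ s = ⋂ n, C n

section Aux

open Pointwise

variable {G : Type*} [Group G]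

lemma isLargeSub_univ : IsLargeSub (Set.univ : Set G) := by
  refine ⟨{1}, ?_⟩
  rw [Set.eq_univ_iff_forall]
  intro g
  exact Set.mem_mul.mpr ⟨1, by simp, g, trivial, one_mul g⟩

lemma smul_set_eq_singleton_mul (a : G) (A : Set G) : a • A = {a} * A := by
  ext x
  constructor
  · rintro ⟨y, hy, rfl⟩
    exact Set.mem_mul.mpr ⟨a, rfl, y, hy, rfl⟩
  · rintro ⟨z, rfl, y, hy, rfl⟩
    exact ⟨y, hy, rfl⟩

lemma isLarge_smul (s : G) {L : Set G} (h : IsLargeSub L) : IsLargeSub (s • L) := by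
  classical
  obtain ⟨F, hF⟩ := h
  refine ⟨F * {s⁻¹}, ?_⟩
  rw [Finset.coe_mul, Finset.coe_singleton, mul_assoc, smul_set_eq_singleton_mul,
    ← mul_assoc ({s⁻¹} : Set G), Set.singleton_mul_singleton, inv_mul_cancel,
    Set.singleton_one, one_mul, hF]

lemma isSmall_smul (s : G) {A : Set G} (h : IsSmallSub A) : IsSmallSub (s • A) := by
  intro L hL
  have h3 := isLarge_smul s (h (s⁻¹ • L) (isLarge_smul s⁻¹ hL))
  rwa [Set.smul_set_sdiff, smul_inv_smul] at h3

lemma mem_finset_mul {F : Finset G} {A : Set G} {g : G} :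
    g ∈ (↑F : Set G) * A ↔ ∃ f ∈ F, f⁻¹ * g ∈ A := by
  rw [Set.mem_mul]
  constructor
  · rintro ⟨f, hf, y, hy, rfl⟩
    exact ⟨f, hf, by simpa using hy⟩
  · rintro ⟨f, hf, hy⟩
    exact ⟨f, hf, f⁻¹ * g, hy, by group⟩

lemma isSmallSub_iff {A : Set G} :
    IsSmallSub A ↔ ∀ F : Finset G, IsLargeSub (((↑F : Set G) * A)ᶜ) := by
  classical
  constructor
  · intro h F
    induction F using Finset.induction with
    | empty => simpa using isLargeSub_univ
    | @insert a F ha ih =>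
      have hset : (((↑(insert a F) : Set G)) * A)ᶜ = ((↑F : Set G) * A)ᶜ \ (a • A) := by
        rw [Finset.coe_insert, Set.insert_eq, Set.union_mul, Set.compl_union, Set.diff_eq,
          Set.inter_comm, smul_set_eq_singleton_mul]
      rw [hset]
      exact isSmall_smul a h _ ih
  · intro h L hL
    obtain ⟨F, hF⟩ := hL
    obtain ⟨E, hE⟩ := h F
    refine ⟨E * F, ?_⟩
    rw [Finset.coe_mul, Set.eq_univ_iff_forall]
    intro g
    obtain ⟨e, he, x, hx, hex⟩ := Set.mem_mul.mp ((Set.eq_univ_iff_forall.mp hE) g)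
    obtain ⟨f, hf, y, hy, hfy⟩ := Set.mem_mul.mp ((Set.eq_univ_iff_forall.mp hF) x)
    have hyA : y ∉ A := fun hyA => hx (Set.mem_mul.mpr ⟨f, hf, y, hyA, hfy⟩)
    exact Set.mem_mul.mpr ⟨e * f, Set.mul_mem_mul he hf, y, ⟨hy, hyA⟩,
      by rw [mul_assoc, hfy, hex]⟩

lemma isClopen_coord (x : G) (b : Bool) : IsClopen {χ : G → Bool | χ x = b} :=
  (isClopen_discrete {b}).preimage (continuous_apply x)

lemma isClopen_memFA (F : Finset G) (g : G) (b : Bool) :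
    IsClopen {χ : G → Bool | ∃ f ∈ F, χ (f⁻¹ * g) = b} := by
  have h : {χ : G → Bool | ∃ f ∈ F, χ (f⁻¹ * g) = b}
      = ⋃ f ∈ (↑F : Set G), {χ : G → Bool | χ (f⁻¹ * g) = b} := by
    ext χ; simp
  rw [h]
  exact F.finite_toSet.isClopen_biUnion fun f _ => isClopen_coord _ _

lemma isClopen_notin (E F : Finset G) (g : G) (b : Bool) :
    IsClopen {χ : G → Bool | ∃ x ∈ E, ∀ f ∈ F, ¬ χ (f⁻¹ * (x⁻¹ * g)) = b} := by
  have h : {χ : G → Bool | ∃ x ∈ E, ∀ f ∈ F, ¬ χ (f⁻¹ * (x⁻¹ * g)) = b}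
      = ⋃ x ∈ (↑E : Set G), ⋂ f ∈ (↑F : Set G), {χ : G → Bool | χ (f⁻¹ * (x⁻¹ * g)) = b}ᶜ := by
    ext χ; simp
  rw [h]
  exact E.finite_toSet.isClopen_biUnion fun x _ =>
    F.finite_toSet.isClopen_biInter fun f _ => (isClopen_coord _ _).compl

lemma largeCompl_iff {F E : Finset G} {χ : G → Bool} {b : Bool} :
    (↑E : Set G) * (((↑F : Set G) * {g : G | χ g = b})ᶜ) = Set.univ ↔
      ∀ g : G, ∃ x ∈ E, ∀ f ∈ F, ¬ χ (f⁻¹ * (x⁻¹ * g)) = b := by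
  simp only [Set.eq_univ_iff_forall, mem_finset_mul, Set.mem_compl_iff, Set.mem_setOf_eq,
    not_exists, not_and]

lemma isFsigmaDelta_small [Countable G] (b : Bool) :
    IsFsigmaDeltaSet {χ : G → Bool | IsSmallSub {g : G | χ g = b}} := by
  obtain ⟨e, he⟩ := exists_surjective_nat (Finset G)
  refine ⟨fun n => {χ | IsLargeSub (((↑(e n) : Set G) * {g : G | χ g = b})ᶜ)}, fun n => ?_, ?_⟩
  · refine ⟨fun m => ⋂ g : G,
      {χ : G → Bool | ∃ x ∈ e m, ∀ f ∈ e n, ¬ χ (f⁻¹ * (x⁻¹ * g)) = b}, fun m => ?_, ?_⟩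
    · exact isClosed_iInter fun g => (isClopen_notin (e m) (e n) g b).isClosed
    · ext χ
      simp only [Set.mem_setOf_eq, IsLargeSub, Set.mem_iUnion, Set.mem_iInter]
      constructor
      · rintro ⟨E, hE⟩
        obtain ⟨m, rfl⟩ := he E
        exact ⟨m, fun g => largeCompl_iff.mp hE g⟩
      · rintro ⟨m, hm⟩
        exact ⟨e m, largeCompl_iff.mpr hm⟩
  · ext χ
    simp only [Set.mem_setOf_eq, Set.mem_iInter, isSmallSub_iff]
    exact he.forall

lemma finset_mul_singleton_subset {K : Finset G} {a : G} {B : Set G} :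
    (↑K : Set G) * ({a} : Set G) ⊆ B ↔ ∀ k ∈ K, k * a ∈ B := by
  constructor
  · intro h k hk
    exact h (Set.mul_mem_mul hk rfl)
  · rintro h x hx
    obtain ⟨k, hk, y, hy, rfl⟩ := Set.mem_mul.mp hx
    rw [Set.mem_singleton_iff] at hy
    subst hy
    exact h k hk

lemma isClopen_thickWitness (F K : Finset G) (a : G) :
    IsClopen {χ : G → Bool | (∃ f ∈ F, χ (f⁻¹ * a) = true) ∧
      ∀ k ∈ K, ∃ f ∈ F, χ (f⁻¹ * (k * a)) = true} := by
  have h : {χ : G → Bool | (∃ f ∈ F, χ (f⁻¹ * a) = true) ∧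
        ∀ k ∈ K, ∃ f ∈ F, χ (f⁻¹ * (k * a)) = true}
      = {χ : G → Bool | ∃ f ∈ F, χ (f⁻¹ * a) = true} ∩
        ⋂ k ∈ (↑K : Set G), {χ : G → Bool | ∃ f ∈ F, χ (f⁻¹ * (k * a)) = true} := by
    ext χ; simp
  rw [h]
  exact (isClopen_memFA F a true).inter
    (K.finite_toSet.isClopen_biInter fun k _ => isClopen_memFA F _ true)

lemma thick_iff {F : Finset G} {χ : G → Bool} :
    IsThickSub ((↑F : Set G) * {g : G | χ g = true}) ↔
      ∀ K : Finset G, ∃ a : G, (∃ f ∈ F, χ (f⁻¹ * a) = true) ∧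
        ∀ k ∈ K, ∃ f ∈ F, χ (f⁻¹ * (k * a)) = true := by
  unfold IsThickSub
  apply forall_congr'
  intro K
  constructor
  · rintro ⟨a, ha, hsub⟩
    exact ⟨a, mem_finset_mul.mp ha,
      fun k hk => mem_finset_mul.mp (finset_mul_singleton_subset.mp hsub k hk)⟩
  · rintro ⟨a, ha, hK⟩
    exact ⟨a, mem_finset_mul.mpr ha,
      finset_mul_singleton_subset.mpr fun k hk => mem_finset_mul.mpr (hK k hk)⟩

end Aux

/-- For a countably infinite group `G`, identifying `P_G` with `{0,1}^G = G → Bool`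
(with the product topology, `Bool` discrete), the family of prethick subsets of `G`
is `G_δσ`, and the families of small and of extralarge subsets are `F_σδ`. -/
theorem prethick_isGdeltaSigma_small_extralarge_isFsigmaDelta
    {G : Type*} [Group G] [Countable G] [Infinite G] :
    IsGdeltaSigmaSet {χ : G → Bool | IsPrethickSub {g : G | χ g = true}} ∧
    IsFsigmaDeltaSet {χ : G → Bool | IsSmallSub {g : G | χ g = true}} ∧
    IsFsigmaDeltaSet {χ : G → Bool | IsExtralargeSub {g : G | χ g = true}} := by
  refine ⟨?_, isFsigmaDelta_small true, ?_⟩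
  · obtain ⟨e, he⟩ := exists_surjective_nat (Finset G)
    refine ⟨fun n => {χ : G → Bool | IsThickSub ((↑(e n) : Set G) * {g : G | χ g = true})},
      fun n => ?_, ?_⟩
    · refine ⟨fun m => ⋃ a : G, {χ : G → Bool | (∃ f ∈ e n, χ (f⁻¹ * a) = true) ∧
          ∀ k ∈ e m, ∃ f ∈ e n, χ (f⁻¹ * (k * a)) = true},
        fun m => isOpen_iUnion fun a => (isClopen_thickWitness _ _ a).isOpen, ?_⟩
      ext χ
      simp only [Set.mem_setOf_eq, Set.mem_iInter, Set.mem_iUnion, thick_iff]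
      exact he.forall
    · ext χ
      simp only [Set.mem_setOf_eq, Set.mem_iUnion, IsPrethickSub]
      constructor
      · rintro ⟨F, h⟩
        obtain ⟨n, rfl⟩ := he F
        exact ⟨n, h⟩
      · rintro ⟨n, h⟩
        exact ⟨e n, h⟩
  · have hc : ∀ χ : G → Bool, ({g : G | χ g = true})ᶜ = {g : G | χ g = false} := by
      intro χ; ext g; simp
    have hiff : ∀ χ : G → Bool,
        IsExtralargeSub {g : G | χ g = true} ↔ IsSmallSub {g : G | χ g = false} := by
      intro χ
      show IsSmallSub ({g : G | χ g = true})ᶜ ↔ _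
      rw [hc χ]
    have hset : {χ : G → Bool | IsExtralargeSub {g : G | χ g = true}}
        = {χ : G → Bool | IsSmallSub {g : G | χ g = false}} := by
      ext χ
      simp only [Set.mem_setOf_eq, hiff χ]
    rw [hset]
    exact isFsigmaDelta_small false
end

section
/- For a countably infinite group G, each of the following three families is an F_sigma-delta subset of P_G: the family of all thin subsets of G, the family of all weakly P-small subsets of G, and the family of all near P-small subsets of G. -/
set_option linter.unusedSectionVars false


open Pointwise

/-- A subset `A` of a group `G` is thin if `gA ∩ A` is finite for each `g ≠ 1`. -/
def IsThinSub {G : Type*} [Group G] (A : Set G) : Prop :=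
  ∀ g : G, g ≠ 1 → (g • A ∩ A).Finite

/-- A subset `A` of a group `G` is weakly P-small if, for every `n`, there exist
`g 0, …, g n` in `G` such that the translates `g 0 • A, …, g n • A` are pairwise disjoint. -/
def IsWeaklyPSmallSub {G : Type*} [Group G] (A : Set G) : Prop :=
  ∀ n : ℕ, ∃ g : Fin (n + 1) → G,
    ∀ i j : Fin (n + 1), i ≠ j → Disjoint (g i • A) (g j • A)

/-- A subset `A` of a group `G` is near P-small if, for every `n`, there exist
`g 0, …, g n` in `G` such that `g i • A ∩ g j • A` is finite for all distinct `i, j`. -/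
def IsNearPSmallSub {G : Type*} [Group G] (A : Set G) : Prop :=
  ∀ n : ℕ, ∃ g : Fin (n + 1) → G,
    ∀ i j : Fin (n + 1), i ≠ j → (g i • A ∩ g j • A).Finite

section Aux

variable {X : Type*} [TopologicalSpace X]

lemma IsClosed.isFsigmaSet {s : Set X} (h : IsClosed s) : IsFsigmaSet s :=
  ⟨fun _ => s, fun _ => h, (Set.iUnion_const s).symm⟩

lemma isFsigma_iUnion {ι : Type*} [Countable ι] {s : ι → Set X}
    (h : ∀ i, IsFsigmaSet (s i)) : IsFsigmaSet (⋃ i, s i) := by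
  cases isEmpty_or_nonempty ι with
  | inl hι =>
    rw [Set.iUnion_of_empty]
    exact isClosed_empty.isFsigmaSet
  | inr hι =>
    obtain ⟨f, hf⟩ := exists_surjective_nat ι
    choose C hC hs using h
    let e : ℕ ≃ ℕ × ℕ := (Denumerable.eqv (ℕ × ℕ)).symm
    refine ⟨fun k => C (f (e k).1) (e k).2, fun k => hC _ _, ?_⟩
    ext x
    simp only [Set.mem_iUnion]
    constructor
    · rintro ⟨i, hx⟩
      obtain ⟨n, rfl⟩ := hf i
      rw [hs (f n)] at hx
      obtain ⟨m, hm⟩ := Set.mem_iUnion.1 hx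
      refine ⟨e.symm (n, m), ?_⟩
      simpa using hm
    · rintro ⟨k, hk⟩
      exact ⟨f (e k).1, (hs _).symm ▸ Set.mem_iUnion.2 ⟨(e k).2, hk⟩⟩

lemma isFsigma_iInter_of_finite {ι : Type*} [Finite ι] {s : ι → Set X}
    (h : ∀ i, IsFsigmaSet (s i)) : IsFsigmaSet (⋂ i, s i) := by
  choose C hC hs using h
  have key : (⋂ i, s i) = ⋃ f : ι → ℕ, ⋂ i, C i (f i) := by
    ext x
    simp only [Set.mem_iInter, Set.mem_iUnion, hs]
    exact Classical.skolem
  rw [key]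
  exact isFsigma_iUnion fun f => (isClosed_iInter fun i => hC i (f i)).isFsigmaSet

lemma isFsigmaDelta_iInter {ι : Type*} [Countable ι] {s : ι → Set X}
    (h : ∀ i, IsFsigmaSet (s i)) : IsFsigmaDeltaSet (⋂ i, s i) := by
  cases isEmpty_or_nonempty ι with
  | inl hι =>
    refine ⟨fun _ => Set.univ, fun _ => isClosed_univ.isFsigmaSet, ?_⟩
    simp
  | inr hι =>
    obtain ⟨f, hf⟩ := exists_surjective_nat ι
    refine ⟨fun n => s (f n), fun n => h _, ?_⟩
    ext x
    simp only [Set.mem_iInter]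
    exact ⟨fun H n => H _, fun H i => by obtain ⟨n, rfl⟩ := hf i; exact H n⟩

end Aux

section BoolAux

variable {G : Type*} [Group G] [Countable G]

omit [Group G] [Countable G] in
lemma isOpen_evalTrue (a : G) : IsOpen {χ : G → Bool | χ a = true} := by
  have : {χ : G → Bool | χ a = true} = (fun χ : G → Bool => χ a) ⁻¹' {true} := by
    ext χ; simp
  rw [this]
  exact (isOpen_discrete {true}).preimage (continuous_apply a)

/-- The "strong disjointness" set is closed. -/
lemma isClosed_disjSet (u v : G → G) :
    IsClosed {χ : G → Bool | ∀ x : G, ¬(χ (u x) = true ∧ χ (v x) = true)} := by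
  have : {χ : G → Bool | ∀ x : G, ¬(χ (u x) = true ∧ χ (v x) = true)}
      = ⋂ x : G, ({χ : G → Bool | χ (u x) = true} ∩ {χ | χ (v x) = true})ᶜ := by
    ext χ
    simp [Set.mem_iInter, Set.mem_setOf_eq, not_and]
  rw [this]
  exact isClosed_iInter fun x =>
    ((isOpen_evalTrue (u x)).inter (isOpen_evalTrue (v x))).isClosed_compl

/-- The "finite intersection" set is `F_σ`. -/
lemma isFsigma_finSet (u v : G → G) :
    IsFsigmaSet {χ : G → Bool | ({x : G | χ (u x) = true ∧ χ (v x) = true}).Finite} := by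
  have key : {χ : G → Bool | ({x : G | χ (u x) = true ∧ χ (v x) = true}).Finite}
      = ⋃ F : Finset G, ⋂ (x : G) (_ : x ∉ F),
          ({χ : G → Bool | χ (u x) = true} ∩ {χ | χ (v x) = true})ᶜ := by
    ext χ
    simp only [Set.mem_setOf_eq, Set.mem_iUnion, Set.mem_iInter, Set.mem_compl_iff,
      Set.mem_inter_iff, not_and]
    constructor
    · intro hfin
      refine ⟨hfin.toFinset, fun x hx hu hv => hx ?_⟩
      simp [Set.Finite.mem_toFinset, hu, hv]
    · rintro ⟨F, hF⟩
      refine F.finite_toSet.subset fun x hx => ?_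
      by_contra hxF
      exact hF x hxF hx.1 hx.2
  rw [key]
  exact isFsigma_iUnion fun F =>
    (isClosed_iInter fun x => isClosed_iInter fun _ =>
      ((isOpen_evalTrue (u x)).inter (isOpen_evalTrue (v x))).isClosed_compl).isFsigmaSet

omit [Countable G] in
lemma smul_charSet (g : G) (χ : G → Bool) :
    g • {x : G | χ x = true} = {x : G | χ (g⁻¹ * x) = true} := by
  ext x
  simp [Set.mem_smul_set_iff_inv_smul_mem, smul_eq_mul]

end BoolAux

/-- For a countably infinite group `G`, identifying `P_G` with `{0,1}^G = G → Bool`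
(with the product topology, `Bool` discrete), the families of thin, of weakly P-small
and of near P-small subsets of `G` are `F_σδ`. -/
theorem thin_weaklyPSmall_nearPSmall_isFsigmaDelta
    {G : Type*} [Group G] [Countable G] [Infinite G] :
    IsFsigmaDeltaSet {χ : G → Bool | IsThinSub {g : G | χ g = true}} ∧
    IsFsigmaDeltaSet {χ : G → Bool | IsWeaklyPSmallSub {g : G | χ g = true}} ∧
    IsFsigmaDeltaSet {χ : G → Bool | IsNearPSmallSub {g : G | χ g = true}} := by
  have hinter : ∀ (a b : G) (χ : G → Bool),
      a • {x : G | χ x = true} ∩ b • {x : G | χ x = true}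
        = {x : G | χ (a⁻¹ * x) = true ∧ χ (b⁻¹ * x) = true} := by
    intro a b χ
    rw [smul_charSet, smul_charSet]
    ext x
    simp
  refine ⟨?_, ?_, ?_⟩
  · -- thin
    have heq : {χ : G → Bool | IsThinSub {g : G | χ g = true}}
        = ⋂ p : {g : G // g ≠ 1},
            {χ : G → Bool | ({x : G | χ ((p : G)⁻¹ * x) = true ∧ χ x = true}).Finite} := by
      ext χ
      simp only [Set.mem_setOf_eq, Set.mem_iInter, IsThinSub, Subtype.forall]
      refine forall₂_congr fun g hg => ?_
      have : g • {x : G | χ x = true} ∩ {x : G | χ x = true}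
          = {x : G | χ (g⁻¹ * x) = true ∧ χ x = true} := by
        rw [smul_charSet]
        ext x
        simp
      rw [this]
    rw [heq]
    exact isFsigmaDelta_iInter fun p => isFsigma_finSet (fun x => (p : G)⁻¹ * x) id
  · -- weakly P-small
    have heq : {χ : G → Bool | IsWeaklyPSmallSub {g : G | χ g = true}}
        = ⋂ n : ℕ, ⋃ g : Fin (n + 1) → G,
            ⋂ p : {p : Fin (n + 1) × Fin (n + 1) // p.1 ≠ p.2},
              {χ : G → Bool |
                ∀ x : G, ¬(χ ((g p.1.1)⁻¹ * x) = true
                  ∧ χ ((g p.1.2)⁻¹ * x) = true)} := by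
      ext χ
      simp only [Set.mem_setOf_eq, Set.mem_iInter, Set.mem_iUnion, IsWeaklyPSmallSub,
        Subtype.forall, Prod.forall]
      refine forall_congr' fun n => exists_congr fun g => ?_
      constructor
      · intro H i j hij x hx
        exact Set.disjoint_left.1 (H i j hij)
          (by rw [smul_charSet]; exact hx.1) (by rw [smul_charSet]; exact hx.2)
      · intro H i j hij
        rw [Set.disjoint_iff_inter_eq_empty, hinter, Set.eq_empty_iff_forall_notMem]
        exact fun x hx => H i j hij x hx
    rw [heq]
    refine isFsigmaDelta_iInter fun n => isFsigma_iUnion fun g => ?_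
    exact (isClosed_iInter fun (p : {p : Fin (n + 1) × Fin (n + 1) // p.1 ≠ p.2}) =>
      isClosed_disjSet (fun x => (g p.1.1)⁻¹ * x)
        (fun x => (g p.1.2)⁻¹ * x)).isFsigmaSet
  · -- near P-small
    have heq : {χ : G → Bool | IsNearPSmallSub {g : G | χ g = true}}
        = ⋂ n : ℕ, ⋃ g : Fin (n + 1) → G,
            ⋂ p : {p : Fin (n + 1) × Fin (n + 1) // p.1 ≠ p.2},
              {χ : G → Bool |
                ({x : G | χ ((g p.1.1)⁻¹ * x) = true
                  ∧ χ ((g p.1.2)⁻¹ * x) = true}).Finite} := by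
      ext χ
      simp only [Set.mem_setOf_eq, Set.mem_iInter, Set.mem_iUnion, IsNearPSmallSub,
        Subtype.forall, Prod.forall]
      refine forall_congr' fun n => exists_congr fun g => ?_
      constructor
      · intro H i j hij
        rw [← hinter]
        exact H i j hij
      · intro H i j hij
        rw [hinter]
        exact H i j hij
    rw [heq]
    refine isFsigmaDelta_iInter fun n => isFsigma_iUnion fun g => ?_
    exact isFsigma_iInter_of_finite fun (p : {p : Fin (n + 1) × Fin (n + 1) // p.1 ≠ p.2}) =>
      isFsigma_finSet (fun x => (g p.1.1)⁻¹ * x)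
        (fun x => (g p.1.2)⁻¹ * x)
end

section
/- For a countably infinite group G, the ideal of all sparse subsets of G is a coanalytic subset of the space P_G. -/
open Pointwise

/-- A subset `A` of a group `G` is sparse if every infinite `X ⊆ G` has a finite
subset `F` such that `⋂ g ∈ F, g • A` is finite. -/
def IsSparseSub {G : Type*} [Group G] (A : Set G) : Prop :=
  ∀ X : Set G, X.Infinite →
    ∃ F : Finset G, (F : Set G) ⊆ X ∧ (⋂ g ∈ F, (g : G) • A).Finite

/-- If each section `{x | p x a}` is measurable and `α` is countable, then the set of
`x` whose slice `{a | p x a}` is finite is measurable. -/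
lemma measurableSet_slice_finite {α X : Type*} [Countable α] [MeasurableSpace X]
    (p : X → α → Prop) (h : ∀ a, MeasurableSet {x | p x a}) :
    MeasurableSet {x | {a | p x a}.Finite} := by
  have heq : {x | {a | p x a}.Finite} = ⋃ F : Finset α, ⋂ a, {x | p x a → a ∈ F} := by
    ext x
    simp only [Set.mem_setOf_eq, Set.mem_iUnion, Set.mem_iInter]
    constructor
    · intro hf
      exact ⟨hf.toFinset, fun a ha => hf.mem_toFinset.2 ha⟩
    · rintro ⟨F, hF⟩
      exact Set.Finite.subset F.finite_toSet fun a ha => hF a ha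
  rw [heq]
  refine MeasurableSet.iUnion fun F => MeasurableSet.iInter fun a => ?_
  by_cases ha : a ∈ F
  · have : {x | p x a → a ∈ F} = Set.univ := by ext x; simp [ha]
    rw [this]; exact MeasurableSet.univ
  · have : {x | p x a → a ∈ F} = {x | p x a}ᶜ := by ext x; simp [ha]
    rw [this]; exact (h a).compl

/-- For a countably infinite group `G`, identifying `P_G` with the Polish space
`{0,1}^G = G → Bool` (product topology, `Bool` discrete), the ideal of sparse
subsets of `G` is coanalytic, i.e. its complement is analytic. -/
theorem sparse_coanalytic {G : Type*} [Group G] [Countable G] [Infinite G] :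
    MeasureTheory.AnalyticSet {χ : G → Bool | IsSparseSub {g : G | χ g = true}}ᶜ := by
  classical
  -- The Borel witness set in the product space
  set S : Set ((G → Bool) × (G → Bool)) :=
    {q | (¬ {g : G | q.1 g = true}.Finite) ∧
      ∀ F : Finset G, (∀ g ∈ F, q.1 g = true) →
        ¬ {x : G | ∀ g ∈ F, q.2 (g⁻¹ * x) = true}.Finite} with hSdef
  have hSm : MeasurableSet S := by
    refine MeasurableSet.inter ?_ ?_
    · refine (measurableSet_slice_finite (X := (G → Bool) × (G → Bool))
        (fun q (g : G) => q.1 g = true) (fun g => ?_)).compl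
      have hm : Measurable fun q : (G → Bool) × (G → Bool) => q.1 g :=
        (measurable_pi_apply g).comp measurable_fst
      exact hm (measurableSet_singleton true)
    · have : {q : (G → Bool) × (G → Bool) | ∀ F : Finset G, (∀ g ∈ F, q.1 g = true) →
          ¬ {x : G | ∀ g ∈ F, q.2 (g⁻¹ * x) = true}.Finite} =
          ⋂ F : Finset G,
            ({q : (G → Bool) × (G → Bool) | ∀ g ∈ F, q.1 g = true}ᶜ ∪
             {q : (G → Bool) × (G → Bool) |
                {x : G | ∀ g ∈ F, q.2 (g⁻¹ * x) = true}.Finite}ᶜ) := by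
        ext q
        simp only [Set.mem_setOf_eq, Set.mem_iInter, Set.mem_union, Set.mem_compl_iff]
        constructor
        · intro h F
          by_cases hF : ∀ g ∈ F, q.1 g = true
          · exact Or.inr (h F hF)
          · exact Or.inl hF
        · intro h F hF
          rcases h F with h' | h'
          · exact absurd hF h'
          · exact h'
      rw [show (fun q : (G → Bool) × (G → Bool) => ∀ F : Finset G, (∀ g ∈ F, q.1 g = true) →
          ¬ {x : G | ∀ g ∈ F, q.2 (g⁻¹ * x) = true}.Finite) =
        {q : (G → Bool) × (G → Bool) | ∀ F : Finset G, (∀ g ∈ F, q.1 g = true) →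
          ¬ {x : G | ∀ g ∈ F, q.2 (g⁻¹ * x) = true}.Finite} from rfl, this]
      refine MeasurableSet.iInter fun F => MeasurableSet.union ?_ ?_
      · have : {q : (G → Bool) × (G → Bool) | ∀ g ∈ F, q.1 g = true} =
            ⋂ g ∈ F, {q : (G → Bool) × (G → Bool) | q.1 g = true} := by
          ext q; simp
        rw [this]
        refine (MeasurableSet.biInter F.countable_toSet fun g _ => ?_).compl
        have hm : Measurable fun q : (G → Bool) × (G → Bool) => q.1 g :=
          (measurable_pi_apply g).comp measurable_fst
        exact hm (measurableSet_singleton true)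
      · exact (measurableSet_slice_finite (X := (G → Bool) × (G → Bool))
          (fun q (x : G) => ∀ g ∈ F, q.2 (g⁻¹ * x) = true)
          (fun x => by
            have : {q : (G → Bool) × (G → Bool) | ∀ g ∈ F, q.2 (g⁻¹ * x) = true} =
                ⋂ g ∈ F, {q : (G → Bool) × (G → Bool) | q.2 (g⁻¹ * x) = true} := by
              ext q; simp
            rw [this]
            refine MeasurableSet.biInter F.countable_toSet fun g _ => ?_
            have hm : Measurable fun q : (G → Bool) × (G → Bool) => q.2 (g⁻¹ * x) :=
              (measurable_pi_apply (g⁻¹ * x)).comp measurable_snd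
            exact hm (measurableSet_singleton true))).compl
  -- The complement is the projection of S
  have hproj : {χ : G → Bool | IsSparseSub {g : G | χ g = true}}ᶜ = Prod.snd '' S := by
    ext χ
    simp only [Set.mem_compl_iff, Set.mem_setOf_eq, Set.mem_image, hSdef]
    constructor
    · intro h
      rw [IsSparseSub] at h
      push_neg at h
      obtain ⟨X, hX, hF⟩ := h
      refine ⟨(fun g => decide (g ∈ X), χ), ⟨?_, ?_⟩, rfl⟩
      · intro hfin
        apply hX
        refine hfin.subset fun g hg => ?_
        simpa using hg
      · intro F hFX hfin
        have hsub : (F : Set G) ⊆ X := fun g hg => by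
          have := hFX g hg
          simpa using this
        refine hF F hsub ?_
        refine hfin.subset fun x hx => ?_
        simp only [Set.mem_iInter] at hx
        simp only [Set.mem_setOf_eq]
        intro g hg
        have := hx g hg
        rw [Set.mem_smul_set_iff_inv_smul_mem] at this
        simpa [smul_eq_mul] using this
    · rintro ⟨⟨ξ, χ'⟩, ⟨hinf, hall⟩, rfl⟩
      intro hsparse
      obtain ⟨F, hFsub, hFfin⟩ := hsparse {g | ξ g = true} hinf
      refine hall F (fun g hg => hFsub hg) ?_
      refine hFfin.subset fun x hx => ?_
      simp only [Set.mem_setOf_eq] at hx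
      simp only [Set.mem_iInter]
      intro g hg
      rw [Set.mem_smul_set_iff_inv_smul_mem]
      simpa [smul_eq_mul] using hx g hg
  rw [hproj]
  exact hSm.analyticSet_image measurable_snd
end

section
/- For a subset A of an infinite group G and n a positive natural number: (i) A is n-thin if and only if every Y in W(A) has at most n elements; (ii) A is sparse if and only if every Y in W(A) is finite. -/
open Pointwise

/-- The characteristic function of a subset, identifying `P_G` with `G → Bool`. -/
noncomputable def chiFun {G : Type*} (A : Set G) : G → Bool :=
  fun x => @decide (x ∈ A) (Classical.propDecidable _)

/-- The orbit of `A` in `P_G = G → Bool` under the right action `A ↦ Ag`. -/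
noncomputable def orbitOf {G : Type*} [Group G] (A : Set G) : Set (G → Bool) :=
  {χ | ∃ g : G, χ = chiFun ((fun a => a * g) '' A)}

/-- `W(A)`: the set of all `Y` in the closure of the orbit of `A` such that for
every open neighbourhood `U` of `Y` the set `{g : Ag ∈ U}` is infinite. -/
noncomputable def WSet {G : Type*} [Group G] (A : Set G) : Set (G → Bool) :=
  {Y | Y ∈ closure (orbitOf A) ∧
    ∀ U : Set (G → Bool), IsOpen U → Y ∈ U →
      {g : G | chiFun ((fun a => a * g) '' A) ∈ U}.Infinite}

/-- A subset `A` of a group `G` is `n`-thin if for any pairwise distinct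
`g 0, …, g n` the set `g 0 • A ∩ … ∩ g n • A` is finite. -/
def IsNThinSub {G : Type*} [Group G] (n : ℕ) (A : Set G) : Prop :=
  ∀ g : Fin (n + 1) → G, Function.Injective g → (⋂ i, g i • A).Finite

namespace NTS

variable {G : Type*} [Group G]

noncomputable def phi (A : Set G) (g : G) : G → Bool := chiFun ((fun a => a * g) '' A)

lemma phi_eq_true {A : Set G} {g x : G} : phi A g x = true ↔ x * g⁻¹ ∈ A := by
  simp only [phi, chiFun, decide_eq_true_eq, Set.mem_image]
  constructor
  · rintro ⟨a, ha, rfl⟩; simpa using ha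
  · intro h; exact ⟨x * g⁻¹, h, by group⟩

lemma infinite_of_mem {l : Filter G} [l.NeBot] (hl : l ≤ Filter.cofinite) {s : Set G}
    (hs : s ∈ l) : s.Infinite := by
  intro hfin
  have h1 : sᶜ ∈ l := hl hfin.compl_mem_cofinite
  have h2 : (s ∩ sᶜ) ∈ l := Filter.inter_mem hs h1
  simp only [Set.inter_compl_self] at h2
  exact Filter.empty_notMem l h2

lemma isOpen_eval (x : G) (b : Bool) : IsOpen {Z : G → Bool | Z x = b} := by
  have : {Z : G → Bool | Z x = b} = (fun Z : G → Bool => Z x) ⁻¹' {b} := rfl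
  rw [this]
  exact (isOpen_discrete {b}).preimage (continuous_apply x)

lemma isClosed_eval (x : G) (b : Bool) : IsClosed {Z : G → Bool | Z x = b} := by
  have : {Z : G → Bool | Z x = b} = (fun Z : G → Bool => Z x) ⁻¹' {b} := rfl
  rw [this]
  exact (isClosed_discrete {b}).preimage (continuous_apply x)

lemma key (A : Set G) (l : Filter G) [l.NeBot] (hl : l ≤ Filter.cofinite) :
    ∃ Y ∈ WSet A, ∀ s ∈ l, Y ∈ closure (phi A '' s) := by
  set 𝒰 := Ultrafilter.of l with h𝒰
  have hle : (𝒰 : Filter G) ≤ l := Ultrafilter.of_le l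
  obtain ⟨Y, -, hY⟩ := (isCompact_univ (X := G → Bool)).ultrafilter_le_nhds
      (𝒰.map (phi A)) (by simp)
  have hU : ∀ U : Set (G → Bool), IsOpen U → Y ∈ U → (phi A ⁻¹' U) ∈ 𝒰 := by
    intro U hUo hYU
    exact Filter.mem_map.mp (hY (hUo.mem_nhds hYU))
  have hcl : ∀ s ∈ l, Y ∈ closure (phi A '' s) := by
    intro s hs
    rw [mem_closure_iff]
    intro U hUo hYU
    obtain ⟨g, hg1, hg2⟩ := 𝒰.nonempty_of_mem (Filter.inter_mem (hU U hUo hYU) (hle hs))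
    exact ⟨phi A g, hg1, ⟨g, hg2, rfl⟩⟩
  refine ⟨Y, ⟨?_, ?_⟩, hcl⟩
  · have horb : orbitOf A = Set.range (phi A) := by
      ext χ; simp [orbitOf, phi, Set.range, eq_comm]
    have := hcl Set.univ Filter.univ_mem
    rwa [Set.image_univ, ← horb] at this
  · intro U hUo hYU
    have : (phi A ⁻¹' U) ∈ 𝒰 := hU U hUo hYU
    exact infinite_of_mem (hle.trans hl) this

end NTS

namespace NTS2
open NTS

variable {G : Type*} [Group G]

lemma mem_smul' {A : Set G} {g x : G} : x ∈ g • A ↔ g⁻¹ * x ∈ A :=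
  Set.mem_smul_set_iff_inv_smul_mem

lemma thin_forward {A : Set G} {n : ℕ} (hthin : IsNThinSub n A) :
    ∀ Y ∈ WSet A, {x : G | Y x = true}.encard ≤ (n : ℕ∞) := by
  intro Y hY
  by_contra hcard
  push_neg at hcard
  have h1 : ((n + 1 : ℕ) : ℕ∞) ≤ {x : G | Y x = true}.encard := by
    push_cast; exact Order.add_one_le_of_lt hcard
  obtain ⟨t, hts, htc⟩ := Set.exists_subset_encard_eq h1
  have htfin : t.Finite := Set.finite_of_encard_eq_coe htc
  have hcardn : htfin.toFinset.card = n + 1 := by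
    rw [htfin.encard_eq_coe_toFinset_card] at htc
    exact_mod_cast htc
  let e : Fin (n + 1) ≃ htfin.toFinset := (Finset.equivFinOfCardEq hcardn).symm
  set x : Fin (n + 1) → G := fun i => (e i : G) with hx
  have hxinj : Function.Injective x := by
    intro i j hij
    exact e.injective (Subtype.ext hij)
  have hxt : ∀ i, x i ∈ t := fun i =>
    htfin.mem_toFinset.mp (e i).2
  set U : Set (G → Bool) := ⋂ i, {Z : G → Bool | Z (x i) = true} with hUdef
  have hUo : IsOpen U := isOpen_iInter_of_finite fun i => isOpen_eval (x i) true
  have hYU : Y ∈ U := Set.mem_iInter.mpr fun i => hts (hxt i)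
  have hT : {g : G | chiFun ((fun a => a * g) '' A) ∈ U}.Infinite := hY.2 U hUo hYU
  have hsub : (Inv.inv '' {g : G | chiFun ((fun a => a * g) '' A) ∈ U}) ⊆
      ⋂ i, (x i)⁻¹ • A := by
    rintro _ ⟨g, hg, rfl⟩
    refine Set.mem_iInter.mpr fun i => ?_
    have : phi A g (x i) = true := Set.mem_iInter.mp hg i
    rw [phi_eq_true] at this
    rw [mem_smul']
    simpa using this
  have hinf : (⋂ i, (x i)⁻¹ • A).Infinite :=
    (hT.image (Set.injOn_of_injective inv_injective)).mono hsub
  exact hinf (hthin (fun i => (x i)⁻¹) (fun i j h => hxinj (inv_injective h)))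

lemma thin_backward {A : Set G} {n : ℕ}
    (hcard : ∀ Y ∈ WSet A, {x : G | Y x = true}.encard ≤ (n : ℕ∞)) :
    IsNThinSub n A := by
  intro g hg
  by_contra hinf
  have hS : ((⋂ i, g i • A)⁻¹).Infinite := by
    have : (⋂ i, g i • A).Infinite := hinf
    have h2 := this.image (Set.injOn_of_injective (inv_injective (G := G)))
    refine h2.mono ?_
    rintro _ ⟨a, ha, rfl⟩
    rw [Set.mem_inv, inv_inv]
    exact ha
  set l : Filter G := Filter.cofinite ⊓ Filter.principal ((⋂ i, g i • A)⁻¹) with hl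
  haveI : l.NeBot := Filter.cofinite_inf_principal_neBot_iff.mpr hS
  obtain ⟨Y, hYW, hcl⟩ := key A l inf_le_left
  have hmem : ((⋂ i, g i • A)⁻¹) ∈ l := Filter.mem_inf_of_right (Filter.mem_principal_self _)
  have hYc := hcl _ hmem
  have hC : Y ∈ ⋂ i, {Z : G → Bool | Z ((g i)⁻¹) = true} := by
    refine closure_minimal ?_ (isClosed_iInter fun i => isClosed_eval _ true) hYc
    rintro _ ⟨h, hh, rfl⟩
    refine Set.mem_iInter.mpr fun i => ?_
    have hh' : h⁻¹ ∈ g i • A := Set.mem_iInter.mp (Set.mem_inv.mp hh) i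
    rw [mem_smul'] at hh'
    show phi A h ((g i)⁻¹) = true
    rw [phi_eq_true]
    exact hh'
  have hrange : Set.range (fun i => (g i)⁻¹) ⊆ {x : G | Y x = true} := by
    rintro _ ⟨i, rfl⟩
    exact Set.mem_iInter.mp hC i
  have hen : (Set.range fun i : Fin (n+1) => (g i)⁻¹).encard = (n + 1 : ℕ) := by
    rw [← Set.image_univ,
      Function.Injective.encard_image (fun i j h => hg (inv_injective h)), Set.encard_univ]
    simp [ENat.card_eq_coe_fintype_card]
  have := (Set.encard_le_encard hrange).trans (hcard Y hYW)
  rw [hen] at this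
  have : (n + 1 : ℕ) ≤ n := by exact_mod_cast this
  omega

end NTS2

namespace NTS3
open NTS NTS2

variable {G : Type*} [Group G]

lemma sparse_forward [Infinite G] {A : Set G} (hsp : IsSparseSub A) :
    ∀ Y ∈ WSet A, {x : G | Y x = true}.Finite := by
  intro Y hYW
  by_contra hinf
  have hX : ({x : G | Y x = true}⁻¹).Infinite := by
    have h1 : Set.Infinite {x : G | Y x = true} := hinf
    refine (h1.image (Set.injOn_of_injective (inv_injective (G := G)))).mono ?_
    rintro _ ⟨a, ha, rfl⟩
    rw [Set.mem_inv, inv_inv]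
    exact ha
  obtain ⟨F, hFX, hFfin⟩ := hsp _ hX
  set U : Set (G → Bool) := ⋂ g ∈ F, {Z : G → Bool | Z g⁻¹ = true} with hUdef
  have hUo : IsOpen U := isOpen_biInter_finset fun g _ => isOpen_eval g⁻¹ true
  have hYU : Y ∈ U := by
    refine Set.mem_iInter₂.mpr fun g hgF => ?_
    have : g ∈ {x : G | Y x = true}⁻¹ := hFX hgF
    exact Set.mem_inv.mp this
  have hT : {g : G | chiFun ((fun a => a * g) '' A) ∈ U}.Infinite := hYW.2 U hUo hYU
  have hsub : (Inv.inv '' {g : G | chiFun ((fun a => a * g) '' A) ∈ U}) ⊆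
      ⋂ g ∈ F, g • A := by
    rintro _ ⟨h, hh, rfl⟩
    refine Set.mem_iInter₂.mpr fun g hgF => ?_
    have h1 : phi A h g⁻¹ = true := Set.mem_iInter₂.mp hh g hgF
    rw [phi_eq_true] at h1
    rw [mem_smul']
    exact h1
  exact ((hT.image (Set.injOn_of_injective inv_injective)).mono hsub) hFfin

lemma sparse_backward [Infinite G] {A : Set G}
    (hfin : ∀ Y ∈ WSet A, {x : G | Y x = true}.Finite) : IsSparseSub A := by
  classical
  intro X hX
  by_contra hno
  push_neg at hno
  set S : {F : Finset G // (F : Set G) ⊆ X} → Set G :=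
    fun F => (⋂ g ∈ F.1, g • A)⁻¹ with hSdef
  have hSinf : ∀ F, (S F).Infinite := by
    intro F
    have h1 : (⋂ g ∈ F.1, g • A).Infinite := fun h => hno F.1 F.2 h
    refine (h1.image (Set.injOn_of_injective (inv_injective (G := G)))).mono ?_
    rintro _ ⟨a, ha, rfl⟩
    rw [Set.mem_inv, inv_inv]
    exact ha
  set f : {F : Finset G // (F : Set G) ⊆ X} → Filter G :=
    fun F => Filter.cofinite ⊓ Filter.principal (S F) with hfdef
  have hne : ∀ F, (f F).NeBot := fun F =>
    Filter.cofinite_inf_principal_neBot_iff.mpr (hSinf F)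
  have hdir : Directed (· ≥ ·) f := by
    intro F1 F2
    refine ⟨⟨F1.1 ∪ F2.1, by
      rw [Finset.coe_union]; exact Set.union_subset F1.2 F2.2⟩, ?_, ?_⟩ <;>
    · refine inf_le_inf le_rfl (Filter.principal_mono.mpr ?_)
      intro a ha
      rw [Set.mem_inv] at ha ⊢
      refine Set.mem_iInter₂.mpr fun g hg => Set.mem_iInter₂.mp ha g ?_
      simp only [Finset.mem_union]
      tauto
  haveI : Nonempty {F : Finset G // (F : Set G) ⊆ X} := ⟨⟨∅, by simp⟩⟩
  set l : Filter G := ⨅ F, f F with hldef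
  haveI hlne : l.NeBot := Filter.iInf_neBot_of_directed' hdir hne
  have hl : l ≤ Filter.cofinite := (iInf_le f ⟨∅, by simp⟩).trans inf_le_left
  obtain ⟨Y, hYW, hcl⟩ := key A l hl
  have hg : ∀ g ∈ X, Y g⁻¹ = true := by
    intro g hgX
    have hFg : (({g} : Finset G) : Set G) ⊆ X := by simpa using hgX
    have hmem : S ⟨{g}, hFg⟩ ∈ l :=
      (iInf_le f ⟨{g}, hFg⟩) (Filter.mem_inf_of_right (Filter.mem_principal_self _))
    have hYc := hcl _ hmem
    have : Y ∈ {Z : G → Bool | Z g⁻¹ = true} := by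
      refine closure_minimal ?_ (isClosed_eval g⁻¹ true) hYc
      rintro _ ⟨h, hh, rfl⟩
      have hh' : h⁻¹ ∈ g • A := by
        have := Set.mem_inv.mp hh
        simpa using this
      rw [mem_smul'] at hh'
      show phi A h g⁻¹ = true
      rw [phi_eq_true]
      exact hh'
    exact this
  have hXsub : X⁻¹ ⊆ {x : G | Y x = true} := by
    intro a ha
    have := hg a⁻¹ (Set.mem_inv.mp ha)
    simpa using this
  have hXinv : (X⁻¹ : Set G).Infinite := by
    refine (hX.image (Set.injOn_of_injective (inv_injective (G := G)))).mono ?_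
    rintro _ ⟨a, ha, rfl⟩
    rw [Set.mem_inv, inv_inv]
    exact ha
  exact (hXinv.mono hXsub) (hfin Y hYW)

end NTS3


/-- For a subset `A` of an infinite group `G` and `0 < n`:
(i) `A` is `n`-thin iff every `Y ∈ W(A)` has at most `n` elements;
(ii) `A` is sparse iff every `Y ∈ W(A)` is finite. -/
theorem nthin_and_sparse_via_WSet
    {G : Type*} [Group G] [Infinite G] (A : Set G) (n : ℕ) (hn : 0 < n) :
    (IsNThinSub n A ↔ ∀ Y ∈ WSet A, {x : G | Y x = true}.encard ≤ (n : ℕ∞)) ∧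
    (IsSparseSub A ↔ ∀ Y ∈ WSet A, {x : G | Y x = true}.Finite) := by
  exact ⟨⟨NTS2.thin_forward, NTS2.thin_backward⟩,
    ⟨NTS3.sparse_forward, NTS3.sparse_backward⟩⟩
end

section
/- For a subset A of an infinite group G and n a positive natural number, A is not n-thin if and only if there exist a subset F of G with exactly n+1 elements and an injective sequence (x_m)_{m in omega} in G such that F x_m ⊆ A for each m in omega. -/
/-! An element `x` lies in `g 0 • A ∩ … ∩ g n • A` exactly when `F * {x} ⊆ A` for
`F = {(g 0)⁻¹, …, (g n)⁻¹}`, and `g ↦ g⁻¹` preserves injectivity. So an infinite such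
intersection is the same as infinitely many distinct right translates of an `(n + 1)`-element
set `F` inside `A`. -/

open Pointwise

theorem Set.infinite_iff_exists_injective_nat {α : Type*} {s : Set α} :
    s.Infinite ↔ ∃ x : ℕ → α, Function.Injective x ∧ ∀ m, x m ∈ s :=
  ⟨fun hs => ⟨fun m => hs.natEmbedding s m,
      Subtype.val_injective.comp (hs.natEmbedding s).injective, fun m => (hs.natEmbedding s m).2⟩,
    fun ⟨_, hx, hmem⟩ => Set.infinite_of_injective_forall_mem hx hmem⟩

theorem Finset.exists_card_eq_iff_exists_injective_fin {α : Type*} {n : ℕ} {P : Set α → Prop} :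
    (∃ F : Finset α, F.card = n ∧ P F) ↔
      ∃ g : Fin n → α, Function.Injective g ∧ P (Set.range g) := by
  classical
  constructor
  · rintro ⟨F, hF, hP⟩
    let e := F.equivFinOfCardEq hF
    refine ⟨Subtype.val ∘ e.symm, Subtype.val_injective.comp e.symm.injective, ?_⟩
    rwa [e.symm.surjective.range_comp, Subtype.range_coe]
  · rintro ⟨g, hg, hP⟩
    refine ⟨Finset.univ.image g, by rw [Finset.card_image_of_injective _ hg, Finset.card_fin], ?_⟩
    rwa [Finset.coe_image, Finset.coe_univ, Set.image_univ]

section Group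

variable {G : Type*} [Group G]

theorem range_mul_singleton_subset_iff_mem_iInter {ι : Type*} {g : ι → G} {A : Set G} {x : G} :
    Set.range g * {x} ⊆ A ↔ x ∈ ⋂ i, (g i)⁻¹ • A := by
  simp only [Set.mul_singleton, Set.image_subset_iff, Set.range_subset_iff, Set.mem_preimage,
    Set.mem_iInter, Set.mem_inv_smul_set_iff, smul_eq_mul]

theorem not_isNThinSub_iff {n : ℕ} {A : Set G} :
    ¬ IsNThinSub n A ↔
      ∃ g : Fin (n + 1) → G, Function.Injective g ∧ (⋂ i, (g i)⁻¹ • A).Infinite := by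
  simp only [IsNThinSub, not_forall, exists_prop, ← Set.not_infinite, not_not]
  constructor
  · rintro ⟨g, hg, hinf⟩
    exact ⟨fun i => (g i)⁻¹, inv_injective.comp hg, by simpa only [inv_inv] using hinf⟩
  · rintro ⟨g, hg, hinf⟩
    exact ⟨fun i => (g i)⁻¹, inv_injective.comp hg, hinf⟩

end Group

theorem not_nthin_iff_finset_translates_general
    {G : Type*} [Group G] (A : Set G) (n : ℕ) :
    ¬ IsNThinSub n A ↔
      ∃ F : Finset G, F.card = n + 1 ∧
        ∃ x : ℕ → G, Function.Injective x ∧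
          ∀ m : ℕ, (F : Set G) * ({x m} : Set G) ⊆ A := by
  rw [not_isNThinSub_iff, Finset.exists_card_eq_iff_exists_injective_fin
    (P := fun S => ∃ x : ℕ → G, Function.Injective x ∧ ∀ m, S * {x m} ⊆ A)]
  simp only [Set.infinite_iff_exists_injective_nat, range_mul_singleton_subset_iff_mem_iInter]

/-- For a subset `A` of an infinite group `G` and `0 < n`, `A` is not `n`-thin iff
there exist a set `F ⊆ G` with exactly `n + 1` elements and an injective sequence
`(x m)` in `G` with `F * x m ⊆ A` for all `m`. -/
theorem not_nthin_iff_finset_translates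
    {G : Type*} [Group G] [Infinite G] (A : Set G) (n : ℕ) (hn : 0 < n) :
    ¬ IsNThinSub n A ↔
      ∃ F : Finset G, F.card = n + 1 ∧
        ∃ x : ℕ → G, Function.Injective x ∧
          ∀ m : ℕ, (F : Set G) * ({x m} : Set G) ⊆ A :=
  not_nthin_iff_finset_translates_general A n
end

section
/- For a subset A of an infinite group G, A is not sparse if and only if there exist two injective sequences (x_n)_{n in omega} and (y_n)_{n in omega} in G such that x_n y_m ∈ A whenever 0 ≤ n ≤ m < omega. -/
open Pointwise

/-- For a subset `A` of an infinite group `G`, `A` is not sparse iff there are two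
injective sequences `(x n)`, `(y n)` in `G` such that `x n * y m ∈ A` whenever `n ≤ m`. -/
theorem not_sparse_iff_two_sequences
    {G : Type*} [Group G] [Infinite G] (A : Set G) :
    ¬ IsSparseSub A ↔
      ∃ x y : ℕ → G, Function.Injective x ∧ Function.Injective y ∧
        ∀ n m : ℕ, n ≤ m → x n * y m ∈ A := by
  classical
  constructor
  · intro hns
    rw [IsSparseSub] at hns
    push_neg at hns
    obtain ⟨X, hXinf, hX⟩ := hns
    -- an injective sequence in X
    set e := hXinf.natEmbedding
    set g : ℕ → G := fun n => (e n : G) with hg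
    have hginj : Function.Injective g := by
      intro a b hab
      exact e.injective (Subtype.ext hab)
    have hgX : ∀ n, g n ∈ X := fun n => (e n).2
    -- the intersections are infinite
    have hT : ∀ m : ℕ, (⋂ n ∈ Finset.range (m+1), g n • A).Infinite := by
      intro m
      have h1 := hX ((Finset.range (m+1)).image g) (by
        intro a ha
        simp only [Finset.coe_image, Set.mem_image, Finset.mem_coe] at ha
        obtain ⟨n, _, rfl⟩ := ha
        exact hgX n)
      have heq : (⋂ n ∈ Finset.range (m+1), g n • A)
          = ⋂ g' ∈ (Finset.range (m+1)).image g, g' • A := by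
        ext a
        simp only [Set.mem_iInter, Finset.mem_image, Finset.mem_range]
        constructor
        · rintro h b ⟨n, hn, rfl⟩; exact h n hn
        · intro h n hn; exact h (g n) ⟨n, hn, rfl⟩
      rw [heq]
      exact h1
    choose pick hpick1 hpick2 using fun (m : ℕ) (s : Finset G) =>
      (hT m).exists_notMem_finset s
    -- build the sequence y with its finset of used values
    let f : ℕ → G × Finset G := fun m =>
      Nat.rec (⟨pick 0 ∅, {pick 0 ∅}⟩)
        (fun k ih => ⟨pick (k+1) ih.2, insert (pick (k+1) ih.2) ih.2⟩) m
    set y : ℕ → G := fun m => (f m).1 with hy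
    have hyT : ∀ m, y m ∈ ⋂ n ∈ Finset.range (m+1), g n • A := by
      intro m
      cases m with
      | zero => exact hpick1 0 ∅
      | succ k => exact hpick1 (k+1) (f k).2
    have hmem : ∀ m, y m ∈ (f m).2 := by
      intro m
      cases m with
      | zero => simp [f, hy]
      | succ k => simp [f, hy]
    have hsub : ∀ m, (f m).2 ⊆ (f (m+1)).2 := by
      intro m a ha
      simp only [f]
      exact Finset.mem_insert_of_mem ha
    have hmono : ∀ k m, k ≤ m → y k ∈ (f m).2 := by
      intro k m hkm
      induction m with
      | zero => simpa [Nat.le_zero.mp hkm] using hmem 0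
      | succ j ih =>
        rcases Nat.lt_or_ge k (j+1) with h | h
        · exact hsub j (ih (Nat.lt_succ_iff.mp h))
        · have : k = j + 1 := le_antisymm hkm h
          subst this; exact hmem (j+1)
    have hnot : ∀ m, y (m+1) ∉ (f m).2 := fun m => hpick2 (m+1) (f m).2
    have hyinj : Function.Injective y := by
      have key : ∀ a b : ℕ, a < b → y a ≠ y b := by
        intro a b hab h
        obtain ⟨c, rfl⟩ := Nat.exists_eq_add_of_lt hab
        have h1 : y a ∈ (f (a + c)).2 := hmono a (a + c) (Nat.le_add_right a c)
        have h2 := hnot (a + c)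
        rw [← h] at h2
        exact h2 h1
      intro a b hab
      by_contra h
      rcases Nat.lt_or_ge a b with h' | h'
      · exact key a b h' hab
      · exact key b a (lt_of_le_of_ne h' (Ne.symm h)) hab.symm
    refine ⟨fun n => (g n)⁻¹, y, fun a b hab => hginj (inv_injective hab), hyinj, ?_⟩
    intro n m hnm
    have := hyT m
    rw [Set.mem_iInter₂] at this
    have h1 := this n (Finset.mem_range.mpr (Nat.lt_succ_of_le hnm))
    rw [Set.mem_smul_set_iff_inv_smul_mem] at h1
    simpa [smul_eq_mul] using h1
  · rintro ⟨x, y, hxinj, hyinj, hA⟩ hs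
    obtain ⟨F, hFX, hFfin⟩ := hs (Set.range fun n => (x n)⁻¹)
      (Set.infinite_range_of_injective (fun a b hab => hxinj (inv_injective hab)))
    have hw : ∀ g ∈ F, ∃ k : ℕ, (x k)⁻¹ = g := by
      intro g hg
      exact hFX hg
    choose! w hwspec using hw
    set N := F.sup w with hN
    have : ∀ m : ℕ, y (m + N) ∈ ⋂ g ∈ F, (g : G) • A := by
      intro m
      rw [Set.mem_iInter₂]
      intro g hg
      rw [← hwspec g hg, Set.mem_smul_set_iff_inv_smul_mem, inv_inv, smul_eq_mul]
      exact hA (w g) (m + N) (le_trans (Finset.le_sup hg) (Nat.le_add_left N m))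
    have hinf : (⋂ g ∈ F, (g : G) • A).Infinite :=
      Set.infinite_of_injective_forall_mem
        (f := fun m : ℕ => y (m + N))
        (fun a b hab => by
          have := hyinj hab; omega) this
    exact hinf hFfin
end

section
/- For a subset A of an infinite group G, A is not scattered if and only if A contains a piecewise shifted FP-set. -/
/-- An ultrafilter is free if every member is infinite (it contains no finite set). -/
def IsFreeUltra {G : Type*} (p : Ultrafilter G) : Prop :=
  ∀ A : Set G, A ∈ p → A.Infinite

/-- The ultracompanion `Δ_p(A) = {gp : g ∈ G, A ∈ gp}`, where `gp` is the image of
`p` under left translation by `g`. -/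
def Ultracompanion {G : Type*} [Group G] (p : Ultrafilter G) (A : Set G) :
    Set (Ultrafilter G) :=
  {q | ∃ g : G, q = Ultrafilter.map (fun x => g * x) p ∧ A ∈ q}

/-- A subset `A` of `G` is scattered if for every infinite `X ⊆ A` there is a free
ultrafilter `p` with `X ∈ p` such that `Δ_p(X)` is finite. -/
def IsScatteredSub {G : Type*} [Group G] (A : Set G) : Prop :=
  ∀ X : Set G, X ⊆ A → X.Infinite →
    ∃ p : Ultrafilter G, IsFreeUltra p ∧ X ∈ p ∧ (Ultracompanion p X).Finite

/-- The (right) piecewise shifted FP-set of sequences `g`, `b`: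
`{g i₁ * g i₂ * ⋯ * g iₙ * b iₙ : n ≥ 1, i₁ < i₂ < … < iₙ}`. -/
def PiecewiseShiftedFP {G : Type*} [Group G] (g b : ℕ → G) : Set G :=
  {x | ∃ l : List ℕ, ∃ h : l ≠ [], l.Chain' (· < ·) ∧
    x = (l.map g).prod * b (l.getLast h)}

/-!
If `A` is not scattered, some infinite `X ⊆ A` has infinite `Δ_p(X)` for every free `p ∋ X`. Then
infinitely many `h` satisfy `X ∈ h p`, and a free `q` concentrated on them has `X ∈ q * p`. A Zorn
argument in the compact semigroup `βG` turns this into a free `r ∋ X` and a free idempotent `u`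
with `u * r = r`. So `{h | X ∈ h r}` belongs to `u`, and the Galvin–Glazer construction gives an
injective `g` all of whose increasing products lie in it; `b n` is then chosen so that
`g n * b n` lies in the finitely many `r`-large sets `(g i₁ ⋯ g iₖ)⁻¹ X` with `iₖ < n`.

Conversely, pass to a subsequence along which no nonempty increasing product of the `g i` is `1`,
and let `p` be free with `X = PiecewiseShiftedFP g b ∈ p`. Reading elements of `X` from the left,
either `p`-almost all elements with a given prefix `c` continue with one common factor `g m`,
and the prefix grows, or inserting any later `g j` after `c` keeps `p`-almost all of them in `X`,
so the infinitely many `c * g j * c⁻¹` translate `p` to ultrafilters containing `X`. If the prefix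
grows forever, the initial segments of a prefix of length `k` give `k + 1` distinct such
translations. As `h ↦ h p` is injective, `Δ_p(X)` is infinite either way.
-/

open Filter Function

attribute [local instance] Ultrafilter.mul Ultrafilter.semigroup

theorem List.Pairwise.sublist_range {l : List ℕ} {n : ℕ} (hl : l.Pairwise (· < ·))
    (hlt : ∀ i ∈ l, i < n) : l.Sublist (List.range n) :=
  List.sublist_of_subperm_of_pairwise
    (List.subperm_of_subset hl.nodup fun i hi => List.mem_range.2 (hlt i hi)) hl
    List.pairwise_lt_range

section FreeUltrafilter

theorem isFreeUltra_iff_le_cofinite {α : Type*} {p : Ultrafilter α} :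
    IsFreeUltra p ↔ (p : Filter α) ≤ cofinite := by
  refine ⟨fun hp s hs => ?_, fun hp s hs hfin => ?_⟩
  · by_contra hsp
    exact hp _ (Ultrafilter.compl_mem_iff_notMem.2 hsp) hs
  · exact Ultrafilter.compl_notMem_iff.2 hs (hp hfin.compl_mem_cofinite)

theorem exists_isFreeUltra_mem {α : Type*} {X : Set α} (hX : X.Infinite) :
    ∃ p : Ultrafilter α, IsFreeUltra p ∧ X ∈ p := by
  have := hX.cofinite_inf_principal_neBot
  let p := Ultrafilter.of (cofinite ⊓ 𝓟 X)
  exact ⟨p, isFreeUltra_iff_le_cofinite.2 ((Ultrafilter.of_le _).trans inf_le_left),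
    Ultrafilter.of_le _ (mem_inf_of_right (mem_principal_self X))⟩

theorem isClosed_setOf_isFreeUltra {α : Type*} : IsClosed {p : Ultrafilter α | IsFreeUltra p} := by
  simp_rw [isFreeUltra_iff_le_cofinite, le_cofinite_iff_compl_singleton_mem, Set.ofPred_forall]
  exact isClosed_iInter fun x => ultrafilter_isClosed_basic _

theorem IsFreeUltra.map {α β : Type*} {p : Ultrafilter α} (hp : IsFreeUltra p) {f : α → β}
    (hf : Injective f) : IsFreeUltra (p.map f) := by
  rw [isFreeUltra_iff_le_cofinite] at hp ⊢
  exact (Filter.map_mono hp).trans hf.tendsto_cofinite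

theorem IsFreeUltra.mul {M : Type*} [Mul M] [IsLeftCancelMul M] (q : Ultrafilter M)
    {r : Ultrafilter M} (hr : IsFreeUltra r) : IsFreeUltra (q * r) := by
  rw [isFreeUltra_iff_le_cofinite] at hr ⊢
  intro s hs
  exact (Ultrafilter.eventually_mul q r (· ∈ s)).2 <|
    Eventually.of_forall fun x => hr ((mul_right_injective x).tendsto_cofinite hs)

end FreeUltrafilter

section Translation

variable {G : Type*} [Group G]

-- `(orderOf h).minFac` divides `orderOf h`, which is `0` when `h` has infinite order
-- (and `Nat.minFac 0 = 2`); it is a prime whenever `h ≠ 1`.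
theorem exists_zmod_mul_left_eq_add_one (h : G) :
    ∃ φ : G → ZMod (orderOf h).minFac, ∀ x, φ (h * x) = φ x + 1 := by
  let S := MulAction.orbitRel (Subgroup.zpowers h) G
  have hrep : ∀ x : G, ∃ k : ℤ, h ^ k * (⟦x⟧ : Quotient S).out = x := by
    intro x
    obtain ⟨⟨_, k, rfl⟩, hk⟩ := Setoid.symm (Quotient.mk_out (s := S) x)
    exact ⟨k, hk⟩
  choose k hk using hrep
  have cast_eq : ∀ a b : ℤ, h ^ a = h ^ b → (a : ZMod (orderOf h).minFac) = b := fun a b hab =>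
    (ZMod.intCast_eq_intCast_iff _ _ _).2
      ((zpow_eq_zpow_iff_modEq.1 hab).of_dvd (Int.natCast_dvd_natCast.2 (Nat.minFac_dvd _)))
  refine ⟨fun x => k x, fun x => ?_⟩
  have hout : (⟦h * x⟧ : Quotient S).out = (⟦x⟧ : Quotient S).out :=
    congrArg Quotient.out (Quotient.sound ⟨⟨h, Subgroup.mem_zpowers h⟩, rfl⟩)
  have := cast_eq (k (h * x)) (1 + k x) <| mul_right_cancel <|
    calc h ^ k (h * x) * (⟦x⟧ : Quotient S).out = h * x := by rw [← hout, hk]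
      _ = h ^ (1 + k x) * (⟦x⟧ : Quotient S).out := by rw [zpow_one_add, mul_assoc, hk]
  push_cast at this
  exact this.trans (add_comm _ _)

theorem Ultrafilter.eq_one_of_map_mul_left_eq {p : Ultrafilter G} {h : G}
    (hh : p.map (h * ·) = p) : h = 1 := by
  by_contra hne
  have : Fact (orderOf h).minFac.Prime := ⟨Nat.minFac_prime (orderOf_eq_one_iff.not.2 hne)⟩
  obtain ⟨φ, hφ⟩ := exists_zmod_mul_left_eq_add_one h
  obtain ⟨i, hi⟩ := (p.map φ).eq_pure_of_finite
  have hfib : φ ⁻¹' {i} ∈ p := Ultrafilter.mem_map.1 (hi ▸ rfl : {i} ∈ p.map φ)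
  have hshift : (h * ·) ⁻¹' (φ ⁻¹' {i}) ∈ p := Ultrafilter.mem_map.1 (hh.symm ▸ hfib)
  obtain ⟨x, hx, hhx⟩ := Ultrafilter.nonempty_of_mem (inter_mem hfib hshift)
  simp only [Set.mem_preimage, Set.mem_singleton_iff, hφ] at hx hhx
  exact one_ne_zero (add_eq_left.1 (hhx.trans hx.symm))

theorem Ultrafilter.map_mul_left_injective (p : Ultrafilter G) :
    Injective fun h : G => p.map (h * ·) := by
  intro a b hab
  have : p.map ((b⁻¹ * a) * ·) = p := by
    have := congrArg (Ultrafilter.map (b⁻¹ * ·)) hab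
    simp only [Ultrafilter.map_map, Function.comp_def, ← mul_assoc, inv_mul_cancel, one_mul] at this
    rw [this, Ultrafilter.map_id']
  simpa [inv_mul_eq_one, eq_comm] using Ultrafilter.eq_one_of_map_mul_left_eq this

end Translation

section ReturnSets

variable {M : Type*} [Semigroup M] [TopologicalSpace M]

def IsReturnSet (S K : Set M) : Prop :=
  IsClosed K ∧ K.Nonempty ∧ ∀ r ∈ K, ∃ q ∈ S, q * r ∈ K

variable [CompactSpace M]

theorem IsReturnSet.sInter {S : Set M} (hS : IsClosed S) (hcont : ∀ r : M, Continuous (· * r))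
    {c : Set (Set M)} (hc : IsChain (· ⊆ ·) c) (hne : c.Nonempty)
    (hret : ∀ K ∈ c, IsReturnSet S K) : IsReturnSet S (⋂₀ c) := by
  have : Nonempty c := hne.to_subtype
  have hc' : IsChain (· ⊇ ·) c := hc.symm
  have hdir : Directed (· ⊇ ·) ((↑) : c → Set M) := hc'.directedOn.directed_val
  refine ⟨isClosed_sInter fun K hK => (hret K hK).1, ?_, fun r hr => ?_⟩
  · rw [Set.sInter_eq_iInter]
    exact IsCompact.nonempty_iInter_of_directed_nonempty_isCompact_isClosed _ hdir
      (fun K => (hret K K.2).2.1) (fun K => (hret K K.2).1.isCompact) (fun K => (hret K K.2).1)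
  · let T : c → Set M := fun K => S ∩ (· * r) ⁻¹' K
    have hT : ∀ K, IsClosed (T K) := fun K =>
      hS.inter ((hret K K.2).1.preimage (hcont r))
    obtain ⟨q, hq⟩ := IsCompact.nonempty_iInter_of_directed_nonempty_isCompact_isClosed T
      (hdir.mono_comp (g := fun K : Set M => S ∩ (· * r) ⁻¹' K) _
        fun K K' h => Set.inter_subset_inter_right _ (Set.preimage_mono h))
      (fun K => (hret K K.2).2.2 r (Set.sInter_subset_of_mem K.2 hr))
      (fun K => (hT K).isCompact) hT
    rw [Set.mem_iInter] at hq
    exact ⟨q, (hq (Classical.arbitrary c)).1, Set.mem_sInter.2 fun K hK => (hq ⟨K, hK⟩).2⟩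

theorem exists_minimal_isReturnSet_subset {S Y : Set M} (hS : IsClosed S)
    (hcont : ∀ r : M, Continuous (· * r)) (hY : IsReturnSet S Y) :
    ∃ K ⊆ Y, Minimal (IsReturnSet S) K := by
  obtain ⟨K, hK⟩ := zorn_superset {K | K ⊆ Y ∧ IsReturnSet S K} fun c hcY hc => by
    rcases c.eq_empty_or_nonempty with rfl | hne
    · exact ⟨Y, ⟨subset_rfl, hY⟩, by simp⟩
    obtain ⟨K, hK⟩ := hne
    exact ⟨⋂₀ c, ⟨(Set.sInter_subset_of_mem hK).trans (hcY hK).1,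
      IsReturnSet.sInter hS hcont hc ⟨K, hK⟩ fun K hK => (hcY hK).2⟩,
      fun _ => Set.sInter_subset_of_mem⟩
  exact ⟨K, hK.prop.1, hK.prop.2, fun K' hK' hsub => hK.2 ⟨hsub.trans hK.prop.1, hK'⟩ hsub⟩

variable [T2Space M]

theorem Minimal.exists_mul_eq_of_isReturnSet {S K : Set M} (hS : IsClosed S)
    (hSmul : ∀ x ∈ S, ∀ y ∈ S, x * y ∈ S) (hcont : ∀ r : M, Continuous (· * r))
    (hK : Minimal (IsReturnSet S) K) {r : M} (hr : r ∈ K) : ∃ q ∈ S, q * r = r := by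
  obtain ⟨hKclosed, -, hKret⟩ := hK.prop
  let Φ := (· * r) '' (S ∩ (· * r) ⁻¹' K)
  have hΦ : IsReturnSet S Φ := by
    refine ⟨((hS.inter (hKclosed.preimage (hcont r))).isCompact.image
      (hcont r)).isClosed, ?_, ?_⟩
    · obtain ⟨q, hq, hqr⟩ := hKret r hr
      exact ⟨q * r, q, ⟨hq, hqr⟩, rfl⟩
    · rintro _ ⟨q, ⟨hq, hqr⟩, rfl⟩
      obtain ⟨q', hq', hq'qr⟩ := hKret _ hqr
      exact ⟨q', hq', q' * q, ⟨hSmul _ hq' _ hq, by rwa [Set.mem_preimage, mul_assoc]⟩,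
        mul_assoc _ _ _⟩
  have hΦK : Φ = K := hK.eq_of_subset hΦ (by rintro _ ⟨q, ⟨-, hqr⟩, rfl⟩; exact hqr)
  obtain ⟨q, ⟨hq, -⟩, hqr⟩ := hΦK ▸ hr
  exact ⟨q, hq, hqr⟩

theorem exists_idempotent_mul_eq_of_isReturnSet {S Y : Set M} (hS : IsClosed S)
    (hSmul : ∀ x ∈ S, ∀ y ∈ S, x * y ∈ S) (hcont : ∀ r : M, Continuous (· * r))
    (hY : IsReturnSet S Y) : ∃ r ∈ Y, ∃ u ∈ S, u * u = u ∧ u * r = r := by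
  obtain ⟨K, hKY, hK⟩ := exists_minimal_isReturnSet_subset hS hcont hY
  obtain ⟨r, hr⟩ := hK.prop.2.1
  let T := S ∩ (· * r) ⁻¹' {r}
  obtain ⟨u, ⟨huS, hur⟩, hu⟩ := exists_idempotent_in_compact_subsemigroup hcont T
    (hK.exists_mul_eq_of_isReturnSet hS hSmul hcont hr)
    (hS.inter (isClosed_singleton.preimage (hcont r))).isCompact
    fun x ⟨hx, hxr⟩ y ⟨hy, hyr⟩ => ⟨hSmul x hx y hy, by
      simp only [Set.mem_preimage, Set.mem_singleton_iff] at hxr hyr ⊢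
      rw [mul_assoc, hyr, hxr]⟩
  exact ⟨r, hKY hr, u, huS, hu, hur⟩

end ReturnSets

section GalvinGlazer

variable {M : Type*} [Monoid M] {u : Ultrafilter M}

theorem Ultrafilter.exists_mem_inter_preimage_mul_left_diff_mem (hfree : IsFreeUltra u)
    (hu : u * u = u) {S : Set M} (hS : S ∈ u) : ∃ x ∈ S, (S ∩ (x * ·) ⁻¹' S) \ {x} ∈ u := by
  have hS2 : {x | (x * ·) ⁻¹' S ∈ u} ∈ u := by rwa [← hu] at hS
  obtain ⟨x, hxS, hx⟩ := Ultrafilter.nonempty_of_mem (inter_mem hS hS2)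
  refine ⟨x, hxS, sdiff_mem (inter_mem hS hx) ?_⟩
  exact (isFreeUltra_iff_le_cofinite.1 hfree) (Set.finite_singleton x).compl_mem_cofinite

theorem Ultrafilter.exists_injective_forall_prod_mem (hfree : IsFreeUltra u) (hu : u * u = u)
    {D : Set M} (hD : D ∈ u) : ∃ g : ℕ → M, Injective g ∧
      ∀ l : List ℕ, l ≠ [] → l.Pairwise (· < ·) → (l.map g).prod ∈ D := by
  choose x hxS hx using fun S : {S // S ∈ u} =>
    exists_mem_inter_preimage_mul_left_diff_mem hfree hu S.2
  let next : {S // S ∈ u} → {S // S ∈ u} := fun S => ⟨_, hx S⟩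
  let s : ℕ → {S // S ∈ u} := fun n => next^[n] ⟨D, hD⟩
  let g : ℕ → M := fun n => x (s n)
  have hsucc : ∀ n, (s (n + 1) : Set M) = ((s n : Set M) ∩ (g n * ·) ⁻¹' s n) \ {g n} := fun n =>
    congrArg Subtype.val (Function.iterate_succ_apply' next n _)
  have hanti : Antitone fun n => (s n : Set M) := antitone_nat_of_succ_le fun n =>
    (hsucc n).trans_subset (Set.sdiff_subset.trans Set.inter_subset_left)
  have hprod : ∀ l a, (a :: l).Pairwise (· < ·) → ((a :: l).map g).prod ∈ (s a : Set M) := by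
    intro l
    induction l with
    | nil => exact fun a _ => by simpa using hxS (s a)
    | cons c l ih =>
      intro a hl
      have hac : a + 1 ≤ c := (List.pairwise_cons.1 hl).1 c (by simp)
      have : _ ∈ (s (a + 1) : Set M) := hanti hac (ih c (List.pairwise_cons.1 hl).2)
      rw [hsucc] at this
      simpa using this.1.2
  refine ⟨g, fun m n hmn => ?_, fun l hl hpw => ?_⟩
  · by_contra hne
    wlog hlt : m < n generalizing m n
    · exact this n m hmn.symm (Ne.symm hne) (lt_of_le_of_ne (not_lt.1 hlt) (Ne.symm hne))
    have : g n ∈ (s (m + 1) : Set M) := hanti (Nat.succ_le_of_lt hlt) (hxS (s n))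
    rw [hsucc] at this
    exact this.2 hmn.symm
  · obtain ⟨a, l, rfl⟩ := List.exists_cons_of_ne_nil hl
    exact hanti (Nat.zero_le a) (hprod l a hpw)

end GalvinGlazer

section NotScattered

variable {G : Type*} [Group G]

theorem ultracompanion_infinite_iff {p : Ultrafilter G} {X : Set G} :
    (Ultracompanion p X).Infinite ↔ {h : G | (h * ·) ⁻¹' X ∈ p}.Infinite := by
  have : Ultracompanion p X = (fun h => p.map (h * ·)) '' {h : G | (h * ·) ⁻¹' X ∈ p} := by
    ext q
    constructor
    · rintro ⟨h, rfl, hX⟩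
      exact ⟨h, hX, rfl⟩
    · rintro ⟨h, hX, rfl⟩
      exact ⟨h, rfl, hX⟩
  rw [this, Set.infinite_image_iff (p.map_mul_left_injective.injOn)]

theorem exists_piecewiseShiftedFP_subset_of_idempotent {u r : Ultrafilter G}
    (hfree : IsFreeUltra u) (hu : u * u = u) (hur : u * r = r) {X : Set G} (hX : X ∈ r) :
    ∃ g b : ℕ → G, Injective g ∧ PiecewiseShiftedFP g b ⊆ X := by
  obtain ⟨g, hg, hgD⟩ := u.exists_injective_forall_prod_mem hfree hu
    (D := {h | (h * ·) ⁻¹' X ∈ r}) (by rwa [← hur] at hX)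
  have hev : ∀ n, ∀ᶠ y in r, ∀ l ∈ (List.range n).sublists, (l.map g).prod * y ∈ X := by
    intro n
    refine (eventually_all_finite (List.range n).sublists.finite_toSet).2 fun l hl => ?_
    rcases eq_or_ne l [] with rfl | hne
    · simpa using hX
    · exact hgD l hne ((List.pairwise_lt_range).sublist (List.mem_sublists.1 hl))
  choose y hy using fun n => (hev n).exists
  refine ⟨g, fun n => (g n)⁻¹ * y n, hg, ?_⟩
  rintro _ ⟨l, hl, hchain, rfl⟩
  obtain ⟨l, m, rfl⟩ := (l.eq_nil_or_concat').resolve_left hl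
  obtain ⟨hpw, -, hlt⟩ := List.pairwise_append.1 (List.isChain_iff_pairwise.1 hchain)
  have hmem := hy m l (List.mem_sublists.2 <| hpw.sublist_range fun i hi => hlt i hi m (by simp))
  simpa [mul_assoc] using hmem

theorem exists_piecewiseShiftedFP_subset_of_not_isScatteredSub {A : Set G}
    (hA : ¬ IsScatteredSub A) : ∃ g b : ℕ → G, Injective g ∧ PiecewiseShiftedFP g b ⊆ A := by
  simp only [IsScatteredSub, not_forall, not_exists, not_and, exists_prop] at hA
  obtain ⟨X, hXA, hXinf, hX⟩ := hA
  have hY : IsReturnSet {q : Ultrafilter G | IsFreeUltra q} {r | IsFreeUltra r ∧ X ∈ r} := by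
    refine ⟨isClosed_setOf_isFreeUltra.inter (ultrafilter_isClosed_basic X),
      exists_isFreeUltra_mem hXinf, fun r ⟨hr, hXr⟩ => ?_⟩
    obtain ⟨q, hq, hXq⟩ := exists_isFreeUltra_mem (ultracompanion_infinite_iff.1 (hX r hr hXr))
    exact ⟨q, hq, IsFreeUltra.mul q hr, hXq⟩
  obtain ⟨r, ⟨-, hXr⟩, u, hfree, hu, hur⟩ := exists_idempotent_mul_eq_of_isReturnSet
    isClosed_setOf_isFreeUltra (fun q _ _ hr => by exact IsFreeUltra.mul q hr)
    Ultrafilter.continuous_mul_left hY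
  obtain ⟨g, b, hg, hgb⟩ := exists_piecewiseShiftedFP_subset_of_idempotent hfree hu hur hXr
  exact ⟨g, b, hg, hgb.trans hXA⟩

end NotScattered

section Scattered

variable {G : Type*} [Group G] {g b : ℕ → G}

def piecewiseShiftedFPFrom (g b : ℕ → G) (t : ℕ) : Set G :=
  {x | ∃ l : List ℕ, ∃ h : l ≠ [], l.Pairwise (· < ·) ∧ (∀ i ∈ l, t ≤ i) ∧
    x = (l.map g).prod * b (l.getLast h)}

theorem piecewiseShiftedFPFrom_zero : piecewiseShiftedFPFrom g b 0 = PiecewiseShiftedFP g b := by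
  ext x
  constructor
  · rintro ⟨l, hl, hpw, -, rfl⟩
    exact ⟨l, hl, List.isChain_iff_pairwise.2 hpw, rfl⟩
  · rintro ⟨l, hl, hchain, rfl⟩
    exact ⟨l, hl, List.isChain_iff_pairwise.1 hchain, fun i _ => Nat.zero_le i, rfl⟩

theorem mem_piecewiseShiftedFPFrom_iff {t : ℕ} {x : G} :
    x ∈ piecewiseShiftedFPFrom g b t ↔
      ∃ m, t ≤ m ∧ ∃ w, x = g m * w ∧ (w = b m ∨ w ∈ piecewiseShiftedFPFrom g b (m + 1)) := by
  constructor
  · rintro ⟨_ | ⟨m, l⟩, hl, hpw, hge, rfl⟩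
    · exact absurd rfl hl
    obtain ⟨hml, hpw⟩ := List.pairwise_cons.1 hpw
    refine ⟨m, hge m (by simp), (l.map g).prod * b ((m :: l).getLast hl), by simp [mul_assoc], ?_⟩
    rcases eq_or_ne l [] with rfl | hne
    · simp
    · exact Or.inr ⟨l, hne, hpw, hml, by rw [List.getLast_cons hne]⟩
  · rintro ⟨m, htm, w, rfl, rfl | ⟨l, hl, hpw, hge, rfl⟩⟩
    · exact ⟨[m], by simp, by simp, by simpa using htm, by simp⟩
    · refine ⟨m :: l, by simp, List.pairwise_cons.2 ⟨hge, hpw⟩, ?_, ?_⟩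
      · simpa using ⟨htm, fun i hi => htm.trans (Nat.le_of_succ_le (hge i hi))⟩
      · simp [List.getLast_cons hl, mul_assoc]

theorem prod_mul_mem_piecewiseShiftedFPFrom {l : List ℕ} {s t : ℕ} {z : G}
    (hl : l.Pairwise (· < ·)) (hge : ∀ i ∈ l, s ≤ i) (hlt : ∀ i ∈ l, i < t) (hst : s ≤ t)
    (hz : z ∈ piecewiseShiftedFPFrom g b t) :
    (l.map g).prod * z ∈ piecewiseShiftedFPFrom g b s := by
  obtain ⟨l', hl', hpw', hge', rfl⟩ := hz
  refine ⟨l ++ l', by simp [hl'], List.pairwise_append.2 ⟨hl, hpw', fun i hi j hj =>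
    (hlt i hi).trans_le (hge' j hj)⟩, ?_, ?_⟩
  · simp only [List.mem_append]
    rintro i (hi | hi)
    exacts [hge i hi, hst.trans (hge' i hi)]
  · rw [List.map_append, List.prod_append, mul_assoc, List.getLast_append_of_ne_nil _ hl']

theorem piecewiseShiftedFP_comp_subset {e : ℕ → ℕ} (he : StrictMono e) :
    PiecewiseShiftedFP (g ∘ e) (b ∘ e) ⊆ PiecewiseShiftedFP g b := by
  rintro _ ⟨l, hl, hchain, rfl⟩
  refine ⟨l.map e, by simpa using hl, ?_, ?_⟩
  · exact (List.isChain_map e).2 (hchain.imp fun _ _ h => he h)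
  · rw [List.getLast_map, List.map_map]
    rfl

theorem PiecewiseShiftedFP.infinite (hg : Injective g) : (PiecewiseShiftedFP g b).Infinite := by
  rw [← piecewiseShiftedFPFrom_zero]
  intro hfin
  refine Set.infinite_range_of_injective hg ((hfin.mul hfin.inv).subset ?_)
  rintro _ ⟨i, rfl⟩
  have hb : g (i + 1) * b (i + 1) ∈ piecewiseShiftedFPFrom g b 0 :=
    mem_piecewiseShiftedFPFrom_iff.2 ⟨i + 1, Nat.zero_le _, _, rfl, Or.inl rfl⟩
  have hib : g i * (g (i + 1) * b (i + 1)) ∈ piecewiseShiftedFPFrom g b 0 :=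
    mem_piecewiseShiftedFPFrom_iff.2 ⟨i, Nat.zero_le _, _, rfl, Or.inr
      (mem_piecewiseShiftedFPFrom_iff.2 ⟨i + 1, le_rfl, _, rfl, Or.inl rfl⟩)⟩
  exact ⟨_, hib, _, Set.inv_mem_inv.2 hb, by group⟩

theorem exists_strictMono_forall_prod_ne_one (hg : Injective g) : ∃ e : ℕ → ℕ, StrictMono e ∧
    ∀ l : List ℕ, l ≠ [] → l.Pairwise (· < ·) → (l.map (g ∘ e)).prod ≠ 1 := by
  let bad : ℕ → Set G := fun x =>
    (fun l : List ℕ => ((l.map g).prod)⁻¹) '' {l | l ∈ (List.range (x + 1)).sublists}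
  obtain ⟨e, -, he⟩ := exists_seq_of_forall_finset_exists (fun _ => True)
    (fun x y => x < y ∧ g y ∉ bad x) fun s _ => by
      have hev : ∀ᶠ y in atTop, ∀ x ∈ s, x < y ∧ g y ∉ bad x := by
        refine (eventually_all_finset s).2 fun x _ => (eventually_gt_atTop x).and ?_
        rw [← Nat.cofinite_eq_atTop]
        exact hg.tendsto_cofinite.eventually
          ((List.finite_toSet _).image _).compl_mem_cofinite
      obtain ⟨y, hy⟩ := hev.exists
      exact ⟨y, trivial, hy⟩
  -- Dropping `e 0` gives every term `e (n + 1)` a predecessor `e n` above all earlier terms.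
  refine ⟨e ∘ Nat.succ, fun m n hmn => (he _ _ (Nat.succ_lt_succ hmn)).1, fun l hl hpw => ?_⟩
  obtain ⟨l, n, rfl⟩ := l.eq_nil_or_concat'.resolve_left hl
  obtain ⟨hpw, -, hlt⟩ := List.pairwise_append.1 hpw
  have hmono : StrictMono e := strictMono_nat_of_lt_succ fun n => (he n (n + 1) n.lt_succ_self).1
  have hsub : (l.map (e ∘ Nat.succ)).Sublist (List.range (e n + 1)) :=
    (hpw.map _ fun _ _ h => hmono (Nat.succ_lt_succ h)).sublist_range
      fun _ hi => by
        obtain ⟨i, hil, rfl⟩ := List.mem_map.1 hi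
        exact Nat.lt_succ_of_le (hmono.monotone (hlt i hil n (by simp)))
  have hnot := (he n (n + 1) n.lt_succ_self).2
  simp only [bad, Set.mem_image, not_exists, not_and] at hnot
  simpa [← List.map_map, mul_eq_one_iff_inv_eq] using hnot _ (List.mem_sublists.2 hsub)

theorem exists_mem_or_forall_mul_left_preimage_mem {q : Ultrafilter G} (hq : IsFreeUltra q)
    {t : ℕ} (ht : piecewiseShiftedFPFrom g b t ∈ q) :
    (∃ m, t ≤ m ∧ ((g m)⁻¹ * ·) ⁻¹' piecewiseShiftedFPFrom g b (m + 1) ∈ q) ∨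
      ∀ j, t ≤ j → (g j * ·) ⁻¹' piecewiseShiftedFPFrom g b t ∈ q := by
  refine or_iff_not_imp_left.2 fun hno j hj => ?_
  simp only [not_exists, not_and] at hno
  let E := ⋃ m ∈ Set.Icc t j,
    ({g m * b m} ∪ ((g m)⁻¹ * ·) ⁻¹' piecewiseShiftedFPFrom g b (m + 1) : Set G)
  have hE : Eᶜ ∈ q := by
    refine Ultrafilter.compl_mem_iff_notMem.2 ((Ultrafilter.finite_biUnion_mem_iff
      (Set.finite_Icc t j)).not.2 ?_)
    rintro ⟨m, ⟨htm, -⟩, hm⟩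
    rcases Ultrafilter.union_mem_iff.1 hm with h | h
    · exact hq _ h (Set.finite_singleton _)
    · exact hno m htm h
  refine mem_of_superset (inter_mem ht hE) ?_
  rintro x ⟨hx, hxE⟩
  obtain ⟨m, htm, w, rfl, hw⟩ := mem_piecewiseShiftedFPFrom_iff.1 hx
  have hjm : j < m := by
    by_contra! hmj
    refine hxE (Set.mem_biUnion ⟨htm, hmj⟩ ?_)
    rcases hw with rfl | hw
    · exact Or.inl rfl
    · exact Or.inr (by simpa using hw)
  exact mem_piecewiseShiftedFPFrom_iff.2
    ⟨j, hj, _, rfl, Or.inr (mem_piecewiseShiftedFPFrom_iff.2 ⟨m, hjm, w, rfl, hw⟩)⟩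

theorem exists_append_mem_of_finite {p : Ultrafilter G} (hp : IsFreeUltra p) (hg : Injective g)
    (hH : {h : G | (h * ·) ⁻¹' PiecewiseShiftedFP g b ∈ p}.Finite) {l : List ℕ} {t : ℕ}
    (hl : l.Pairwise (· < ·)) (hlt : ∀ i ∈ l, i < t)
    (hmem : (((l.map g).prod)⁻¹ * ·) ⁻¹' piecewiseShiftedFPFrom g b t ∈ p) :
    ∃ m, t ≤ m ∧ ((((l ++ [m]).map g).prod)⁻¹ * ·) ⁻¹' piecewiseShiftedFPFrom g b (m + 1) ∈ p := by
  set c := (l.map g).prod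
  rcases exists_mem_or_forall_mul_left_preimage_mem (hp.map (mul_right_injective c⁻¹))
    (Ultrafilter.mem_map.2 hmem) with ⟨m, htm, hm⟩ | hall
  · exact ⟨m, htm, by simpa [c, mul_assoc, Set.preimage_preimage] using hm⟩
  refine absurd hH (Set.infinite_of_injective_forall_mem (f := fun j => c * g (j + t) * c⁻¹)
    (fun i j hij => by simpa [hg.eq_iff] using hij) fun j => ?_)
  refine mem_of_superset (Ultrafilter.mem_map.1 (hall (j + t) le_add_self)) fun x hx => ?_
  rw [← piecewiseShiftedFPFrom_zero]
  simpa [mul_assoc] using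
    prod_mul_mem_piecewiseShiftedFPFrom hl (fun _ _ => Nat.zero_le _) hlt (Nat.zero_le t) hx

theorem injOn_prod_take (hgood : ∀ l : List ℕ, l ≠ [] → l.Pairwise (· < ·) → (l.map g).prod ≠ 1)
    {l : List ℕ} (hl : l.Pairwise (· < ·)) :
    Set.InjOn (fun j => ((l.take j).map g).prod) (Set.Iic l.length) := by
  intro i hi j hj hij
  by_contra hne
  wlog hlt : i < j generalizing i j
  · exact this hj hi hij.symm (Ne.symm hne) (lt_of_le_of_ne (not_lt.1 hlt) (Ne.symm hne))
  obtain ⟨d, rfl⟩ := Nat.exists_eq_add_of_lt hlt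
  refine hgood ((l.drop i).take (d + 1)) ?_ (hl.sublist ((List.take_sublist _ _).trans
    (List.drop_sublist _ _))) ?_
  · simp only [ne_eq, List.take_eq_nil_iff, List.drop_eq_nil_iff, not_or]
    exact ⟨by omega, by simp only [Set.mem_Iic] at hj; omega⟩
  · dsimp only at hij
    rw [add_assoc, List.take_add, List.map_append, List.prod_append] at hij
    exact left_eq_mul.1 hij

theorem exists_length_eq_preimage_mem_of_finite {p : Ultrafilter G} (hp : IsFreeUltra p)
    (hg : Injective g) (hH : {h : G | (h * ·) ⁻¹' PiecewiseShiftedFP g b ∈ p}.Finite)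
    (hX : PiecewiseShiftedFP g b ∈ p) (k : ℕ) :
    ∃ (l : List ℕ) (t : ℕ), l.length = k ∧ l.Pairwise (· < ·) ∧ (∀ i ∈ l, i < t) ∧
      (((l.map g).prod)⁻¹ * ·) ⁻¹' piecewiseShiftedFPFrom g b t ∈ p := by
  induction k with
  | zero => exact ⟨[], 0, rfl, List.Pairwise.nil, by simp, by simpa [piecewiseShiftedFPFrom_zero]⟩
  | succ k ih =>
    obtain ⟨l, t, hlen, hl, hlt, hmem⟩ := ih
    obtain ⟨m, htm, hm⟩ := exists_append_mem_of_finite hp hg hH hl hlt hmem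
    refine ⟨l ++ [m], m + 1, by simp [hlen], List.pairwise_append.2 ⟨hl, by simp, ?_⟩, ?_, hm⟩
    · simpa using fun i hi => (hlt i hi).trans_le htm
    · intro i hi
      rcases List.mem_append.1 hi with hi | hi
      · exact ((hlt i hi).trans_le htm).trans m.lt_succ_self
      · exact List.mem_singleton.1 hi ▸ m.lt_succ_self

theorem ultracompanion_piecewiseShiftedFP_infinite (hg : Injective g)
    (hgood : ∀ l : List ℕ, l ≠ [] → l.Pairwise (· < ·) → (l.map g).prod ≠ 1)
    {p : Ultrafilter G} (hp : IsFreeUltra p) (hX : PiecewiseShiftedFP g b ∈ p) :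
    (Ultracompanion p (PiecewiseShiftedFP g b)).Infinite := by
  rw [ultracompanion_infinite_iff]
  intro hH
  obtain ⟨l, t, hlen, hl, hlt, hmem⟩ :=
    exists_length_eq_preimage_mem_of_finite hp hg hH hX hH.toFinset.card
  let c := (l.map g).prod
  have hmaps : Set.MapsTo (fun j => ((l.take j).map g).prod * c⁻¹)
      (Finset.range (l.length + 1)) hH.toFinset := fun j _ => by
    refine hH.mem_toFinset.2 (mem_of_superset hmem fun x hx => ?_)
    rw [← piecewiseShiftedFPFrom_zero]
    simpa [mul_assoc] using prod_mul_mem_piecewiseShiftedFPFrom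
      (hl.sublist (List.take_sublist j l)) (fun _ _ => Nat.zero_le _)
      (fun i hi => hlt i (List.mem_of_mem_take hi)) (Nat.zero_le t) hx
  have hinj := (mul_left_injective c⁻¹).comp_injOn ((injOn_prod_take hgood hl).mono
    fun j hj => Set.mem_Iic.2 (Nat.lt_succ_iff.1 (Finset.mem_range.1 hj)))
  have := Finset.card_le_card_of_injOn _ hmaps hinj
  rw [Finset.card_range, hlen] at this
  omega

theorem not_isScatteredSub_of_piecewiseShiftedFP_subset {A : Set G} (hg : Injective g)
    (hA : PiecewiseShiftedFP g b ⊆ A) : ¬ IsScatteredSub A := by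
  obtain ⟨e, he, hgood⟩ := exists_strictMono_forall_prod_ne_one hg
  have hge : Injective (g ∘ e) := hg.comp he.injective
  intro hsc
  obtain ⟨p, hp, hXp, hfin⟩ := hsc _ ((piecewiseShiftedFP_comp_subset he).trans hA)
    (PiecewiseShiftedFP.infinite hge)
  exact ultracompanion_piecewiseShiftedFP_infinite hge hgood hp hXp hfin

end Scattered

theorem not_scattered_iff_contains_piecewiseShiftedFP_general
    {G : Type*} [Group G] (A : Set G) :
    ¬ IsScatteredSub A ↔
      ∃ g b : ℕ → G, Function.Injective g ∧ PiecewiseShiftedFP g b ⊆ A :=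
  ⟨exists_piecewiseShiftedFP_subset_of_not_isScatteredSub,
    fun ⟨_, _, hg, hA⟩ => not_isScatteredSub_of_piecewiseShiftedFP_subset hg hA⟩

/-- For a subset `A` of an infinite group `G`, `A` is not scattered iff `A` contains
a piecewise shifted FP-set (with `g` injective). -/
theorem not_scattered_iff_contains_piecewiseShiftedFP
    {G : Type*} [Group G] [Infinite G] (A : Set G) :
    ¬ IsScatteredSub A ↔
      ∃ g b : ℕ → G, Function.Injective g ∧ PiecewiseShiftedFP g b ⊆ A :=
  not_scattered_iff_contains_piecewiseShiftedFP_general A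
end

section
/- For an infinite group G and a vector m = (m_1, ..., m_k) in Z^k: (i) a subset A of G is a Ramsey m-product subset if and only if every infinite subset X of G contains a countably infinite subset Y such that y_1^{m_1} ··· y_k^{m_k} ∈ A for any pairwise distinct elements y_1, ..., y_k of Y; (ii) the family of all Ramsey m-product subsets of G is a filter on G. -/
/-!
Colour each `k`-element subset `t` of an infinite set `X` by whether every product of the
distinct elements of `t`, taken in any order with the exponents `m`, lies in `A`. By the infinite
Ramsey theorem `X` contains an infinite set `Y` all of whose `k`-subsets have the same colour;
if `A` is a Ramsey `m`-product set, applying this to `Y` produces one `k`-subset of the good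
colour, so all of them are good, and any countably infinite subset of `Y` will do.
This characterisation applied twice (to `X`, then to the set found inside it) shows that the
Ramsey sets are closed under intersection; they form a filter, proper since `G` is infinite.
-/

/-- `A` is a Ramsey `m`-product subset of `G` (for `m = (m 0, …, m (k-1)) ∈ ℤ^k`)
if every infinite `X ⊆ G` contains pairwise distinct elements `x 0, …, x (k-1)`
such that `x (σ 0) ^ m 0 * x (σ 1) ^ m 1 * ⋯ * x (σ (k-1)) ^ m (k-1) ∈ A` for
every permutation `σ` of `Fin k`. -/
def IsRamseyProdSub {G : Type*} [Group G] {k : ℕ} (m : Fin k → ℤ) (A : Set G) : Prop :=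
  ∀ X : Set G, X.Infinite →
    ∃ x : Fin k → G, (∀ i, x i ∈ X) ∧ Function.Injective x ∧
      ∀ σ : Equiv.Perm (Fin k), (List.ofFn fun i => x (σ i) ^ m i).prod ∈ A

open Function Set

namespace Set

variable {α β : Type*}

def IsMonochromatic (T : Set α) (c : Finset α → β) (k : ℕ) : Prop :=
  ∃ b, ∀ t : Finset α, ↑t ⊆ T → t.card = k → c t = b

theorem exists_mem_erase_subset_of_antitone [DecidableEq α] {a : ℕ → α} {S : ℕ → Set α}
    (hS : Antitone S) (ha : ∀ n, a n ∈ S n) {N : Set ℕ} {t : Finset α} (ht : ↑t ⊆ a '' N)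
    (hne : t.Nonempty) :
    ∃ n ∈ N, a n ∈ t ∧ ↑(t.erase (a n)) ⊆ S (n + 1) := by
  classical
  have hex : ∃ n, n ∈ N ∧ a n ∈ t := by
    obtain ⟨x, hx⟩ := hne
    obtain ⟨n, hn, rfl⟩ := ht hx
    exact ⟨n, hn, hx⟩
  obtain ⟨hnN, hnt⟩ := Nat.find_spec hex
  refine ⟨Nat.find hex, hnN, hnt, fun x hx => ?_⟩
  obtain ⟨hxn, hxt⟩ := Finset.mem_erase.1 hx
  obtain ⟨j, hjN, rfl⟩ := ht hxt
  have hle : Nat.find hex ≤ j := Nat.find_min' hex ⟨hjN, hxt⟩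
  have hjn : Nat.find hex ≠ j := by rintro rfl; exact hxn rfl
  exact hS (Nat.succ_le_of_lt (hle.lt_of_ne hjn)) (ha j)

theorem injective_of_antitone_of_notMem {a : ℕ → α} {S : ℕ → Set α} (hS : Antitone S)
    (ha : ∀ n, a n ∈ S n) (ha' : ∀ n, a n ∉ S (n + 1)) : Injective a :=
  Injective.of_lt_imp_ne fun _ j hij hEq => ha' _ (hEq ▸ hS (Nat.succ_le_of_lt hij) (ha j))

/-- The infinite Ramsey theorem. -/
theorem Infinite.exists_infinite_isMonochromatic [Finite β] (c : Finset α → β) (k : ℕ)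
    {S : Set α} (hS : S.Infinite) : ∃ T ⊆ S, T.Infinite ∧ T.IsMonochromatic c k := by
  induction k generalizing c S with
  | zero => exact ⟨S, subset_rfl, hS, c ∅, fun t _ ht => by rw [Finset.card_eq_zero.1 ht]⟩
  | succ k ih =>
    classical
    have step (U : {U : Set α // U.Infinite}) : ∃ V : {V : Set α // V.Infinite}, ∃ a ∈ U.1,
        V.1 ⊆ U.1 \ {a} ∧ ∃ b, ∀ t : Finset α, ↑t ⊆ V.1 → t.card = k → c (insert a t) = b := by
      obtain ⟨a, ha⟩ := U.2.nonempty
      obtain ⟨V, hVU, hV, hmono⟩ :=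
        ih (fun t => c (insert a t)) (U.2.sdiff (finite_singleton a))
      exact ⟨⟨V, hV⟩, a, ha, hVU, hmono⟩
    choose next a ha hnext b hb using step
    let U : ℕ → {U : Set α // U.Infinite} := fun n => next^[n] ⟨S, hS⟩
    have hU (n : ℕ) : U (n + 1) = next (U n) := iterate_succ_apply' ..
    have hanti : Antitone fun n => (U n).1 :=
      antitone_nat_of_succ_le fun n => by rw [hU]; exact (hnext _).trans sdiff_subset
    have hinj : Injective fun n => a (U n) :=
      injective_of_antitone_of_notMem hanti (fun n => ha _) fun n hn => by
        rw [hU] at hn; exact (hnext _ hn).2 rfl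
    -- a `(k+1)`-set of `a`'s has colour `b (U n)` for its element `a (U n)` of least index `n`
    obtain ⟨b₀, hN⟩ := Finite.exists_infinite_fiber fun n => b (U n)
    refine ⟨(fun n => a (U n)) '' ((fun n => b (U n)) ⁻¹' {b₀}), ?_,
      (infinite_coe_iff.1 hN).image hinj.injOn, b₀, fun t ht htk => ?_⟩
    · rintro _ ⟨n, -, rfl⟩
      exact hanti n.zero_le (ha _)
    · obtain ⟨n, hn, hnt, hsub⟩ := exists_mem_erase_subset_of_antitone hanti (fun n => ha _) ht
        (Finset.card_pos.1 (by omega))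
      rw [← Finset.insert_erase hnt, ← hn]
      exact hb _ _ (by rwa [← hU]) (by rw [Finset.card_erase_of_mem hnt, htk]; rfl)

theorem Infinite.exists_injective_fin_mem {X : Set α} (hX : X.Infinite) (k : ℕ) :
    ∃ x : Fin k → α, (∀ i, x i ∈ X) ∧ Injective x :=
  ⟨fun i => hX.natEmbedding _ i, fun i => (hX.natEmbedding _ i).2,
    fun _ _ h => Fin.val_injective ((hX.natEmbedding _).injective (Subtype.ext h))⟩

end Set

theorem Function.Injective.exists_perm_comp_eq {α ι : Type*} [Finite ι] {x y : ι → α}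
    (hx : Injective x) (hy : Injective y) (hyx : ∀ i, y i ∈ range x) :
    ∃ σ : Equiv.Perm ι, x ∘ σ = y := by
  let σ : ι → ι := fun i => (Equiv.ofInjective x hx).symm ⟨y i, hyx i⟩
  have hσ : x ∘ σ = y := funext fun i => Equiv.apply_ofInjective_symm hx _
  have hσinj : Injective σ := fun i j hij => hy (by rw [← hσ]; exact congrArg x hij)
  exact ⟨Equiv.ofBijective σ (Finite.injective_iff_bijective.1 hσinj), hσ⟩

section RamseyProd

variable {G : Type*} [Group G] {k : ℕ} (m : Fin k → ℤ)

def PowProdsMem (Y A : Set G) : Prop :=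
  ∀ y : Fin k → G, (∀ i, y i ∈ Y) → Injective y → (List.ofFn fun i => y i ^ m i).prod ∈ A

variable {m}

theorem PowProdsMem.mono {Y Y' A A' : Set G} (h : PowProdsMem m Y A) (hY : Y' ⊆ Y)
    (hA : A ⊆ A') : PowProdsMem m Y' A' :=
  fun y hy hinj => hA (h y (fun i => hY (hy i)) hinj)

theorem PowProdsMem.inter {Y A B : Set G} (hA : PowProdsMem m Y A) (hB : PowProdsMem m Y B) :
    PowProdsMem m Y (A ∩ B) :=
  fun y hy hinj => ⟨hA y hy hinj, hB y hy hinj⟩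

theorem powProdsMem_range_iff {x : Fin k → G} (hx : Injective x) {A : Set G} :
    PowProdsMem m (range x) A ↔
      ∀ σ : Equiv.Perm (Fin k), (List.ofFn fun i => x (σ i) ^ m i).prod ∈ A := by
  refine ⟨fun h σ => h (x ∘ σ) (fun i => mem_range_self _) (hx.comp σ.injective),
    fun h y hy hinj => ?_⟩
  obtain ⟨σ, rfl⟩ := hx.exists_perm_comp_eq hinj hy
  exact h σ

theorem powProdsMem_iff_forall_finset {Y A : Set G} :
    PowProdsMem m Y A ↔ ∀ t : Finset G, ↑t ⊆ Y → t.card = k → PowProdsMem m ↑t A := by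
  refine ⟨fun h t ht _ => h.mono ht subset_rfl, fun h y hy hinj => ?_⟩
  classical
  refine h (Finset.univ.image y) ?_ ?_ y (fun i => by simp) hinj
  · simpa [range_subset_iff] using hy
  · simp [Finset.card_image_of_injective _ hinj]

theorem isRamseyProdSub_iff_exists_infinite_powProdsMem {A : Set G} :
    IsRamseyProdSub m A ↔ ∀ X : Set G, X.Infinite → ∃ Y ⊆ X, Y.Infinite ∧ PowProdsMem m Y A := by
  refine ⟨fun hA X hX => ?_, fun h X hX => ?_⟩
  · classical
    obtain ⟨Y, hYX, hY, p, hcolour⟩ :=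
      hX.exists_infinite_isMonochromatic (fun t : Finset G => PowProdsMem m ↑t A) k
    obtain ⟨x, hxY, hx, hxA⟩ := hA Y hY
    have hxt : (↑(Finset.univ.image x) : Set G) = range x := by simp
    have hx0 : PowProdsMem m ↑(Finset.univ.image x) A := hxt ▸ (powProdsMem_range_iff hx).2 hxA
    have hp : p := (hcolour _ (hxt ▸ range_subset_iff.2 hxY)
      (by simp [Finset.card_image_of_injective _ hx])).mp hx0
    exact ⟨Y, hYX, hY, powProdsMem_iff_forall_finset.2 fun t ht htk => (hcolour t ht htk).mpr hp⟩
  · obtain ⟨Y, hYX, hY, hYA⟩ := h X hX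
    obtain ⟨x, hxY, hx⟩ := hY.exists_injective_fin_mem k
    exact ⟨x, fun i => hYX (hxY i), hx,
      (powProdsMem_range_iff hx).1 (hYA.mono (range_subset_iff.2 hxY) subset_rfl)⟩

theorem IsRamseyProdSub.mono {A B : Set G} (hA : IsRamseyProdSub m A) (hAB : A ⊆ B) :
    IsRamseyProdSub m B := fun X hX =>
  let ⟨x, hxX, hx, hxA⟩ := hA X hX
  ⟨x, hxX, hx, fun σ => hAB (hxA σ)⟩

theorem IsRamseyProdSub.inter {A B : Set G} (hA : IsRamseyProdSub m A)
    (hB : IsRamseyProdSub m B) : IsRamseyProdSub m (A ∩ B) := by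
  rw [isRamseyProdSub_iff_exists_infinite_powProdsMem] at *
  intro X hX
  obtain ⟨Y, hYX, hY, hYA⟩ := hA X hX
  obtain ⟨Z, hZY, hZ, hZB⟩ := hB Y hY
  exact ⟨Z, hZY.trans hYX, hZ, (hYA.mono hZY subset_rfl).inter hZB⟩

theorem isRamseyProdSub_univ : IsRamseyProdSub m (univ : Set G) :=
  isRamseyProdSub_iff_exists_infinite_powProdsMem.2 fun X hX =>
    ⟨X, subset_rfl, hX, fun _ _ _ => mem_univ _⟩

theorem not_isRamseyProdSub_empty [Infinite G] : ¬IsRamseyProdSub m (∅ : Set G) := fun h =>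
  let ⟨_, _, _, hx⟩ := h univ infinite_univ
  hx 1

variable (m) in
def ramseyProdFilter : Filter G where
  sets := {A | IsRamseyProdSub m A}
  univ_sets := isRamseyProdSub_univ
  sets_of_superset := IsRamseyProdSub.mono
  inter_sets := IsRamseyProdSub.inter

theorem mem_ramseyProdFilter {A : Set G} : A ∈ ramseyProdFilter m ↔ IsRamseyProdSub m A :=
  Iff.rfl

instance [Infinite G] : (ramseyProdFilter m : Filter G).NeBot :=
  ⟨fun h => not_isRamseyProdSub_empty (mem_ramseyProdFilter.1 (h ▸ Filter.mem_bot))⟩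

end RamseyProd

theorem ramseyProd_iff_countable_and_isFilter_general
    {G : Type*} [Group G] [Infinite G] {k : ℕ} (m : Fin k → ℤ) :
    (∀ A : Set G, IsRamseyProdSub m A ↔
      ∀ X : Set G, X.Infinite →
        ∃ Y : Set G, Y ⊆ X ∧ Y.Countable ∧ Y.Infinite ∧
          ∀ y : Fin k → G, (∀ i, y i ∈ Y) → Function.Injective y →
            (List.ofFn fun i => y i ^ m i).prod ∈ A) ∧
    (∃ f : Filter G, f.NeBot ∧ ∀ A : Set G, A ∈ f ↔ IsRamseyProdSub m A) := by
  refine ⟨fun A => ?_, ramseyProdFilter m, inferInstance, fun A => mem_ramseyProdFilter⟩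
  rw [isRamseyProdSub_iff_exists_infinite_powProdsMem]
  refine forall₂_congr fun X _ => ⟨?_, ?_⟩
  · rintro ⟨Y, hYX, hY, hYA⟩
    obtain ⟨Z, hZY, hZc, hZ⟩ := hY.exists_subset_countable_infinite
    exact ⟨Z, hZY.trans hYX, hZc, hZ, hYA.mono hZY subset_rfl⟩
  · rintro ⟨Y, hYX, -, hY, hYA⟩
    exact ⟨Y, hYX, hY, hYA⟩

/-- For an infinite group `G` and an integer vector `m` of length `k ≥ 1`:
(i) `A` is a Ramsey `m`-product subset iff every infinite `X ⊆ G` contains a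
countably infinite subset `Y` such that `y 0 ^ m 0 * ⋯ * y (k-1) ^ m (k-1) ∈ A`
for all pairwise distinct `y 0, …, y (k-1) ∈ Y`;
(ii) the family of all Ramsey `m`-product subsets of `G` is a filter on `G`. -/
theorem ramseyProd_iff_countable_and_isFilter
    {G : Type*} [Group G] [Infinite G] {k : ℕ} (hk : 0 < k) (m : Fin k → ℤ) :
    (∀ A : Set G, IsRamseyProdSub m A ↔
      ∀ X : Set G, X.Infinite →
        ∃ Y : Set G, Y ⊆ X ∧ Y.Countable ∧ Y.Infinite ∧
          ∀ y : Fin k → G, (∀ i, y i ∈ Y) → Function.Injective y →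
            (List.ofFn fun i => y i ^ m i).prod ∈ A) ∧
    (∃ f : Filter G, f.NeBot ∧ ∀ A : Set G, A ∈ f ↔ IsRamseyProdSub m A) :=
  ramseyProd_iff_countable_and_isFilter_general m
end

section
/- Let G be a totally bounded topological group, i.e., a topological group such that for every neighbourhood U of the identity there is a finite subset F of G with G = FU. Then every neighbourhood U of the identity of G is a Ramsey m-product subset for every integer vector m = (m_1, ..., m_k) with m_1 + ... + m_k = 0. -/
open Pointwise

/-!
A totally bounded group is SIN: every neighbourhood `W` of `1` contains the
conjugation-invariant neighbourhood `conjCore W`. Take `W` symmetric with `W ^ N ⊆ U`,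
where `N = ∑ |m i|`. Finitely many translates `c • conjCore W` cover `G`, so one of them
contains infinitely many points of `X`; pick `k` distinct ones, `x i = c * s i`. Conjugation
invariance lets all the `c`'s be moved to the front, so the product over any permutation
lies in `c ^ (∑ m i) * conjCore W ^ N = conjCore W ^ N ⊆ U`.
-/

open Topology

def conjCore {G : Type*} [Group G] (W : Set G) : Set G :=
  {s | ∀ g, g * s * g⁻¹ ∈ W}

section Algebra

variable {G : Type*} [Group G] {W : Set G}

lemma conjCore_subset : conjCore W ⊆ W := fun s hs => by
  simpa using hs 1

lemma conj_mem_conjCore {s : G} (hs : s ∈ conjCore W) (g : G) : g * s * g⁻¹ ∈ conjCore W :=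
  fun h => by simpa [mul_assoc] using hs (h * g)

lemma inv_mem_conjCore (hW : W⁻¹ = W) {s : G} (hs : s ∈ conjCore W) : s⁻¹ ∈ conjCore W :=
  fun g => by
    rw [← hW, Set.mem_inv]
    simpa [mul_assoc] using hs g

lemma conj_mem_conjCore_pow {n : ℕ} {t : G} (ht : t ∈ conjCore W ^ n) (g : G) :
    g * t * g⁻¹ ∈ conjCore W ^ n := by
  have : g * t * g⁻¹ ∈ (MulAut.conj g '' conjCore W) ^ n := by
    rw [← Set.image_pow]
    exact ⟨t, ht, rfl⟩
  refine Set.pow_subset_pow_left ?_ this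
  rintro _ ⟨s, hs, rfl⟩
  exact conj_mem_conjCore hs g

lemma inv_mem_conjCore_pow (hW : W⁻¹ = W) {n : ℕ} {t : G} (ht : t ∈ conjCore W ^ n) :
    t⁻¹ ∈ conjCore W ^ n := by
  have : t⁻¹ ∈ (conjCore W)⁻¹ ^ n := by
    rw [inv_pow]
    exact Set.inv_mem_inv.2 ht
  exact Set.pow_subset_pow_left (fun s hs => by simpa using inv_mem_conjCore hW hs) this

lemma inv_mul_mul_mem_conjCore_pow_add {a b a' b' : G} {n n' : ℕ}
    (h : b⁻¹ * a ∈ conjCore W ^ n) (h' : b'⁻¹ * a' ∈ conjCore W ^ n') :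
    (b * b')⁻¹ * (a * a') ∈ conjCore W ^ (n + n') := by
  have key : (b * b')⁻¹ * (a * a') = b'⁻¹ * (b⁻¹ * a) * b'⁻¹⁻¹ * (b'⁻¹ * a') := by group
  rw [key, pow_add]
  exact Set.mul_mem_mul (conj_mem_conjCore_pow h _) h'

lemma inv_mul_inv_mem_conjCore_pow (hW : W⁻¹ = W) {a b : G} {n : ℕ}
    (h : b⁻¹ * a ∈ conjCore W ^ n) : b⁻¹⁻¹ * a⁻¹ ∈ conjCore W ^ n := by
  have key : b⁻¹⁻¹ * a⁻¹ = a * (b⁻¹ * a)⁻¹ * a⁻¹ := by group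
  rw [key]
  exact conj_mem_conjCore_pow (inv_mem_conjCore_pow hW h) a

lemma inv_mul_pow_mem_conjCore_pow {a b : G} (h : b⁻¹ * a ∈ conjCore W) (n : ℕ) :
    (b ^ n)⁻¹ * a ^ n ∈ conjCore W ^ n := by
  induction n with
  | zero => simp
  | succ n ih =>
    rw [pow_succ b, pow_succ a]
    exact inv_mul_mul_mem_conjCore_pow_add ih (by rwa [pow_one])

lemma inv_mul_zpow_mem_conjCore_pow (hW : W⁻¹ = W) {a b : G} (h : b⁻¹ * a ∈ conjCore W)
    (m : ℤ) : (b ^ m)⁻¹ * a ^ m ∈ conjCore W ^ m.natAbs := by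
  cases m with
  | ofNat n => simpa using inv_mul_pow_mem_conjCore_pow h n
  | negSucc n =>
    simpa [zpow_negSucc] using
      inv_mul_inv_mem_conjCore_pow hW (inv_mul_pow_mem_conjCore_pow h (n + 1))

lemma inv_zpow_sum_mul_prod_ofFn_mem_conjCore_pow (hW : W⁻¹ = W) {k : ℕ} {c : G}
    {x : Fin k → G} (hx : ∀ i, c⁻¹ * x i ∈ conjCore W) (m : Fin k → ℤ) :
    (c ^ ∑ i, m i)⁻¹ * (List.ofFn fun i => x i ^ m i).prod ∈
      conjCore W ^ ∑ i, (m i).natAbs := by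
  induction k with
  | zero => simp
  | succ k ih =>
    rw [List.ofFn_succ, List.prod_cons, Fin.sum_univ_succ, Fin.sum_univ_succ, zpow_add]
    exact inv_mul_mul_mem_conjCore_pow_add (inv_mul_zpow_mem_conjCore_pow hW (hx 0) (m 0))
      (ih (fun i => hx i.succ) (fun i => m i.succ))

end Algebra

lemma Set.Infinite.exists_inter_smul_infinite {G : Type*} [Group G] {X S : Set G}
    {F : Finset G} (hF : (F : Set G) * S = Set.univ) (hX : X.Infinite) :
    ∃ c : G, (X ∩ c • S).Infinite := by
  by_contra! h
  refine hX ((F.finite_toSet.biUnion fun c _ => h c).subset fun y hy => ?_)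
  obtain ⟨c, hc, s, hs, rfl⟩ : y ∈ (F : Set G) * S := hF ▸ trivial
  exact Set.mem_biUnion hc ⟨hy, Set.smul_mem_smul_set hs⟩

section Topology

variable {G : Type*} [Group G] [TopologicalSpace G] [IsTopologicalGroup G]

lemma exists_nhds_one_pow_subset (n : ℕ) {U : Set G} (hU : U ∈ 𝓝 (1 : G)) :
    ∃ W ∈ 𝓝 (1 : G), W ^ n ⊆ U := by
  induction n generalizing U with
  | zero => exact ⟨U, hU, by simpa using mem_of_mem_nhds hU⟩
  | succ n ih =>
    obtain ⟨A, hAo, hA1, hAA⟩ := exists_open_nhds_one_mul_subset hU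
    obtain ⟨W, hW, hWA⟩ := ih (hAo.mem_nhds hA1)
    refine ⟨W ∩ A, Filter.inter_mem hW (hAo.mem_nhds hA1), ?_⟩
    rw [pow_succ]
    exact (Set.mul_subset_mul ((Set.pow_subset_pow_left Set.inter_subset_left).trans hWA)
      Set.inter_subset_right).trans hAA

lemma exists_nhds_one_inv_eq_pow_subset (n : ℕ) {U : Set G} (hU : U ∈ 𝓝 (1 : G)) :
    ∃ W ∈ 𝓝 (1 : G), W⁻¹ = W ∧ W ^ n ⊆ U := by
  obtain ⟨W, hW, hWU⟩ := exists_nhds_one_pow_subset n hU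
  refine ⟨W ∩ W⁻¹, Filter.inter_mem hW (inv_mem_nhds_one G hW), ?_,
    (Set.pow_subset_pow_left Set.inter_subset_left).trans hWU⟩
  rw [Set.inter_inv, inv_inv, Set.inter_comm]

/-- Total boundedness makes `G` a SIN group: writing `g⁻¹ = c * w` with `c` in a finite set,
conjugation by `g` is conjugation by one of finitely many `c`, followed by a small one. -/
lemma conjCore_mem_nhds_one
    (htb : ∀ U ∈ 𝓝 (1 : G), ∃ F : Finset G, (F : Set G) * U = Set.univ)
    {W : Set G} (hW : W ∈ 𝓝 (1 : G)) : conjCore W ∈ 𝓝 (1 : G) := by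
  obtain ⟨W₀, hW₀, hW₀inv, hW₀W⟩ := exists_nhds_one_inv_eq_pow_subset 3 hW
  obtain ⟨F, hF⟩ := htb W₀ hW₀
  have hconj : ∀ c : G, (fun y => c⁻¹ * y * c) ⁻¹' W₀ ∈ 𝓝 (1 : G) := fun c =>
    ((continuous_const.mul continuous_id).mul continuous_const).continuousAt.preimage_mem_nhds
      (by simpa using hW₀)
  refine Filter.mem_of_superset ((Filter.biInter_finset_mem F).2 fun c _ => hconj c) ?_
  intro v hv g
  obtain ⟨c, hc, w, hw, hcw⟩ : g⁻¹ ∈ (F : Set G) * W₀ := hF ▸ trivial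
  have key : g * v * g⁻¹ = w⁻¹ * (c⁻¹ * v * c) * w := by
    rw [← inv_inv g, ← hcw]; group
  rw [key]
  refine hW₀W ?_
  rw [pow_three']
  exact Set.mul_mem_mul (Set.mul_mem_mul (by rwa [← hW₀inv, Set.inv_mem_inv])
    (Set.mem_iInter₂.1 hv c hc)) hw

end Topology

/-- If `G` is a totally bounded topological group (for every neighbourhood `U` of
the identity there is a finite `F` with `G = F * U`), then every neighbourhood of
the identity is a Ramsey `m`-product subset for every integer vector `m` with
`m 0 + ⋯ + m (k-1) = 0`. -/
theorem nhds_one_ramseyProd_of_totallyBounded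
    {G : Type*} [Group G] [TopologicalSpace G] [IsTopologicalGroup G]
    (htb : ∀ U ∈ nhds (1 : G), ∃ F : Finset G, (F : Set G) * U = Set.univ) :
    ∀ U ∈ nhds (1 : G), ∀ (k : ℕ), 0 < k → ∀ m : Fin k → ℤ,
      (∑ i, m i) = 0 → IsRamseyProdSub m U := by
  intro U hU k _ m hm X hX
  obtain ⟨W, hW, hWinv, hWU⟩ := exists_nhds_one_inv_eq_pow_subset (∑ i, (m i).natAbs) hU
  obtain ⟨F, hF⟩ := htb _ (conjCore_mem_nhds_one htb hW)
  obtain ⟨c, hc⟩ := Set.Infinite.exists_inter_smul_infinite hF hX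
  let e : Fin k ↪ ↥(X ∩ c • conjCore W) := Fin.valEmbedding.trans hc.natEmbedding
  refine ⟨fun i => e i, fun i => (e i).2.1, Subtype.val_injective.comp e.injective,
    fun σ => hWU (Set.pow_subset_pow_left conjCore_subset ?_)⟩
  have hx : ∀ i, c⁻¹ * e (σ i) ∈ conjCore W := fun i =>
    Set.mem_smul_set_iff_inv_smul_mem.1 (e (σ i)).2.2
  simpa [hm] using inv_zpow_sum_mul_prod_ofFn_mem_conjCore_pow hWinv hx m
end

section
/- For every infinite group G, Sp_G^∧ = cl(G* G*); that is, an ultrafilter p on G satisfies G \ A ∈ p for every sparse subset A of G if and only if p lies in the closure, in beta G, of the set of all products q·r of two free ultrafilters q, r on G. -/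
open Pointwise

attribute [local instance] Ultrafilter.mul Ultrafilter.semigroup

open Filter Set

/-- An ultrafilter extending the cofinite filter is free. -/
lemma isFree_of_le_cofinite {G : Type*} {q : Ultrafilter G}
    (h : (q : Filter G) ≤ cofinite) : IsFreeUltra q := by
  intro A hA
  by_contra hfin
  rw [Set.not_infinite] at hfin
  have hc : Aᶜ ∈ (q : Filter G) := h (by simpa [Filter.mem_cofinite] using hfin)
  exact (Ultrafilter.compl_mem_iff_notMem.mp hc) hA

/-- Every infinite set belongs to some free ultrafilter. -/
lemma exists_free_ultra_mem {G : Type*} {s : Set G} (hs : s.Infinite) :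
    ∃ q : Ultrafilter G, IsFreeUltra q ∧ s ∈ q := by
  have h : (cofinite ⊓ 𝓟 s).NeBot := hs.cofinite_inf_principal_neBot
  refine ⟨Ultrafilter.of (cofinite ⊓ 𝓟 s), ?_, ?_⟩
  · exact isFree_of_le_cofinite ((Ultrafilter.of_le _).trans inf_le_left)
  · exact (Ultrafilter.of_le _) (mem_inf_of_right (mem_principal_self s))

lemma setOf_mul_mem_eq {G : Type*} [Group G] (A : Set G) (x : G) :
    {y : G | x * y ∈ A} = x⁻¹ • A := by
  ext y
  rw [Set.mem_smul_set_iff_inv_smul_mem, inv_inv, smul_eq_mul]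
  rfl

lemma mem_ultra_mul_iff {G : Type*} [Group G] (A : Set G) (q r : Ultrafilter G) :
    A ∈ q * r ↔ {x : G | x⁻¹ • A ∈ r} ∈ q := by
  have h := Ultrafilter.eventually_mul q r (· ∈ A)
  simp only [Filter.eventually_iff, Ultrafilter.mem_coe, Set.setOf_mem_eq] at h
  rw [show (A ∈ q * r) ↔ A ∈ ((q * r : Ultrafilter G) : Filter G) from Iff.rfl]
  rw [show A ∈ ((q * r : Ultrafilter G) : Filter G) ↔ _ from h]
  constructor <;> intro hh <;> (refine Filter.mem_of_superset hh ?_) <;>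
    intro x hx <;> simpa [setOf_mul_mem_eq A x] using hx

/-- For every infinite group `G`, `Sp_G^∧ = cl(G* G*)`: an ultrafilter `p` on `G`
contains the complement of every sparse set iff `p` lies in the closure (in `βG`,
the space of ultrafilters on `G`) of the set of products of two free ultrafilters. -/
theorem sparse_hat_eq_closure_prod_free
    {G : Type*} [Group G] [Infinite G] :
    {p : Ultrafilter G | ∀ A : Set G, IsSparseSub A → Aᶜ ∈ p} =
      closure {p : Ultrafilter G |
        ∃ q r : Ultrafilter G, IsFreeUltra q ∧ IsFreeUltra r ∧ p = q * r} := by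
  ext p
  simp only [Set.mem_setOf_eq]
  constructor
  · -- Sp^∧ ⊆ closure (G* G*)
    intro hp
    rw [mem_closure_iff]
    intro U hU hpU
    obtain ⟨V, hVb, hpV, hVU⟩ :=
      ultrafilterBasis_is_basis.exists_subset_of_mem_open hpU hU
    obtain ⟨A, rfl⟩ := hVb
    -- `A ∈ p`, so `A` is not sparse
    have hAp : A ∈ p := hpV
    have hns : ¬ IsSparseSub A := by
      intro h
      exact (Ultrafilter.compl_mem_iff_notMem.mp (hp A h)) hAp
    rw [IsSparseSub] at hns
    push_neg at hns
    obtain ⟨X, hXinf, hX⟩ := hns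
    -- hX : ∀ F : Finset G, ↑F ⊆ X → ¬(⋂ g ∈ F, g • A).Finite
    -- Build a free ultrafilter `r` containing `g • A` for all `g ∈ X`.
    set 𝒮 : Set (Set G) := (fun g : G => g • A) '' X with h𝒮
    have hne : (cofinite ⊓ Filter.generate 𝒮).NeBot := by
      rw [← forall_mem_nonempty_iff_neBot]
      intro s hs
      rw [Filter.mem_inf_iff] at hs
      obtain ⟨t1, ht1, t2, ht2, rfl⟩ := hs
      rw [Filter.mem_generate_iff] at ht2
      obtain ⟨t, htsub, htfin, htint⟩ := ht2
      obtain ⟨Y, hYX, hYfin, hYint⟩ :=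
        (Set.exists_subset_image_finite_and (f := fun g : G => g • A) (s := X)
          (p := fun t => ⋂₀ t ⊆ t2)).mp ⟨t, htsub, htfin, htint⟩
      have hinter : (⋂ g ∈ Y, (g : G) • A).Infinite := by
        have h2 : ¬(⋂ g ∈ hYfin.toFinset, (g : G) • A).Finite :=
          hX hYfin.toFinset (by rwa [Set.Finite.coe_toFinset])
        have he : (⋂ g ∈ Y, (g : G) • A) = ⋂ g ∈ hYfin.toFinset, (g : G) • A := by
          ext x
          simp [Set.Finite.mem_toFinset]
        rw [he]
        exact h2
      have hsub2 : ⋂ g ∈ Y, (g : G) • A ⊆ t2 := by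
        rwa [Set.sInter_image] at hYint
      have h1 : ((⋂ g ∈ Y, (g : G) • A) \ t1ᶜ).Infinite :=
        hinter.diff (by simpa [Filter.mem_cofinite] using ht1)
      refine h1.nonempty.mono ?_
      intro x hx
      exact ⟨by simpa using hx.2, hsub2 hx.1⟩
    let r : Ultrafilter G := @Ultrafilter.of _ _ hne
    have hrle : (r : Filter G) ≤ cofinite ⊓ Filter.generate 𝒮 := Ultrafilter.of_le _
    have hrfree : IsFreeUltra r := isFree_of_le_cofinite (hrle.trans inf_le_left)
    have hrmem : ∀ g ∈ X, g • A ∈ r := fun g hg =>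
      (hrle.trans inf_le_right) (Filter.mem_generate_of_mem (Set.mem_image_of_mem _ hg))
    -- a free ultrafilter `q` containing `X⁻¹`
    have hXinv : (Inv.inv '' X).Infinite :=
      hXinf.image (Set.injOn_of_injective inv_injective)
    obtain ⟨q, hqfree, hqmem⟩ := exists_free_ultra_mem hXinv
    have hqr : A ∈ q * r := by
      rw [mem_ultra_mul_iff]
      refine Filter.mem_of_superset hqmem ?_
      rintro x ⟨g, hg, rfl⟩
      simpa using hrmem g hg
    exact ⟨q * r, hVU hqr, q, r, hqfree, hrfree, rfl⟩
  · -- closure (G* G*) ⊆ Sp^∧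
    intro hcl A hA
    by_contra hAc
    have hAp : A ∈ p := by
      rcases p.mem_or_compl_mem A with h | h
      · exact h
      · exact absurd h hAc
    have hopen : IsOpen {u : Ultrafilter G | A ∈ u} := ultrafilter_isOpen_basic A
    rw [mem_closure_iff] at hcl
    obtain ⟨u, huA, q, r, hq, hr, rfl⟩ := hcl _ hopen hAp
    have hB : {x : G | x⁻¹ • A ∈ r} ∈ q := (mem_ultra_mul_iff A q r).mp huA
    have hBinf : ({x : G | x⁻¹ • A ∈ r}).Infinite := hq _ hB
    have hBinv : (Inv.inv '' {x : G | x⁻¹ • A ∈ r}).Infinite :=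
      hBinf.image (Set.injOn_of_injective inv_injective)
    obtain ⟨F, hFsub, hFfin⟩ := hA _ hBinv
    have hmem : (⋂ g ∈ F, (g : G) • A) ∈ (r : Filter G) := by
      rw [Filter.biInter_finset_mem]
      intro g hg
      obtain ⟨x, hx, rfl⟩ := hFsub hg
      simpa using hx
    exact absurd (hr _ hmem) (Set.not_infinite.mpr hFfin)
end

section
/- Let G be an infinite group and let I be a left translation invariant ideal in P_G which contains all finite subsets of G and satisfies I ≠ F_G. Then there exists a left translation invariant ideal J in P_G such that F_G ⊊ J ⊊ I and J is properly contained in the ideal Sp_G of sparse subsets of G. -/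
open Pointwise

/-- A family `I` of subsets of `G` is an ideal in `P_G`: `G ∉ I`, and `I` is closed
under finite unions and under taking subsets. -/
def IsIdealFam {G : Type*} (I : Set (Set G)) : Prop :=
  (Set.univ : Set G) ∉ I ∧
  (∀ A ∈ I, ∀ B ∈ I, A ∪ B ∈ I) ∧
  (∀ A ∈ I, ∀ C : Set G, C ⊆ A → C ∈ I)

/-- A family `I` of subsets of a group `G` is left translation invariant if
`gA ∈ I` for all `g ∈ G`, `A ∈ I`. -/
def IsLeftInvFam {G : Type*} [Group G] (I : Set (Set G)) : Prop :=
  ∀ g : G, ∀ A ∈ I, g • A ∈ I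

/-!
An infinite member of `I` contains a sequence `b` no term of which has the form
`b i * (b j)⁻¹ * b k` with smaller indices; its range is thin: `g • B ∩ B` is finite for `g ≠ 1`.
Split it into the even- and odd-indexed parts `B₁` and `B₂`, and let `J` be the ideal generated by
the finite sets and the left translates of `B₁`. Thinness makes every member of `J` sparse, while
`B₂` meets each translate of `B₁` in a finite set, so it is a sparse member of `I` outside `J`.
-/

theorem exists_seq_mem_notMem_image {α : Type*} [DecidableEq α] {A : Set α} (hA : A.Infinite)
    (T : Finset α → Finset α) :
    ∃ b : ℕ → α, ∀ n, b n ∈ A ∧ b n ∉ T ((Finset.range n).image b) := by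
  have hpick (s : Finset α) : ∃ x, x ∈ A \ T s := (hA.sdiff (T s).finite_toSet).nonempty
  choose pick hpick using hpick
  let F : ℕ → Finset α := fun n => Nat.rec ∅ (fun _ s => insert (pick s) s) n
  have hF (n : ℕ) : F n = (Finset.range n).image (fun m => pick (F m)) := by
    induction n with
    | zero => rfl
    | succ n ih => rw [Finset.range_add_one, Finset.image_insert, ← ih]
  exact ⟨fun n => pick (F n), fun n => hF n ▸ hpick (F n)⟩

section Group

variable {G : Type*} [Group G]

def IsThin (B : Set G) : Prop :=
  ∀ g : G, g ≠ 1 → (g • B ∩ B).Finite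

namespace IsThin

variable {B : Set G}

theorem mono {B' : Set G} (hB : IsThin B) (h : B' ⊆ B) : IsThin B' :=
  fun g hg => (hB g hg).subset (Set.inter_subset_inter (Set.smul_set_mono h) h)

theorem finite_smul_inter_smul (hB : IsThin B) {a b : G} (hab : a ≠ b) :
    (a • B ∩ b • B).Finite := by
  have h : a • B ∩ b • B = b • ((b⁻¹ * a) • B ∩ B) := by
    rw [Set.smul_set_inter, smul_smul, mul_inv_cancel_left]
  rw [h]
  exact (hB _ fun h => hab (inv_mul_eq_one.mp h).symm).smul_set

theorem finite_inter_smul_of_disjoint (hB : IsThin B) {B₁ B₂ : Set G} (h₁ : B₁ ⊆ B)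
    (h₂ : B₂ ⊆ B) (hd : Disjoint B₁ B₂) (g : G) : (B₂ ∩ g • B₁).Finite := by
  rcases eq_or_ne g 1 with rfl | hg
  · rw [one_smul, hd.symm.inter_eq]
    exact Set.finite_empty
  · rw [Set.inter_comm]
    exact (hB g hg).subset (Set.inter_subset_inter (Set.smul_set_mono h₁) h₂)

end IsThin

def IsTripleAvoiding (b : ℕ → G) : Prop :=
  ∀ ⦃n i j k : ℕ⦄, i < n → j < n → k < n → b n ≠ b i * (b j)⁻¹ * b k

theorem exists_isTripleAvoiding {A : Set G} (hA : A.Infinite) :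
    ∃ b : ℕ → G, Set.range b ⊆ A ∧ IsTripleAvoiding b := by
  classical
  obtain ⟨b, hb⟩ := exists_seq_mem_notMem_image hA fun s => s * s⁻¹ * s
  refine ⟨b, Set.range_subset_iff.2 fun n => (hb n).1, fun n i j k hi hj hk h => (hb n).2 ?_⟩
  have hmem {m : ℕ} (hm : m < n) : b m ∈ (Finset.range n).image b :=
    Finset.mem_image_of_mem b (Finset.mem_range.2 hm)
  rw [h]
  exact Finset.mul_mem_mul (Finset.mul_mem_mul (hmem hi) (Finset.inv_mem_inv (hmem hj))) (hmem hk)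

namespace IsTripleAvoiding

variable {b : ℕ → G}

theorem injective (hb : IsTripleAvoiding b) : Function.Injective b :=
  .of_lt_imp_ne fun m n h heq => hb h h h (by rw [mul_inv_cancel, one_mul, heq])

/-- Once `g = b i₀ * (b m₀)⁻¹` is fixed, any other solution of `b i = g * b m` expresses the
term of larger index through three earlier ones, so all solutions have indices `≤ max i₀ m₀`. -/
theorem isThin_range (hb : IsTripleAvoiding b) : IsThin (Set.range b) := by
  intro g hg
  rcases (g • Set.range b ∩ Set.range b).eq_empty_or_nonempty with
    h | ⟨_, ⟨_, ⟨m₀, rfl⟩, h₀⟩, i₀, rfl⟩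
  · rw [h]
    exact Set.finite_empty
  have hg₀ : g = b i₀ * (b m₀)⁻¹ := eq_mul_inv_of_mul_eq h₀
  refine ((Set.finite_Iic (max i₀ m₀)).image b).subset ?_
  rintro _ ⟨⟨_, ⟨m, rfl⟩, hm⟩, i, rfl⟩
  refine ⟨i, Set.mem_Iic.2 (not_lt.1 fun hi => ?_), rfl⟩
  change g * b m = b i at hm
  rcases lt_trichotomy m i with hmi | rfl | him
  · exact hb (i := i₀) (j := m₀) (by omega) (by omega) hmi (by rw [← hm, hg₀])
  · exact hg (mul_eq_right.1 hm)
  · refine hb (i := m₀) (j := i₀) (by omega) (by omega) him ?_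
    rw [eq_inv_mul_of_mul_eq hm, hg₀, mul_inv_rev, inv_inv]

end IsTripleAvoiding

/-- The ideal generated by the finite sets and the left translates of `B`. -/
def translateIdeal (B : Set G) : Set (Set G) :=
  {C | ∃ F : Finset G, (C \ ⋃ g ∈ F, (g : G) • B).Finite}

variable {B : Set G}

theorem finite_mem_translateIdeal {C : Set G} (hC : C.Finite) : C ∈ translateIdeal B :=
  ⟨∅, by simpa using hC⟩

theorem self_mem_translateIdeal : B ∈ translateIdeal B :=
  ⟨{1}, by simp⟩

theorem notMem_translateIdeal {D : Set G} (hD : D.Infinite) (hDB : ∀ g : G, (D ∩ g • B).Finite) :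
    D ∉ translateIdeal B := by
  rintro ⟨F, hF⟩
  have hinter : (D ∩ ⋃ g ∈ F, g • B).Finite := by
    rw [Set.inter_iUnion₂]
    exact F.finite_toSet.biUnion fun g _ => hDB g
  exact hD (Set.sdiff_union_inter D _ ▸ hF.union hinter)

theorem isIdealFam_translateIdeal {D : Set G} (hD : D ∉ translateIdeal B) :
    IsIdealFam (translateIdeal B) := by
  classical
  refine ⟨?_, ?_, ?_⟩
  · rintro ⟨F, hF⟩
    exact hD ⟨F, hF.subset (Set.sdiff_subset_sdiff_left (Set.subset_univ D))⟩
  · rintro C₁ ⟨F₁, h₁⟩ C₂ ⟨F₂, h₂⟩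
    refine ⟨F₁ ∪ F₂, (h₁.union h₂).subset ?_⟩
    rw [Set.union_sdiff_distrib]
    exact Set.union_subset_union
      (Set.sdiff_subset_sdiff_right (Set.biUnion_mono (by simp) fun _ _ => le_rfl))
      (Set.sdiff_subset_sdiff_right (Set.biUnion_mono (by simp) fun _ _ => le_rfl))
  · rintro C ⟨F, hF⟩ C' hC'
    exact ⟨F, hF.subset (Set.sdiff_subset_sdiff_left hC')⟩

theorem isLeftInvFam_translateIdeal : IsLeftInvFam (translateIdeal B) := by
  classical
  rintro a C ⟨F, hF⟩
  refine ⟨F.image (a * ·), ?_⟩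
  have htrans : a • ⋃ g ∈ F, g • B = ⋃ g ∈ F.image (a * ·), g • B := by
    simp only [Set.smul_set_iUnion₂, smul_smul, Finset.set_biUnion_finset_image]
  rw [← htrans, ← Set.smul_set_sdiff]
  exact hF.smul_set

theorem translateIdeal_subset {I : Set (Set G)} (hI : IsIdealFam I) (hInv : IsLeftInvFam I)
    (hFin : {A : Set G | A.Finite} ⊆ I) (hB : B ∈ I) : translateIdeal B ⊆ I := by
  classical
  have hunion (F : Finset G) : ⋃ g ∈ F, g • B ∈ I := by
    induction F using Finset.induction_on with
    | empty => exact hFin (by simp)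
    | insert a F _ ih =>
      rw [Finset.set_biUnion_insert]
      exact hI.2.1 _ (hInv a B hB) _ ih
  rintro C ⟨F, hF⟩
  exact hI.2.2 _ (hI.2.1 _ (hFin hF) _ (hunion F)) C (Set.subset_sdiff_union C _)

/-- For a thin `B` and `C ⊆ F • B ∪ E`, any `#F + 1` translates of `C` meet only in the finite set
`⋃ x • E` or, by pigeonhole, in the intersection of two distinct translates `(x * g) • B`. -/
theorem IsThin.translateIdeal_subset_sparse (hB : IsThin B) :
    translateIdeal B ⊆ {A : Set G | IsSparseSub A} := by
  classical
  rintro C ⟨F, hE⟩ X hX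
  obtain ⟨F', hF'X, hcard⟩ := hX.exists_subset_card_eq (F.card + 1)
  refine ⟨F', hF'X, ?_⟩
  set E := C \ ⋃ g ∈ F, g • B
  have hpairs : (⋃ p ∈ F'.offDiag ×ˢ F, (p.1.1 * p.2) • B ∩ (p.1.2 * p.2) • B).Finite := by
    refine Set.Finite.biUnion (Finset.finite_toSet _) fun p hp => hB.finite_smul_inter_smul ?_
    simp only [Finset.coe_product, Set.mem_prod, Finset.coe_offDiag, Set.mem_offDiag] at hp
    exact fun h => hp.1.2.2 (mul_right_cancel h)
  refine ((F'.finite_toSet.biUnion fun x _ => hE.smul_set (a := x)).union hpairs).subset ?_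
  intro y hy
  by_cases hyE : ∃ x ∈ F', y ∈ x • E
  · obtain ⟨x, hx, h⟩ := hyE
    exact Or.inl (Set.mem_biUnion hx h)
  push Not at hyE
  have hcover (x : G) (hx : x ∈ F') : ∃ g ∈ F, y ∈ (x * g) • B := by
    have hyC : x⁻¹ • y ∈ C := Set.mem_smul_set_iff_inv_smul_mem.1 (Set.mem_iInter₂.1 hy x hx)
    have hyU : x⁻¹ • y ∈ ⋃ g ∈ F, g • B :=
      by_contra fun h => hyE x hx (Set.mem_smul_set_iff_inv_smul_mem.2 ⟨hyC, h⟩)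
    obtain ⟨g, hg, hyg⟩ := Set.mem_iUnion₂.1 hyU
    exact ⟨g, hg, by rw [mul_smul]; exact Set.mem_smul_set_iff_inv_smul_mem.2 hyg⟩
  choose! c hcF hyc using hcover
  obtain ⟨x, hx, x', hx', hxx', hc⟩ :=
    Finset.exists_ne_map_eq_of_card_lt_of_maps_to (by omega) hcF
  refine Or.inr (Set.mem_biUnion (x := ((x, x'), c x)) ?_ ⟨hyc x hx, hc ▸ hyc x' hx'⟩)
  simp [hx, hx', hxx', hcF x hx]

end Group

theorem exists_leftInv_ideal_between_general
    {G : Type*} [Group G] (I : Set (Set G))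
    (hI : IsIdealFam I) (hInv : IsLeftInvFam I)
    (hFin : {A : Set G | A.Finite} ⊆ I) (hne : I ≠ {A : Set G | A.Finite}) :
    ∃ J : Set (Set G), IsIdealFam J ∧ IsLeftInvFam J ∧
      {A : Set G | A.Finite} ⊂ J ∧ J ⊂ I ∧ J ⊂ {A : Set G | IsSparseSub A} := by
  obtain ⟨A, hAI, hA⟩ : ∃ A ∈ I, A.Infinite := by
    by_contra! h
    exact hne (Set.Subset.antisymm (fun A hA => h A hA) hFin)
  obtain ⟨b, hbA, hb⟩ := exists_isTripleAvoiding hA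
  set B₁ := Set.range (b ∘ (2 * ·))
  set B₂ := Set.range (b ∘ (2 * · + 1))
  have h₁ : B₁ ⊆ Set.range b := Set.range_comp_subset_range _ _
  have h₂ : B₂ ⊆ Set.range b := Set.range_comp_subset_range _ _
  have hd : Disjoint B₁ B₂ := Set.disjoint_range_iff.2 fun m n h => by
    have : 2 * m = 2 * n + 1 := hb.injective h
    omega
  have hB₁ : B₁.Infinite :=
    Set.infinite_range_of_injective (hb.injective.comp fun m n (h : 2 * m = 2 * n) => by omega)
  have hB₂ : B₂.Infinite := Set.infinite_range_of_injective
    (hb.injective.comp fun m n (h : 2 * m + 1 = 2 * n + 1) => by omega)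
  have hB₂J : B₂ ∉ translateIdeal B₁ :=
    notMem_translateIdeal hB₂ (hb.isThin_range.finite_inter_smul_of_disjoint h₁ h₂ hd)
  have hB₂I : B₂ ∈ I := hI.2.2 A hAI B₂ (h₂.trans hbA)
  have hB₂sparse : IsSparseSub B₂ :=
    (hb.isThin_range.mono h₂).translateIdeal_subset_sparse self_mem_translateIdeal
  refine ⟨translateIdeal B₁, isIdealFam_translateIdeal hB₂J, isLeftInvFam_translateIdeal, ?_, ?_, ?_⟩
  · exact (Set.ssubset_iff_of_subset fun _ => finite_mem_translateIdeal).2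
      ⟨B₁, self_mem_translateIdeal, hB₁⟩
  · exact (Set.ssubset_iff_of_subset (translateIdeal_subset hI hInv hFin
      (hI.2.2 A hAI B₁ (h₁.trans hbA)))).2 ⟨B₂, hB₂I, hB₂J⟩
  · exact (Set.ssubset_iff_of_subset (hb.isThin_range.mono h₁).translateIdeal_subset_sparse).2
      ⟨B₂, hB₂sparse, hB₂J⟩

/-- If `I` is a left translation invariant ideal in `P_G` containing all finite
sets with `I ≠ F_G`, then there is a left translation invariant ideal `J` with
`F_G ⊊ J ⊊ I` and `J` properly contained in the ideal of sparse subsets. -/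
theorem exists_leftInv_ideal_between
    {G : Type*} [Group G] [Infinite G] (I : Set (Set G))
    (hI : IsIdealFam I) (hInv : IsLeftInvFam I)
    (hFin : {A : Set G | A.Finite} ⊆ I) (hne : I ≠ {A : Set G | A.Finite}) :
    ∃ J : Set (Set G), IsIdealFam J ∧ IsLeftInvFam J ∧
      {A : Set G | A.Finite} ⊂ J ∧ J ⊂ I ∧ J ⊂ {A : Set G | IsSparseSub A} :=
  exists_leftInv_ideal_between_general I hI hInv hFin hne
end

section
/- For every infinite group G, the ideal FT_G of finitely thin subsets is properly contained in the ideal Sp_G of sparse subsets: every subset of G that is n-thin for some positive natural number n is sparse, and G contains a sparse subset that is not n-thin for any n. -/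
/-!
An `n`-thin set is sparse: any `n + 1` distinct elements of an infinite `X` already have a finite
common intersection of translates.

For the other half, choose greedily a sequence `u` in `G` none of whose terms is a product of at
most seven earlier terms and their inverses, split its indices into blocks `Nat.pair n j`, and let
`A` consist of the quotients `c⁻¹ x` of a centre `c = u (pair n i)`, `i ≤ n`, and a point
`x = u (pair n j)`, `n < j`, of the same block. The `n + 1` centres of block `n` translate `A` onto
all points of that block, so `A` is not `n`-thin. On the other hand, by freeness of `u`, all but
finitely many `y ∈ g • A ∩ h • A` use the same point in both representations, so `g⁻¹ h` is a
quotient of two centres of one block, and `g⁻¹ h ≠ 1` determines that block. Hence for `g ≠ h` in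
an infinite `X`, either `g • A ∩ h • A` is finite, or it becomes finite after intersecting with
`k • A` for any `k ∈ X` such that `g⁻¹ k` avoids the finitely many centre quotients of that block.
-/

open Pointwise

section

open Set Function

theorem IsNThinSub.isSparseSub {G : Type*} [Group G] {n : ℕ} {A : Set G} (hA : IsNThinSub n A) :
    IsSparseSub A := by
  classical
  intro X hX
  let g : Fin (n + 1) → G := fun i => hX.natEmbedding X i
  have hg : Injective g :=
    Subtype.val_injective.comp ((hX.natEmbedding X).injective.comp Fin.val_injective)
  refine ⟨Finset.univ.image g, ?_, ?_⟩
  · simpa [g] using range_subset_iff.2 fun i : Fin (n + 1) => (hX.natEmbedding X i).2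
  · simpa [Finset.set_biInter_finset_image] using hA g hg

theorem Set.Finite.pow {M : Type*} [Monoid M] {s : Set M} (hs : s.Finite) (n : ℕ) :
    (s ^ n).Finite := by
  induction n with
  | zero => simp
  | succ n ih => rw [pow_succ]; exact ih.mul hs

section Greedy

variable {α : Type*} [Infinite α] (F : Set α → Set α) (hF : ∀ s, s.Finite → (F s).Finite)

noncomputable def greedySeq : ℕ → α
  | t => (hF _ (finite_range fun s : Iio t => greedySeq s)).infinite_compl.nonempty.choose
  decreasing_by exact s.2

theorem greedySeq_notMem (t : ℕ) : greedySeq F hF t ∉ F (greedySeq F hF '' Iio t) := by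
  rw [greedySeq, image_eq_range]
  exact (hF _ (finite_range _)).infinite_compl.nonempty.choose_spec

end Greedy

variable {G : Type*} [Group G]

def symmBall (s : Set G) : Set G := insert 1 (s ∪ s⁻¹)

theorem Set.Finite.symmBall {s : Set G} (hs : s.Finite) : (symmBall s).Finite :=
  (hs.union hs.inv).insert 1

/-- Seven factors is what `AvoidsShortWords.finite_mixedReps` needs. -/
def AvoidsShortWords (u : ℕ → G) : Prop := ∀ t, u t ∉ symmBall (u '' Iio t) ^ 7

theorem exists_avoidsShortWords [Infinite G] : ∃ u : ℕ → G, AvoidsShortWords u :=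
  ⟨greedySeq _ fun _ hs => hs.symmBall.pow 7, greedySeq_notMem _ _⟩

namespace AvoidsShortWords

variable {u : ℕ → G} (hu : AvoidsShortWords u) {t : ℕ}

theorem one_mem_symmBall : (1 : G) ∈ symmBall (u '' Iio t) := mem_insert _ _

theorem mem_symmBall {s : ℕ} (h : s < t) : u s ∈ symmBall (u '' Iio t) :=
  mem_insert_of_mem _ (Or.inl (mem_image_of_mem u h))

theorem inv_mem_symmBall {s : ℕ} (h : s < t) : (u s)⁻¹ ∈ symmBall (u '' Iio t) :=
  mem_insert_of_mem _ (Or.inr (inv_mem_inv.2 (mem_image_of_mem u h)))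

include hu

theorem ne_mul₇ {p₁ p₂ p₃ p₄ p₅ p₆ p₇ : G} (h₁ : p₁ ∈ symmBall (u '' Iio t))
    (h₂ : p₂ ∈ symmBall (u '' Iio t)) (h₃ : p₃ ∈ symmBall (u '' Iio t))
    (h₄ : p₄ ∈ symmBall (u '' Iio t)) (h₅ : p₅ ∈ symmBall (u '' Iio t))
    (h₆ : p₆ ∈ symmBall (u '' Iio t)) (h₇ : p₇ ∈ symmBall (u '' Iio t)) :
    u t ≠ p₁ * p₂ * p₃ * p₄ * p₅ * p₆ * p₇ := by
  intro h
  apply hu t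
  simp only [h, pow_succ, pow_zero, one_mul]
  repeat apply mul_mem_mul
  all_goals assumption

theorem ne_mul₃ {p₁ p₂ p₃ : G} (h₁ : p₁ ∈ symmBall (u '' Iio t))
    (h₂ : p₂ ∈ symmBall (u '' Iio t)) (h₃ : p₃ ∈ symmBall (u '' Iio t)) :
    u t ≠ p₁ * p₂ * p₃ := by
  simpa using hu.ne_mul₇ h₁ h₂ h₃ one_mem_symmBall one_mem_symmBall one_mem_symmBall
    one_mem_symmBall

theorem injective : Injective u := by
  intro a b hab
  by_contra hne
  wlog h : a < b generalizing a b
  · exact this hab.symm (Ne.symm hne) (by omega)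
  exact hu.ne_mul₃ (mem_symmBall h) one_mem_symmBall one_mem_symmBall (by simp [hab])

theorem inv_mul_ne_inv_mul_of_lt {a b c d : ℕ} (ha : a < b) (hc : c < b) (hd : d < b) :
    (u a)⁻¹ * u b ≠ (u c)⁻¹ * u d := fun h =>
  hu.ne_mul₃ (mem_symmBall ha) (inv_mem_symmBall hc) (mem_symmBall hd)
    (by rw [mul_assoc, ← h, mul_inv_cancel_left])

theorem inv_mul_ne_inv_mul {a b c d : ℕ} (hab : a ≠ b) (hcd : c ≠ d) (hac : a ≠ c) (had : a ≠ d)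
    (hbc : b ≠ c) (hbd : b ≠ d) : (u a)⁻¹ * u b ≠ (u c)⁻¹ * u d := by
  have inv_eq {x y : ℕ} : ((u x)⁻¹ * u y)⁻¹ = (u y)⁻¹ * u x := by group
  intro h
  rcases (by omega : (a < b ∧ c < b ∧ d < b) ∨ (b < a ∧ d < a ∧ c < a) ∨
      (c < d ∧ a < d ∧ b < d) ∨ (d < c ∧ b < c ∧ a < c)) with
    ⟨h₁, h₂, h₃⟩ | ⟨h₁, h₂, h₃⟩ | ⟨h₁, h₂, h₃⟩ | ⟨h₁, h₂, h₃⟩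
  · exact hu.inv_mul_ne_inv_mul_of_lt h₁ h₂ h₃ h
  · exact hu.inv_mul_ne_inv_mul_of_lt h₁ h₂ h₃ (by rw [← inv_eq, h, inv_eq])
  · exact hu.inv_mul_ne_inv_mul_of_lt h₁ h₂ h₃ h.symm
  · exact hu.inv_mul_ne_inv_mul_of_lt h₁ h₂ h₃ (by rw [← inv_eq, ← h, inv_eq])

theorem inv_mul_mul_inv_mul_ne_of_lt {a b a' b' a₀ b₀ a₀' b₀' : ℕ} (ha : a < b) (hb' : b' < b)
    (ha' : a' < b') (ha₀ : a₀ < b) (hb₀ : b₀ < b) (ha₀' : a₀' < b) (hb₀' : b₀' < b) :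
    (u a)⁻¹ * u b * (u b')⁻¹ * u a' ≠ (u a₀)⁻¹ * u b₀ * (u b₀')⁻¹ * u a₀' := by
  intro h
  refine hu.ne_mul₇ (mem_symmBall ha) (inv_mem_symmBall ha₀) (mem_symmBall hb₀)
    (inv_mem_symmBall hb₀') (mem_symmBall ha₀') (inv_mem_symmBall (ha'.trans hb'))
    (mem_symmBall hb') ?_
  have hb : u b = u a * ((u a)⁻¹ * u b * (u b')⁻¹ * u a') * (u a')⁻¹ * u b' := by group
  rw [hb, h]
  group

end AvoidsShortWords

/-- `r` encodes `d = x * x'⁻¹` for `x = (u r.1.1)⁻¹ * u r.1.2` and `x' = (u r.2.1)⁻¹ * u r.2.2`. -/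
def mixedReps (u : ℕ → G) (d : G) : Set ((ℕ × ℕ) × (ℕ × ℕ)) :=
  {r | r.1.1 < r.1.2 ∧ r.2.1 < r.2.2 ∧ r.1.2 ≠ r.2.2 ∧
    (u r.1.1)⁻¹ * u r.1.2 * (u r.2.2)⁻¹ * u r.2.1 = d}

theorem AvoidsShortWords.finite_mixedReps {u : ℕ → G} (hu : AvoidsShortWords u) (d : G) :
    (mixedReps u d).Finite := by
  rcases (mixedReps u d).eq_empty_or_nonempty with h | ⟨⟨⟨a₀, b₀⟩, a₀', b₀'⟩, ha₀, ha₀', -, h₀⟩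
  · simp [h]
  set M := max b₀ b₀'
  have bounded : ∀ r ∈ mixedReps u d, r.1.2 ≤ M ∧ r.2.2 ≤ M := by
    rintro ⟨⟨a, b⟩, a', b'⟩ ⟨ha, ha', hbb', h⟩
    dsimp only at *
    by_contra! hM
    rcases hbb'.lt_or_gt with hlt | hlt
    · have inv_eq (a b b' a' : ℕ) :
          ((u a)⁻¹ * u b * (u b')⁻¹ * u a')⁻¹ = (u a')⁻¹ * u b' * (u b)⁻¹ * u a := by group
      exact hu.inv_mul_mul_inv_mul_ne_of_lt (a₀ := a₀') (b₀ := b₀') (b₀' := b₀) (a₀' := a₀)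
        ha' hlt ha (by omega) (by omega) (by omega) (by omega)
        (by simpa only [inv_eq] using congrArg (·⁻¹) (h.trans h₀.symm))
    · exact hu.inv_mul_mul_inv_mul_ne_of_lt ha hlt ha' (by omega) (by omega) (by omega) (by omega)
        (h.trans h₀.symm)
  have hIic := finite_Iic M
  refine ((hIic.prod hIic).prod (hIic.prod hIic)).subset fun r hr => ?_
  have := bounded r hr
  obtain ⟨h₁, h₂, -⟩ := hr
  simp only [mem_prod, mem_Iic]
  omega

/-- Block `n` of `u` consists of the terms `u (Nat.pair n j)`: its centres for `j ≤ n` and its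
points for `n < j`. -/
def blockSet (u : ℕ → G) : Set G :=
  {a | ∃ n i j, i ≤ n ∧ n < j ∧ (u (Nat.pair n i))⁻¹ * u (Nat.pair n j) = a}

def blockDiffs (u : ℕ → G) (n : ℕ) : Set G :=
  (fun ij : ℕ × ℕ => (u (Nat.pair n ij.1))⁻¹ * u (Nat.pair n ij.2)) '' Iic n ×ˢ Iic n

theorem finite_blockDiffs (u : ℕ → G) (n : ℕ) : (blockDiffs u n).Finite :=
  ((finite_Iic n).prod (finite_Iic n)).image _

theorem inv_mul_mem_blockDiffs {g h y : G} {n i j : ℕ} (hi : i ≤ n) (hj : n < j)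
    (hyg : y = g * ((u (Nat.pair n i))⁻¹ * u (Nat.pair n j))) (hyh : y ∈ h • blockSet u)
    (hy : y ∉ (fun r => g * ((u r.1.1)⁻¹ * u r.1.2)) '' mixedReps u (g⁻¹ * h)) :
    g⁻¹ * h ∈ blockDiffs u n := by
  obtain ⟨_, ⟨m, i', j', hi', hj', rfl⟩, hyh⟩ := mem_smul_set.1 hyh
  have hd : g⁻¹ * h = (u (Nat.pair n i))⁻¹ * u (Nat.pair n j) * (u (Nat.pair m j'))⁻¹ *
      u (Nat.pair m i') := by
    rw [smul_eq_mul, hyg] at hyh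
    calc g⁻¹ * h = g⁻¹ * (h * ((u (Nat.pair m i'))⁻¹ * u (Nat.pair m j'))) *
          ((u (Nat.pair m j'))⁻¹ * u (Nat.pair m i')) := by group
      _ = _ := by rw [hyh]; group
  by_cases hpt : Nat.pair n j = Nat.pair m j'
  · obtain ⟨rfl, rfl⟩ := Nat.pair_eq_pair.1 hpt
    exact ⟨(i, i'), ⟨hi, hi'⟩, by rw [hd]; group⟩
  · exact absurd ⟨((_, _), (_, _)), ⟨Nat.pair_lt_pair_right n (by omega),
      Nat.pair_lt_pair_right m (by omega), hpt, hd.symm⟩, hyg.symm⟩ hy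

namespace AvoidsShortWords

variable {u : ℕ → G} (hu : AvoidsShortWords u)
include hu

theorem not_isNThinSub_blockSet (n : ℕ) : ¬ IsNThinSub n (blockSet u) := by
  intro hthin
  let centre : Fin (n + 1) → G := fun i => u (Nat.pair n i)
  have hcentre : Injective centre := fun i i' h =>
    Fin.ext (Nat.pair_eq_pair.1 (hu.injective h)).2
  have hpoints : (range fun k => u (Nat.pair n (n + 1 + k))).Infinite :=
    infinite_range_of_injective fun k k' h => by
      have := (Nat.pair_eq_pair.1 (hu.injective h)).2
      omega
  refine hpoints ((hthin centre hcentre).subset ?_)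
  rintro _ ⟨k, rfl⟩
  refine mem_iInter.2 fun i => mem_smul_set.2 ⟨_, ⟨n, i, n + 1 + k, i.is_le, by omega, rfl⟩, ?_⟩
  simp [centre]

theorem eq_of_mem_blockDiffs {d : G} {n m : ℕ} (hn : d ∈ blockDiffs u n)
    (hm : d ∈ blockDiffs u m) (hd : d ≠ 1) : n = m := by
  obtain ⟨⟨i, i'⟩, -, rfl⟩ := hn
  obtain ⟨⟨k, k'⟩, -, h⟩ := hm
  by_contra hnm
  have pair_ne {i k : ℕ} : Nat.pair n i ≠ Nat.pair m k := fun h => hnm (Nat.pair_eq_pair.1 h).1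
  refine hu.inv_mul_ne_inv_mul ?_ ?_ pair_ne pair_ne pair_ne pair_ne h.symm
  · exact fun h => hd (by simp [h])
  · rintro h'
    exact hd (by simp [← h, h'])

theorem exists_mem_blockDiffs_of_infinite {g h k : G}
    (hinf : (g • blockSet u ∩ (h • blockSet u ∩ k • blockSet u)).Infinite) :
    ∃ n, g⁻¹ * h ∈ blockDiffs u n ∧ g⁻¹ * k ∈ blockDiffs u n := by
  let bad (d : G) := (fun r => g * ((u r.1.1)⁻¹ * u r.1.2)) '' mixedReps u d
  have hbad (d : G) : (bad d).Finite := (hu.finite_mixedReps d).image _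
  obtain ⟨y, ⟨hyg, hyh, hyk⟩, hy⟩ :=
    (hinf.sdiff ((hbad (g⁻¹ * h)).union (hbad (g⁻¹ * k)))).nonempty
  obtain ⟨_, ⟨n, i, j, hi, hj, rfl⟩, hyg⟩ := mem_smul_set.1 hyg
  rw [mem_union, not_or] at hy
  exact ⟨n, inv_mul_mem_blockDiffs hi hj hyg.symm hyh hy.1,
    inv_mul_mem_blockDiffs hi hj hyg.symm hyk hy.2⟩

theorem isSparseSub_blockSet : IsSparseSub (blockSet u) := by
  classical
  intro X hX
  obtain ⟨g, hg, h, hh, hgh⟩ := hX.nontrivial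
  have hd : g⁻¹ * h ≠ 1 := by rwa [Ne, inv_mul_eq_one]
  by_cases hfin : (g • blockSet u ∩ h • blockSet u).Finite
  · refine ⟨{g, h}, by simp [insert_subset_iff, hg, hh], by simpa using hfin⟩
  obtain ⟨n, hn, -⟩ := hu.exists_mem_blockDiffs_of_infinite (g := g) (h := h) (k := h)
    (by rwa [inter_self])
  obtain ⟨k, hk, hkn⟩ := hX.exists_notMem_finite ((finite_blockDiffs u n).image (g * ·))
  refine ⟨{g, h, k}, by simp [insert_subset_iff, hg, hh, hk], ?_⟩
  simp only [Finset.set_biInter_insert, Finset.set_biInter_singleton]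
  by_contra hinf
  obtain ⟨m, hm, hkm⟩ := hu.exists_mem_blockDiffs_of_infinite hinf
  obtain rfl := hu.eq_of_mem_blockDiffs hn hm hd
  exact hkn ⟨_, hkm, mul_inv_cancel_left g k⟩

end AvoidsShortWords

end

/-- For every infinite group `G`, the ideal `FT_G` of finitely thin subsets is
properly contained in the ideal `Sp_G` of sparse subsets: every subset that is
`n`-thin for some `0 < n` is sparse, and there is a sparse subset that is not
`n`-thin for any `0 < n`. -/
theorem finitelyThin_ssubset_sparse {G : Type*} [Group G] [Infinite G] :
    (∀ A : Set G, (∃ n : ℕ, 0 < n ∧ IsNThinSub n A) → IsSparseSub A) ∧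
    (∃ A : Set G, IsSparseSub A ∧ ∀ n : ℕ, 0 < n → ¬ IsNThinSub n A) := by
  obtain ⟨u, hu⟩ := exists_avoidsShortWords (G := G)
  exact ⟨fun A ⟨_, _, hA⟩ => hA.isSparseSub,
    ⟨blockSet u, hu.isSparseSub_blockSet, fun n _ => hu.not_isNThinSub_blockSet n⟩⟩
end

section
/- For every infinite group G: (i) the family BR_G of all subsets of G with bounded rectangles is a translation invariant ideal in P_G; (ii) BR_G is properly contained in the family FT_G of finitely thin subsets of G. -/
open Pointwise

/-- A family `I` of subsets of a group `G` is (two-sided) translation invariant if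
`gA ∈ I` and `Ag ∈ I` for all `g ∈ G`, `A ∈ I`. -/
def IsTransInvFam {G : Type*} [Group G] (I : Set (Set G)) : Prop :=
  ∀ g : G, ∀ A ∈ I, ((fun a => g * a) '' A ∈ I ∧ (fun a => a * g) '' A ∈ I)

/-- A subset `A` of a group `G` has bounded rectangles if there is `0 < n` such
that `A` contains no `(n,n)`-rectangle `X * Y` with `|X| = |Y| = n`. -/
def HasBoundedRectangles {G : Type*} [Group G] (A : Set G) : Prop :=
  ∃ n : ℕ, 0 < n ∧ ∀ X Y : Finset G, X.card = n → Y.card = n →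
    ¬ ((X : Set G) * (Y : Set G) ⊆ A)

/-- A subset of a group is finitely thin if it is `n`-thin for some `0 < n`. -/
def IsFinitelyThinSub {G : Type*} [Group G] (A : Set G) : Prop :=
  ∃ n : ℕ, 0 < n ∧ IsNThinSub n A

lemma greedyAux {H : Type*} [Infinite H] (R : H → H → Prop) (U : Set H) (hU : U.Finite)
    (hR : ∀ y : H, {z : H | R z y ∨ R y z}.Finite) (k : ℕ) :
    ∃ Y : Finset H, Y.card = k ∧ (∀ y ∈ Y, y ∉ U) ∧
      ∀ y ∈ Y, ∀ y' ∈ Y, y ≠ y' → ¬ R y y' := by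
  classical
  induction k with
  | zero => exact ⟨∅, by simp⟩
  | succ k ih =>
    obtain ⟨Y, hcard, hUY, hRY⟩ := ih
    have hbad : (U ∪ ↑Y ∪ ⋃ y' ∈ (Y : Set H), {z : H | R z y' ∨ R y' z}).Finite := by
      refine ((hU.union Y.finite_toSet).union ?_)
      exact Set.Finite.biUnion Y.finite_toSet fun y' _ => hR y'
    obtain ⟨z, hz⟩ := hbad.infinite_compl.nonempty
    simp only [Set.mem_compl_iff, Set.mem_union, Set.mem_iUnion, not_or, not_exists] at hz
    obtain ⟨⟨hzU, hzY⟩, hziU⟩ := hz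
    refine ⟨insert z Y, ?_, ?_, ?_⟩
    · rw [Finset.card_insert_of_notMem (by exact_mod_cast hzY), hcard]
    · intro y hy
      rcases Finset.mem_insert.mp hy with rfl | hy
      · exact hzU
      · exact hUY y hy
    · intro y hy y' hy' hne
      rcases Finset.mem_insert.mp hy with h1 | h1 <;>
        rcases Finset.mem_insert.mp hy' with h2 | h2
      · exact absurd (h1.trans h2.symm) hne
      · subst h1
        have := hziU y' h2
        simp only [Set.mem_setOf_eq, not_or] at this
        exact fun h => this.1 h
      · subst h2
        have := hziU y h1
        simp only [Set.mem_setOf_eq, not_or] at this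
        exact fun h => this.2 h
      · exact hRY y h1 y' h2 hne

lemma stepLemma {H : Type*} [Group H] [Infinite H] [DecidableEq H]
    (S P : Finset H) (hS : (1 : H) ∉ S) (k : ℕ) :
    ∃ X Y : Finset H, X.card = k ∧ Y.card = k ∧
      ∀ a ∈ X * Y, ∀ b, (b ∈ X * Y ∨ b ∈ P) → a ≠ b →
        a * b⁻¹ ∉ S ∧ b * a⁻¹ ∉ S := by
  classical
  set S' : Finset H := S ∪ S⁻¹ with hS'def
  have hS'1 : (1 : H) ∉ S' := by
    simp only [hS'def, Finset.mem_union, Finset.mem_inv, not_or]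
    refine ⟨hS, ?_⟩
    rintro ⟨s, hs, hs1⟩
    exact hS (by rwa [show s = 1 from by simpa using hs1] at hs)
  have hS'symm : ∀ x : H, x ∈ S' → x⁻¹ ∈ S' := by
    intro x hx
    simp only [hS'def, Finset.mem_union, Finset.mem_inv] at hx ⊢
    rcases hx with hx | ⟨s, hs, rfl⟩
    · exact Or.inr ⟨x, hx, rfl⟩
    · simpa using Or.inl hs
  -- choose X
  obtain ⟨X, hXcard, -, hXprop⟩ := greedyAux (fun x x' : H => x * x'⁻¹ ∈ S') ∅
    Set.finite_empty (fun x' => by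
      apply Set.Finite.subset (Set.Finite.union
        ((S' : Set H).toFinite.image (· * x')) ((S' : Set H).toFinite.image (·⁻¹ * x')))
      rintro z (hz | hz)
      · exact Or.inl ⟨z * x'⁻¹, hz, by group⟩
      · -- x' * z⁻¹ ∈ S' ; z = (x' * z⁻¹)⁻¹ * x'
        exact Or.inr ⟨x' * z⁻¹, hz, by group⟩) k
  -- choose Y
  obtain ⟨Y, hYcard, hYU, hYprop⟩ := greedyAux
    (fun y y' : H => ∃ x ∈ X, ∃ x' ∈ X, x * y * (x' * y')⁻¹ ∈ S')
    {y : H | ∃ x ∈ X, ∃ p ∈ P, x * y * p⁻¹ ∈ S' ∨ p * (x * y)⁻¹ ∈ S'}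
    (by
      apply Set.Finite.subset (Set.finite_range
        (fun t : (↥(X : Set H) × ↥(S' : Set H) × ↥(P : Set H)) × Bool =>
          if t.2 then (t.1.1 : H)⁻¹ * t.1.2.1 * t.1.2.2
          else (t.1.1 : H)⁻¹ * (t.1.2.1 : H)⁻¹ * t.1.2.2))
      rintro y ⟨x, hx, p, hp, hcase | hcase⟩
      · exact ⟨⟨⟨⟨x, hx⟩, ⟨x * y * p⁻¹, hcase⟩, ⟨p, hp⟩⟩, true⟩, by simp; group⟩
      · -- p * (x*y)⁻¹ ∈ S' → y = x⁻¹ * (that)⁻¹ * p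
        exact ⟨⟨⟨⟨x, hx⟩, ⟨p * (x * y)⁻¹, hcase⟩, ⟨p, hp⟩⟩, false⟩, by simp; group⟩)
    (fun y' => by
      apply Set.Finite.subset (Set.finite_range
        (fun t : (↥(X : Set H) × ↥(S' : Set H) × ↥(X : Set H)) × Bool =>
          if t.2 then (t.1.1 : H)⁻¹ * t.1.2.1 * t.1.2.2 * y'
          else (t.1.1 : H)⁻¹ * (t.1.2.1 : H)⁻¹ * t.1.2.2 * y'))
      rintro z (⟨x, hx, x', hx', hc⟩ | ⟨x, hx, x', hx', hc⟩)
      · -- x * z * (x' * y')⁻¹ ∈ S' → z = x⁻¹ * s * (x' * y')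
        exact ⟨⟨⟨⟨x, hx⟩, ⟨x * z * (x' * y')⁻¹, hc⟩, ⟨x', hx'⟩⟩, true⟩, by simp; group⟩
      · -- x * y' * (x' * z)⁻¹ ∈ S' → z = x'⁻¹ * s⁻¹ * x * y'
        exact ⟨⟨⟨⟨x', hx'⟩, ⟨x * y' * (x' * z)⁻¹, hc⟩, ⟨x, hx⟩⟩, false⟩, by simp; group⟩) k
  refine ⟨X, Y, hXcard, hYcard, ?_⟩
  intro a ha b hb hne
  have key : a * b⁻¹ ∉ S' := by
    obtain ⟨x, hx, y, hy, rfl⟩ := Finset.mem_mul.mp ha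
    rcases hb with hb | hb
    · obtain ⟨x', hx', y', hy', rfl⟩ := Finset.mem_mul.mp hb
      by_cases hyy : y = y'
      · subst hyy
        have hxx : x ≠ x' := fun h => hne (by rw [h])
        have := hXprop x hx x' hx' hxx
        intro hmem
        exact this (by
          have : x * y * (x' * y)⁻¹ = x * x'⁻¹ := by group
          rwa [this] at hmem)
      · intro hmem
        exact hYprop y hy y' hy' hyy ⟨x, hx, x', hx', hmem⟩
    · intro hmem
      exact hYU y hy ⟨x, hx, b, hb, Or.inl hmem⟩
  constructor
  · exact fun h => key (by simp [hS'def, Finset.mem_union, h])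
  · intro h
    exact key (by
      have : a * b⁻¹ = (b * a⁻¹)⁻¹ := by group
      rw [this]
      exact hS'symm _ (by simp [hS'def, Finset.mem_union, h]))

section Construction

variable {H : Type*} [Group H] [Infinite H] [DecidableEq H]

/-- the finite set `{e 0, …, e k} \ {1}`. -/
noncomputable def SkF (e : ℕ → H) (k : ℕ) : Finset H :=
  ((Finset.range (k + 1)).image e).erase 1

/-- state: (accumulated union of previous rectangles, Xₖ, Yₖ). -/
noncomputable def stF (e : ℕ → H) : ℕ → Finset H × Finset H × Finset H
  | 0 => (∅, ∅, ∅)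
  | (k + 1) =>
    ((stF e k).1 ∪ (stF e k).2.1 * (stF e k).2.2,
     (stepLemma (SkF e (k + 1)) ((stF e k).1 ∪ (stF e k).2.1 * (stF e k).2.2)
        (Finset.notMem_erase _ _) (k + 1)).choose,
     (stepLemma (SkF e (k + 1)) ((stF e k).1 ∪ (stF e k).2.1 * (stF e k).2.2)
        (Finset.notMem_erase _ _) (k + 1)).choose_spec.choose)

noncomputable def FkF (e : ℕ → H) (k : ℕ) : Finset H := (stF e k).2.1 * (stF e k).2.2

lemma stF_fst (e : ℕ → H) (k : ℕ) :
    (stF e (k + 1)).1 = (stF e k).1 ∪ FkF e k := rfl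

lemma stF_spec (e : ℕ → H) (k : ℕ) :
    (stF e (k + 1)).2.1.card = k + 1 ∧ (stF e (k + 1)).2.2.card = k + 1 ∧
      ∀ a ∈ FkF e (k + 1), ∀ b, (b ∈ FkF e (k + 1) ∨ b ∈ (stF e (k + 1)).1) → a ≠ b →
        a * b⁻¹ ∉ SkF e (k + 1) ∧ b * a⁻¹ ∉ SkF e (k + 1) := by
  have h := (stepLemma (SkF e (k + 1)) ((stF e k).1 ∪ (stF e k).2.1 * (stF e k).2.2)
        (Finset.notMem_erase _ _) (k + 1)).choose_spec.choose_spec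
  exact h

lemma FkF_subset_fst (e : ℕ → H) {m k : ℕ} (h : m < k) :
    FkF e m ⊆ (stF e k).1 := by
  induction k with
  | zero => omega
  | succ k ih =>
    rw [stF_fst]
    rcases Nat.lt_succ_iff_lt_or_eq.mp h with h' | h'
    · exact (ih h').trans Finset.subset_union_left
    · subst h'; exact Finset.subset_union_right

end Construction

lemma countable_thin_unbounded (H : Type*) [Group H] [Countable H] [Infinite H] :
    ∃ A : Set H, (∀ h : H, h ≠ 1 → (A ∩ h • A).Finite) ∧
      ∀ n : ℕ, 0 < n → ∃ X Y : Finset H, X.card = n ∧ Y.card = n ∧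
        (X : Set H) * (Y : Set H) ⊆ A := by
  classical
  obtain ⟨e, he⟩ := exists_surjective_nat H
  refine ⟨⋃ k, ↑(FkF e k), ?_, ?_⟩
  · -- thinness
    intro h hne
    obtain ⟨j, rfl⟩ := he h
    apply Set.Finite.subset ((Finset.range (j + 1)).biUnion (fun k => FkF e k)).finite_toSet
    rintro a ⟨haA, haT⟩
    simp only [Set.mem_iUnion, Finset.mem_coe] at haA
    obtain ⟨k, hak⟩ := haA
    obtain ⟨b, hbA, rfl⟩ := haT
    simp only [Set.mem_iUnion, Finset.mem_coe] at hbA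
    obtain ⟨m, hbm⟩ := hbA
    simp only [smul_eq_mul] at hak ⊢
    -- claim : k ≤ j
    have hkj : k ≤ j := by
      by_contra hjk
      push_neg at hjk
      -- `e j ∈ SkF e K` for any `K > j`
      have hmemS : ∀ K, j < K → e j ∈ SkF e K := by
        intro K hK
        apply Finset.mem_erase.mpr
        exact ⟨hne, Finset.mem_image.mpr ⟨j, Finset.mem_range.mpr (by omega), rfl⟩⟩
      rcases le_or_gt m k with hmk | hmk
      · -- apply spec at k; k ≥ 1
        obtain ⟨k', rfl⟩ : ∃ k', k = k' + 1 := ⟨k - 1, by omega⟩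
        have hspec := (stF_spec e k').2.2 (e j * b) hak b
          (by
            rcases eq_or_lt_of_le hmk with h' | h'
            · exact Or.inl (h' ▸ hbm)
            · exact Or.inr (FkF_subset_fst e h' hbm))
          (by
            intro hEq
            apply hne
            have : e j * b = 1 * b := by rw [one_mul]; exact hEq
            exact mul_right_cancel this)
        apply hspec.1
        have : e j * b * b⁻¹ = e j := by group
        rw [this]
        exact hmemS _ hjk
      · -- m > k hence m > j : apply spec at m with roles swapped
        obtain ⟨m', rfl⟩ : ∃ m', m = m' + 1 := ⟨m - 1, by omega⟩
        have hspec := (stF_spec e m').2.2 b hbm (e j * b)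
          (Or.inr (FkF_subset_fst e hmk hak))
          (by
            intro hEq
            apply hne
            have : (1 : H) * b = e j * b := by rw [one_mul]; exact hEq
            exact (mul_right_cancel this).symm)
        apply hspec.2
        have : e j * b * b⁻¹ = e j := by group
        rw [this]
        exact hmemS _ (by omega)
    exact Finset.mem_coe.mpr (Finset.mem_biUnion.mpr ⟨k, Finset.mem_range.mpr (by omega), hak⟩)
  · -- rectangles
    intro n hn
    obtain ⟨n', rfl⟩ : ∃ n', n = n' + 1 := ⟨n - 1, by omega⟩
    refine ⟨(stF e (n' + 1)).2.1, (stF e (n' + 1)).2.2, (stF_spec e n').1, (stF_spec e n').2.1, ?_⟩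
    rw [← Finset.coe_mul]
    exact (Set.subset_iUnion (fun k => ((FkF e k : Finset H) : Set H)) (n' + 1))

lemma exists_thin_unbounded (G : Type*) [Group G] [Infinite G] :
    ∃ A : Set G, (∀ g : G, g ≠ 1 → (A ∩ g • A).Finite) ∧
      ∀ n : ℕ, 0 < n → ∃ X Y : Finset G, X.card = n ∧ Y.card = n ∧
        (X : Set G) * (Y : Set G) ⊆ A := by
  classical
  set f := Infinite.natEmbedding G with hf
  set S : Set G := Set.range f with hSdef
  set H : Subgroup G := Subgroup.closure S with hHdef
  have hScount : (S ∪ S⁻¹ : Set G).Countable := by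
    refine (Set.countable_range f).union ?_
    have : S⁻¹ = Set.range (fun n => (f n)⁻¹) := by
      ext x
      simp [hSdef, Set.mem_inv, inv_eq_iff_eq_inv, eq_comm]
    rw [this]
    exact Set.countable_range _
  haveI : Countable ↥(S ∪ S⁻¹ : Set G) := hScount.to_subtype
  have key : (H : Set G) ⊆
      Set.range (fun l : List ↥(S ∪ S⁻¹ : Set G) => (l.map Subtype.val).prod) := by
    intro x hx
    have hx' : x ∈ Submonoid.closure (S ∪ S⁻¹) := by
      rw [← Subgroup.closure_toSubmonoid]
      exact hx
    obtain ⟨l, hl, hprod⟩ := Submonoid.exists_list_of_mem_closure hx'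
    refine ⟨l.attach.map (fun y => ⟨y.1, hl y.1 y.2⟩), ?_⟩
    simp only [List.map_map]
    have : (l.attach.map (Subtype.val ∘ fun y => (⟨y.1, hl y.1 y.2⟩ : ↥(S ∪ S⁻¹ : Set G)))) = l := by
      simpa using List.attach_map_val l
    rw [this, hprod]
  haveI hHcount : Countable ↥H := by
    have : (H : Set G).Countable := Set.Countable.mono key (Set.countable_range _)
    exact this.to_subtype
  haveI hHinf : Infinite ↥H := by
    have : ((H : Set G)).Infinite :=
      (Set.infinite_range_of_injective f.injective).mono Subgroup.subset_closure
    exact this.to_subtype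
  obtain ⟨A', hthin, hrect⟩ := countable_thin_unbounded ↥H
  refine ⟨Subtype.val '' A', ?_, ?_⟩
  · intro g hg
    by_cases hgH : g ∈ H
    · have hne : (⟨g, hgH⟩ : ↥H) ≠ 1 := by
        intro h
        exact hg (congrArg Subtype.val h)
      apply Set.Finite.subset ((hthin ⟨g, hgH⟩ hne).image Subtype.val)
      rintro x ⟨⟨a', ha', rfl⟩, hx2⟩
      obtain ⟨b, ⟨b', hb', rfl⟩, hgb⟩ := hx2
      refine ⟨a', ⟨ha', ?_⟩, rfl⟩
      refine ⟨b', hb', ?_⟩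
      apply Subtype.ext
      simpa [smul_eq_mul] using hgb
    · apply Set.Finite.subset Set.finite_empty
      rintro x ⟨⟨a', ha', rfl⟩, hx2⟩
      obtain ⟨b, ⟨b', hb', rfl⟩, hgb⟩ := hx2
      exfalso
      apply hgH
      have : g = (a' : G) * ((b' : G))⁻¹ := by
        rw [← hgb]; simp [smul_eq_mul]
      rw [this]
      exact mul_mem a'.2 (inv_mem b'.2)
  · intro n hn
    obtain ⟨X', Y', hX', hY', hsub⟩ := hrect n hn
    refine ⟨X'.map ⟨Subtype.val, Subtype.val_injective⟩,
      Y'.map ⟨Subtype.val, Subtype.val_injective⟩, by simp [hX'], by simp [hY'], ?_⟩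
    rintro z hz
    obtain ⟨x, hx, y, hy, rfl⟩ := Set.mem_mul.mp hz
    simp only [Finset.coe_map, Set.mem_image, Finset.mem_coe, Function.Embedding.coeFn_mk] at hx hy
    obtain ⟨x', hx', rfl⟩ := hx
    obtain ⟨y', hy', rfl⟩ := hy
    refine ⟨x' * y', ?_, rfl⟩
    exact hsub (Set.mul_mem_mul (Finset.mem_coe.mpr hx') (Finset.mem_coe.mpr hy'))

lemma br_union {G : Type*} [Group G] {A B : Set G}
    (hA : HasBoundedRectangles A) (hB : HasBoundedRectangles B) :
    HasBoundedRectangles (A ∪ B) := by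
  classical
  obtain ⟨nA, hnA, hAno⟩ := hA
  obtain ⟨nB, hnB, hBno⟩ := hB
  set s := nA + nB with hs
  have hs0 : 0 < s := by omega
  refine ⟨2 ^ s * s, by positivity, ?_⟩
  intro X Y hX hY hsub
  have hsX : s ≤ X.card := by
    rw [hX]
    calc s = 1 * s := (one_mul s).symm
    _ ≤ 2 ^ s * s := Nat.mul_le_mul_right s (Nat.one_le_two_pow)
  obtain ⟨X₀, hX₀sub, hX₀card⟩ := Finset.exists_subset_card_eq hsX
  set T : G → Finset G := fun y => X₀.filter (fun x => x * y ∈ A) with hT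
  have hmaps : ∀ y ∈ Y, T y ∈ X₀.powerset :=
    fun y _ => Finset.mem_powerset.mpr (Finset.filter_subset _ _)
  have hcard : X₀.powerset.card * (s - 1) < Y.card := by
    rw [Finset.card_powerset, hX₀card, hY]
    have h2 : 0 < 2 ^ s := pow_pos (by norm_num) s
    have : s - 1 < s := by omega
    exact Nat.mul_lt_mul_of_le_of_lt (le_refl _) this h2
  obtain ⟨T₀, hT₀, hfib⟩ := Finset.exists_lt_card_fiber_of_mul_lt_card_of_maps_to hmaps hcard
  set Y₀ := Y.filter (fun y => T y = T₀) with hY₀def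
  have hY₀ : s ≤ Y₀.card := by omega
  by_cases hcase : nA ≤ T₀.card
  · obtain ⟨X₁, hX₁sub, hX₁card⟩ := Finset.exists_subset_card_eq hcase
    obtain ⟨Y₁, hY₁sub, hY₁card⟩ := Finset.exists_subset_card_eq
      (show nA ≤ Y₀.card by omega)
    apply hAno X₁ Y₁ hX₁card hY₁card
    rintro z hz
    obtain ⟨x, hx, y, hy, rfl⟩ := Set.mem_mul.mp hz
    have hyY₀ : y ∈ Y₀ := hY₁sub (Finset.mem_coe.mp hy)
    have hTy : T y = T₀ := (Finset.mem_filter.mp hyY₀).2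
    have hxT : x ∈ T y := by
      rw [hTy]
      exact hX₁sub (Finset.mem_coe.mp hx)
    exact (Finset.mem_filter.mp hxT).2
  · push_neg at hcase
    have hT₀X₀ : T₀ ⊆ X₀ := Finset.mem_powerset.mp hT₀
    have hsd : nB ≤ (X₀ \ T₀).card := by
      rw [Finset.card_sdiff_of_subset hT₀X₀, hX₀card]
      omega
    obtain ⟨X₁, hX₁sub, hX₁card⟩ := Finset.exists_subset_card_eq hsd
    obtain ⟨Y₁, hY₁sub, hY₁card⟩ := Finset.exists_subset_card_eq
      (show nB ≤ Y₀.card by omega)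
    apply hBno X₁ Y₁ hX₁card hY₁card
    rintro z hz
    obtain ⟨x, hx, y, hy, rfl⟩ := Set.mem_mul.mp hz
    have hxmem := hX₁sub (Finset.mem_coe.mp hx)
    have hyY₀ := hY₁sub (Finset.mem_coe.mp hy)
    have hTy : T y = T₀ := (Finset.mem_filter.mp hyY₀).2
    have hxX₀ : x ∈ X₀ := (Finset.mem_sdiff.mp hxmem).1
    have hxnT : x ∉ T y := by
      rw [hTy]
      exact (Finset.mem_sdiff.mp hxmem).2
    have hnotA : x * y ∉ A := fun h => hxnT (Finset.mem_filter.mpr ⟨hxX₀, h⟩)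
    have hxy : x * y ∈ A ∪ B := by
      apply hsub
      exact Set.mul_mem_mul (Finset.mem_coe.mpr (hX₀sub hxX₀))
        (Finset.mem_coe.mpr (Finset.mem_of_mem_filter y hyY₀))
    rcases hxy with h | h
    · exact absurd h hnotA
    · exact h

lemma br_subset {G : Type*} [Group G] {A C : Set G}
    (hA : HasBoundedRectangles A) (hCA : C ⊆ A) : HasBoundedRectangles C := by
  obtain ⟨n, hn, hno⟩ := hA
  exact ⟨n, hn, fun X Y hX hY hsub => hno X Y hX hY (hsub.trans hCA)⟩

lemma br_transl {G : Type*} [Group G] {A : Set G} (g : G)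
    (hA : HasBoundedRectangles A) :
    HasBoundedRectangles ((fun a => g * a) '' A) ∧
      HasBoundedRectangles ((fun a => a * g) '' A) := by
  classical
  obtain ⟨n, hn, hno⟩ := hA
  constructor
  · refine ⟨n, hn, ?_⟩
    intro X Y hX hY hsub
    apply hno (X.image (fun x => g⁻¹ * x)) Y
      (by rw [Finset.card_image_of_injective _ (mul_right_injective g⁻¹)]; exact hX) hY
    rintro z hz
    obtain ⟨x, hx, y, hy, rfl⟩ := Set.mem_mul.mp hz
    obtain ⟨x₀, hx₀, rfl⟩ := Finset.mem_image.mp (Finset.mem_coe.mp hx)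
    have : x₀ * y ∈ (fun a => g * a) '' A :=
      hsub (Set.mul_mem_mul (Finset.mem_coe.mpr hx₀) hy)
    obtain ⟨a, ha, hEq⟩ := this
    have h2 : x₀ * y = g * a := hEq.symm
    have : g⁻¹ * x₀ * y = a := by rw [mul_assoc, h2]; group
    rwa [this]
  · refine ⟨n, hn, ?_⟩
    intro X Y hX hY hsub
    apply hno X (Y.image (fun y => y * g⁻¹)) hX
      (by rw [Finset.card_image_of_injective _ (mul_left_injective g⁻¹)]; exact hY)
    rintro z hz
    obtain ⟨x, hx, y, hy, rfl⟩ := Set.mem_mul.mp hz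
    obtain ⟨y₀, hy₀, rfl⟩ := Finset.mem_image.mp (Finset.mem_coe.mp hy)
    have : x * y₀ ∈ (fun a => a * g) '' A :=
      hsub (Set.mul_mem_mul hx (Finset.mem_coe.mpr hy₀))
    obtain ⟨a, ha, hEq⟩ := this
    have h2 : x * y₀ = a * g := hEq.symm
    have : x * (y₀ * g⁻¹) = a := by rw [← mul_assoc, h2]; group
    rwa [this]

lemma br_thin {G : Type*} [Group G] [Infinite G] {A : Set G}
    (hA : HasBoundedRectangles A) : IsFinitelyThinSub A := by
  classical
  obtain ⟨n, hn, hno⟩ := hA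
  refine ⟨n, hn, ?_⟩
  intro g hg
  by_contra hinf
  have hinf : (⋂ i, g i • A).Infinite := hinf
  obtain ⟨Y, hYsub, hYcard⟩ := hinf.exists_subset_card_eq n
  have hginj : Function.Injective (fun i => (g i)⁻¹) :=
    fun i j h => hg (inv_injective h)
  have hXcard : (Finset.univ.image (fun i => (g i)⁻¹)).card = n + 1 := by
    rw [Finset.card_image_of_injective _ hginj, Finset.card_univ, Fintype.card_fin]
  obtain ⟨X', hX'sub, hX'card⟩ := Finset.exists_subset_card_eq
    (show n ≤ (Finset.univ.image (fun i : Fin (n+1) => (g i)⁻¹)).card by omega)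
  apply hno X' Y hX'card hYcard
  rintro z hz
  obtain ⟨x, hx, y, hy, rfl⟩ := Set.mem_mul.mp hz
  obtain ⟨i, -, rfl⟩ := Finset.mem_image.mp (hX'sub (Finset.mem_coe.mp hx))
  have hyi : y ∈ g i • A := by
    have := hYsub (Finset.mem_coe.mp hy)
    exact Set.mem_iInter.mp this i
  obtain ⟨a, ha, rfl⟩ := hyi
  have : (g i)⁻¹ * (g i • a) = a := by simp [smul_eq_mul]
  rwa [this]


/-- For every infinite group `G`: (i) the family `BR_G` of subsets with bounded
rectangles is a translation invariant ideal in `P_G`; (ii) `BR_G` is properly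
contained in the family `FT_G` of finitely thin subsets. -/
theorem boundedRectangles_ideal_and_ssubset_finitelyThin
    {G : Type*} [Group G] [Infinite G] :
    (IsIdealFam {A : Set G | HasBoundedRectangles A} ∧
      IsTransInvFam {A : Set G | HasBoundedRectangles A}) ∧
    {A : Set G | HasBoundedRectangles A} ⊂ {A : Set G | IsFinitelyThinSub A} := by
  classical
  refine ⟨⟨⟨?_, ?_, ?_⟩, ?_⟩, ?_⟩
  · -- univ not in BR
    rintro ⟨n, hn, hno⟩
    obtain ⟨X, hX⟩ := Infinite.exists_subset_card_eq G n
    exact hno X X hX hX (Set.subset_univ _)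
  · exact fun A hA B hB => br_union hA hB
  · exact fun A hA C hCA => br_subset hA hCA
  · exact fun g A hA => br_transl g hA
  · rw [Set.ssubset_def]
    constructor
    · exact fun A hA => br_thin hA
    · intro hback
      obtain ⟨A, hthin, hrect⟩ := exists_thin_unbounded G
      have hAFT : A ∈ {A : Set G | IsFinitelyThinSub A} := by
        refine ⟨1, one_pos, ?_⟩
        intro g hg
        have hne : (g 0)⁻¹ * g 1 ≠ 1 := by
          intro h
          apply (by decide : (0 : Fin 2) ≠ 1)
          apply hg
          have : g 0 = g 1 := by
            have := congrArg (fun x => g 0 * x) h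
            simpa [mul_assoc] using this.symm
          exact this
        have hfin : (A ∩ ((g 0)⁻¹ * g 1) • A).Finite := hthin _ hne
        have hfin2 : ((g 0) • (A ∩ ((g 0)⁻¹ * g 1) • A)).Finite := hfin.smul_set
        apply hfin2.subset
        intro x hx
        have h0 : x ∈ g 0 • A := Set.mem_iInter.mp hx 0
        have h1 : x ∈ g 1 • A := Set.mem_iInter.mp hx 1
        rw [Set.smul_set_inter]
        refine ⟨h0, ?_⟩
        rw [smul_smul]
        have : g 0 * ((g 0)⁻¹ * g 1) = g 1 := by group
        rw [this]
        exact h1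
      have hABR : A ∈ {A : Set G | HasBoundedRectangles A} := hback hAFT
      obtain ⟨n, hn, hno⟩ := hABR
      obtain ⟨X, Y, hX, hY, hsub⟩ := hrect n hn
      exact hno X Y hX hY hsub
end

section
/- For an infinite group G with identity e and a subset A of G, the combinatorial derivation ∆(A) = {g ∈ G : gA ∩ A is infinite} satisfies: (1) A is finite if and only if ∆(A) = ∅; (2) ∆(A) = {e} if and only if A is infinite and thin; (3) if A is thick then ∆(A) = G; (4) if A is prethick then ∆(A) is large. -/
open Pointwise

/-- The combinatorial derivation `∆(A) = {g ∈ G : gA ∩ A is infinite}`. -/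
def combDer {G : Type*} [Group G] (A : Set G) : Set G :=
  {g : G | (g • A ∩ A).Infinite}

/-! Parts (1) and (2) are immediate once one notes that `1 ∈ ∆(A)` iff `A` is infinite. Parts (3)
and (4) rest on one fact: if `FA` is thick then `G = F ∆(A)`; part (3) is its case `F = {1}`. -/

section

variable {G : Type*} [Group G]

theorem combDer_eq_empty_iff {A : Set G} : combDer A = ∅ ↔ A.Finite := by
  refine ⟨fun h => ?_, fun hA => Set.eq_empty_of_forall_notMem fun g hg =>
    hg (hA.subset Set.inter_subset_right)⟩
  have h1 : (1 : G) ∉ combDer A := h ▸ Set.notMem_empty 1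
  simpa [combDer] using h1

theorem one_mem_combDer_iff {A : Set G} : (1 : G) ∈ combDer A ↔ A.Infinite := by
  simp [combDer]

theorem combDer_subset_singleton_one_iff {A : Set G} :
    combDer A ⊆ {1} ↔ IsThinSub A := by
  refine ⟨fun h g hg => ?_, fun h g hg => ?_⟩
  · by_contra hinf
    exact hg (h hinf)
  · by_contra hg1
    exact hg (h g hg1)

theorem IsThickSub.infinite [Infinite G] {B : Set G} (hB : IsThickSub B) : B.Infinite := by
  intro hfin
  obtain ⟨L, hL⟩ := Infinite.exists_subset_card_eq G (hfin.toFinset.card + 1)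
  obtain ⟨a, -, hLa⟩ := hB L
  have hcard : L.card ≤ hfin.toFinset.card :=
    Finset.card_le_card_of_injOn (· * a)
      (fun l hl => hfin.mem_toFinset.2 (hLa (Set.mul_mem_mul hl rfl)))
      (fun _ _ _ _ h => mul_right_cancel h)
  omega

theorem IsThickSub.setOf_forall_mul_mem {B : Set G} (hB : IsThickSub B) (K : Finset G) :
    IsThickSub {x | ∀ k ∈ K, k * x ∈ B} := by
  classical
  intro L
  obtain ⟨a, -, ha⟩ := hB (K * insert 1 L)
  have hKL : ∀ k ∈ K, ∀ l ∈ insert 1 L, k * l * a ∈ B := fun k hk l hl =>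
    ha (Set.mul_mem_mul (Finset.mem_coe.2 (Finset.mul_mem_mul hk hl)) rfl)
  refine ⟨a, fun k hk => by simpa using hKL k hk 1 (Finset.mem_insert_self 1 L), ?_⟩
  rintro _ ⟨l, hl, _, rfl, rfl⟩ k hk
  simpa [mul_assoc] using hKL k hk l (Finset.mem_insert_of_mem hl)

/-- The points `x` with `x ∈ FA` and `gf⁻¹x ∈ FA` for all `f ∈ F` form a thick, hence infinite,
set; each is of the form `x = f g⁻¹ f' z` with `z ∈ (f'⁻¹g)A ∩ A` and `f, f' ∈ F`, so one of these
finitely many intersections is infinite. -/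
theorem IsThickSub.exists_inv_mul_mem_combDer [Infinite G] {A : Set G} {F : Finset G}
    (hFA : IsThickSub ((F : Set G) * A)) (g : G) : ∃ f ∈ F, f⁻¹ * g ∈ combDer A := by
  classical
  by_contra! hfin
  set D := {x | ∀ k ∈ insert 1 (F.image fun f => g * f⁻¹), k * x ∈ (F : Set G) * A}
  have hD : D ⊆ ⋃ f ∈ (F : Set G), ⋃ f' ∈ (F : Set G), (f * g⁻¹ * f') • ((f'⁻¹ * g) • A ∩ A) := by
    intro x hx
    obtain ⟨f, hf, y, hy, rfl⟩ : x ∈ (F : Set G) * A := by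
      simpa using hx 1 (Finset.mem_insert_self _ _)
    obtain ⟨f', hf', z, hz, hgy : f' * z = g * y⟩ : g * y ∈ (F : Set G) * A := by
      simpa [mul_assoc] using hx (g * f⁻¹) (Finset.mem_insert_of_mem (Finset.mem_image_of_mem _ hf))
    refine Set.mem_biUnion hf (Set.mem_biUnion hf' ⟨z, ⟨⟨y, hy, ?_⟩, hz⟩, ?_⟩)
    · change (f'⁻¹ * g) * y = z
      rw [mul_assoc, ← hgy, inv_mul_cancel_left]
    · simp [mul_assoc, hgy]
  refine (hFA.setOf_forall_mul_mem _).infinite ((Set.Finite.biUnion F.finite_toSet fun f _ =>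
    Set.Finite.biUnion F.finite_toSet fun f' hf' => ?_).subset hD)
  exact (Set.not_infinite.1 (hfin f' hf')).smul_set

theorem IsPrethickSub.isLargeSub_combDer [Infinite G] {A : Set G} (hA : IsPrethickSub A) :
    IsLargeSub (combDer A) := by
  obtain ⟨F, hFA⟩ := hA
  refine ⟨F, Set.eq_univ_of_forall fun g => ?_⟩
  obtain ⟨f, hf, hfg⟩ := hFA.exists_inv_mul_mem_combDer g
  exact ⟨f, hf, f⁻¹ * g, hfg, mul_inv_cancel_left f g⟩

theorem IsThickSub.combDer_eq_univ [Infinite G] {A : Set G} (hA : IsThickSub A) :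
    combDer A = Set.univ := by
  have h1A : ((({1} : Finset G) : Set G) * A) = A := by simp
  refine Set.eq_univ_of_forall fun g => ?_
  obtain ⟨f, hf, hfg⟩ := IsThickSub.exists_inv_mul_mem_combDer (F := {1}) (h1A ▸ hA) g
  simpa [Finset.mem_singleton.1 hf] using hfg

end

/-- Basic properties of the combinatorial derivation on an infinite group:
(1) `A` is finite iff `∆(A) = ∅`; (2) `∆(A) = {1}` iff `A` is infinite and thin;
(3) if `A` is thick then `∆(A) = G`; (4) if `A` is prethick then `∆(A)` is large. -/
theorem combDer_basic_properties
    {G : Type*} [Group G] [Infinite G] (A : Set G) :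
    (A.Finite ↔ combDer A = ∅) ∧
    (combDer A = {(1 : G)} ↔ A.Infinite ∧ IsThinSub A) ∧
    (IsThickSub A → combDer A = Set.univ) ∧
    (IsPrethickSub A → IsLargeSub (combDer A)) := by
  refine ⟨combDer_eq_empty_iff.symm, ?_, IsThickSub.combDer_eq_univ,
    IsPrethickSub.isLargeSub_combDer⟩
  rw [Set.eq_singleton_iff_unique_mem, one_mem_combDer_iff, ← combDer_subset_singleton_one_iff]
  rfl
end

section
/- Every infinite group G contains a subset A such that G = AA^{-1} and ∆(A) = {e}, where e is the identity of G. -/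
open Pointwise

namespace BanakhProtasov

open Cardinal Ordinal Set

noncomputable section

variable (G : Type*) [Group G] [Infinite G]

/-- The index type: a well-order of order type `(#G).ord`. -/
abbrev I : Type _ := ((#G).ord).ToType

lemma mk_I : #(I G) = #G := by
  rw [Cardinal.mk_toType, Cardinal.card_ord]

/-- An enumeration of `G` by the index type. -/
def eG : I G ≃ G := Classical.choice (Cardinal.eq.mp (mk_I G))

lemma mk_Iio_lt (i : I G) : #{j : I G // j < i} < #G :=
  Cardinal.card_typein_toType_lt (#G) i

variable {G}

lemma aleph0_le : ℵ₀ ≤ #G := Cardinal.infinite_iff.mp ‹Infinite G›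

/-- The set of "already used" quotients, minus the allowed exceptions. -/
def quotSet (g : G) (P : Set G) : Set G := (P * P⁻¹) \ {1, g, g⁻¹}

/-- The set of choices to avoid at a step with target `g` and previous elements `P`. -/
def badOf (g : G) (P : Set G) : Set G :=
  quotSet g P * P ∪ (quotSet g P)⁻¹ * P ∪ g • (quotSet g P * P) ∪
    g • ((quotSet g P)⁻¹ * P)

lemma mk_setMul_le (s t : Set G) : #(↥(s * t)) ≤ #s * #t := by
  rw [← Set.image2_mul]; exact Cardinal.mk_image2_le

lemma mk_inv_le (s : Set G) : #(↥(s⁻¹ : Set G)) ≤ #s := by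
  rw [← Set.image_inv_eq_inv]; exact Cardinal.mk_image_le

lemma mk_smul_le (g : G) (s : Set G) : #(↥(g • s)) ≤ #s := by
  rw [← Set.image_smul]; exact Cardinal.mk_image_le

lemma exists_not_bad (g : G) (P : Set G) (hP : #P < #G) : ∃ a : G, a ∉ badOf g P := by
  have hQ : #(quotSet g P) < #G := by
    refine lt_of_le_of_lt (Cardinal.mk_le_mk_of_subset diff_subset) ?_
    refine lt_of_le_of_lt (mk_setMul_le P P⁻¹) ?_
    exact Cardinal.mul_lt_of_lt aleph0_le hP (lt_of_le_of_lt (mk_inv_le P) hP)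
  have h1 : #(↥(quotSet g P * P)) < #G :=
    lt_of_le_of_lt (mk_setMul_le _ _) (Cardinal.mul_lt_of_lt aleph0_le hQ hP)
  have h2 : #(↥((quotSet g P)⁻¹ * P)) < #G :=
    lt_of_le_of_lt (mk_setMul_le _ _)
      (Cardinal.mul_lt_of_lt aleph0_le (lt_of_le_of_lt (mk_inv_le _) hQ) hP)
  have h3 : #(↥(g • (quotSet g P * P))) < #G := lt_of_le_of_lt (mk_smul_le g _) h1
  have h4 : #(↥(g • ((quotSet g P)⁻¹ * P))) < #G := lt_of_le_of_lt (mk_smul_le g _) h2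
  have hbad : #(badOf g P) < #G := by
    refine lt_of_le_of_lt (Cardinal.mk_le_mk_of_subset (subset_refl (badOf g P))) ?_
    unfold badOf
    refine lt_of_le_of_lt (Cardinal.mk_union_le _ _) (Cardinal.add_lt_of_lt aleph0_le ?_ h4)
    refine lt_of_le_of_lt (Cardinal.mk_union_le _ _) (Cardinal.add_lt_of_lt aleph0_le ?_ h3)
    exact lt_of_le_of_lt (Cardinal.mk_union_le _ _) (Cardinal.add_lt_of_lt aleph0_le h1 h2)
  by_contra h
  push_neg at h
  have : badOf g P = Set.univ := Set.eq_univ_of_forall h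
  rw [this, Cardinal.mk_univ] at hbad
  exact lt_irrefl _ hbad

variable (G)

/-- The previously chosen elements, as a function of the recursion data. -/
def prevSet (i : I G) (f : ∀ j : I G, j < i → G) : Set G :=
  {x : G | ∃ j : I G, ∃ h : j < i, x = f j h ∨ x = (eG G j)⁻¹ * f j h}

lemma mk_prevSet_lt (i : I G) (f : ∀ j : I G, j < i → G) : #(prevSet G i f) < #G := by
  have hsub : prevSet G i f ⊆
      Set.range (fun j : {j : I G // j < i} => f j.1 j.2) ∪
      Set.range (fun j : {j : I G // j < i} => (eG G j.1)⁻¹ * f j.1 j.2) := by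
    rintro x ⟨j, h, rfl | rfl⟩
    · exact Or.inl ⟨⟨j, h⟩, rfl⟩
    · exact Or.inr ⟨⟨j, h⟩, rfl⟩
  refine lt_of_le_of_lt (Cardinal.mk_le_mk_of_subset hsub) ?_
  refine lt_of_le_of_lt (Cardinal.mk_union_le _ _) (Cardinal.add_lt_of_lt aleph0_le ?_ ?_) <;>
    exact lt_of_le_of_lt Cardinal.mk_range_le (mk_Iio_lt G i)

/-- One step of the recursion: choose a "generic" element. -/
def pick (i : I G) (f : ∀ j : I G, j < i → G) : G :=
  Classical.choose (exists_not_bad (eG G i) (prevSet G i f) (mk_prevSet_lt G i f))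

/-- The transfinite sequence of first coordinates. -/
def aF : I G → G := (wellFounded_lt (α := I G)).fix (pick G)

/-- The second coordinates. -/
def bF (i : I G) : G := (eG G i)⁻¹ * aF G i

/-- The set of elements chosen before step `i`. -/
def Pset (i : I G) : Set G := prevSet G i (fun j _ => aF G j)

lemma aF_eq (i : I G) : aF G i = pick G i (fun j _ => aF G j) :=
  (wellFounded_lt (α := I G)).fix_eq (pick G) i

lemma aF_spec (i : I G) : aF G i ∉ badOf (eG G i) (Pset G i) := by
  rw [aF_eq]
  exact Classical.choose_spec
    (exists_not_bad (eG G i) (prevSet G i (fun j _ => aF G j)) (mk_prevSet_lt G i _))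

lemma mem_Pset {i : I G} {x : G} :
    x ∈ Pset G i ↔ ∃ j : I G, j < i ∧ (x = aF G j ∨ x = bF G j) := by
  constructor
  · rintro ⟨j, h, hx⟩; exact ⟨j, h, hx⟩
  · rintro ⟨j, h, hx⟩; exact ⟨j, h, hx⟩

/-- The constructed set. -/
def Aset : Set G := {x : G | ∃ i : I G, x = aF G i ∨ x = bF G i}

lemma aF_mem (i : I G) : aF G i ∈ Aset G := ⟨i, Or.inl rfl⟩
lemma bF_mem (i : I G) : bF G i ∈ Aset G := ⟨i, Or.inr rfl⟩

lemma aF_mul_bF_inv (i : I G) : aF G i * (bF G i)⁻¹ = eG G i := by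
  unfold bF; group

/-- Part 1 : `A * A⁻¹ = univ`. -/
lemma Aset_mul_inv : Aset G * (Aset G)⁻¹ = Set.univ := by
  apply Set.eq_univ_of_forall
  intro g
  have h := aF_mul_bF_inv G ((eG G).symm g)
  rw [Equiv.apply_symm_apply] at h
  rw [← h]
  exact Set.mul_mem_mul (aF_mem G _) (Set.inv_mem_inv.mpr (bF_mem G _))

/-- The key consequence of avoiding the bad set. -/
lemma not_quot (i : I G) {q v : G} (hq : q ∈ quotSet (eG G i) (Pset G i))
    (hv : v ∈ Pset G i) :
    aF G i * v⁻¹ ≠ q ∧ v * (aF G i)⁻¹ ≠ q ∧ bF G i * v⁻¹ ≠ q ∧ v * (bF G i)⁻¹ ≠ q := by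
  have hspec := aF_spec G i
  set g := eG G i with hg
  set Q := quotSet g (Pset G i) with hQdef
  refine ⟨?_, ?_, ?_, ?_⟩
  · intro h
    have ha : aF G i = q * v := by rw [← h]; group
    exact hspec (Or.inl (Or.inl (Or.inl (ha ▸ Set.mul_mem_mul hq hv))))
  · intro h
    have ha : aF G i = q⁻¹ * v := by rw [← h]; group
    exact hspec (Or.inl (Or.inl (Or.inr
      (ha ▸ Set.mul_mem_mul (Set.inv_mem_inv.mpr hq) hv))))
  · intro h
    have hb : (g⁻¹ * aF G i) * v⁻¹ = q := h
    have ha : aF G i = g * (q * v) := by rw [← hb]; group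
    refine hspec (Or.inl (Or.inr ?_))
    rw [ha]
    exact Set.smul_mem_smul_set (Set.mul_mem_mul hq hv)
  · intro h
    have hb : v * (g⁻¹ * aF G i)⁻¹ = q := h
    have ha : aF G i = g * (q⁻¹ * v) := by rw [← hb]; group
    refine hspec (Or.inr ?_)
    rw [ha]
    exact Set.smul_mem_smul_set (Set.mul_mem_mul (Set.inv_mem_inv.mpr hq) hv)

/-- The two new elements at step `i`. -/
def sPair (i : I G) : Set G := {aF G i, bF G i}

lemma sPair_subset_Pset {i m : I G} (h : i < m) : sPair G i ⊆ Pset G m := by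
  rintro x (rfl | rfl)
  · exact mem_Pset G |>.mpr ⟨i, h, Or.inl rfl⟩
  · exact mem_Pset G |>.mpr ⟨i, h, Or.inr rfl⟩

lemma Pset_subset_Pset {i m : I G} (h : i < m) : Pset G i ⊆ Pset G m := by
  intro x hx
  obtain ⟨j, hj, hx⟩ := (mem_Pset G).mp hx
  exact (mem_Pset G).mpr ⟨j, lt_trans hj h, hx⟩

/-- `m` is a witness for quotient `q`. -/
def Wit (q : G) (m : I G) : Prop :=
  ∃ u ∈ sPair G m, ∃ v ∈ Pset G m ∪ sPair G m, u * v⁻¹ = q ∨ v * u⁻¹ = q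

/-- If `m` witnesses `q` and `q ∉ {1, g_m, g_m⁻¹}` then `q` is a fresh quotient at `m`. -/
lemma wit_fresh {q : G} {m : I G} (hw : Wit G q m)
    (hq1 : q ≠ 1) (hqg : q ≠ eG G m) (hqg' : q ≠ (eG G m)⁻¹) :
    q ∉ Pset G m * (Pset G m)⁻¹ := by
  intro hqQ
  have hqQ' : q ∈ quotSet (eG G m) (Pset G m) := by
    refine ⟨hqQ, ?_⟩
    simp only [Set.mem_insert_iff, Set.mem_singleton_iff, not_or]
    exact ⟨hq1, hqg, hqg'⟩
  obtain ⟨u, hu, v, hv, hrel⟩ := hw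
  rcases hv with hv | hv
  · -- v is an old element : contradicts the genericity of step m
    obtain ⟨h1, h2, h3, h4⟩ := not_quot G m hqQ' hv
    rcases hu with rfl | rfl <;> rcases hrel with h | h
    · exact h1 h
    · exact h2 h
    · exact h3 h
    · exact h4 h
  · -- both new : the quotient is in {1, g, g⁻¹}
    have key : ∀ x ∈ sPair G m, ∀ y ∈ sPair G m,
        x * y⁻¹ = 1 ∨ x * y⁻¹ = eG G m ∨ x * y⁻¹ = (eG G m)⁻¹ := by
      rintro x (rfl | rfl) y (rfl | rfl)
      · left; group
      · right; left; exact aF_mul_bF_inv G m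
      · right; right
        have := aF_mul_bF_inv G m
        rw [← this]; group
      · left; group
    rcases hrel with h | h
    · rcases key u hu v hv with h' | h' | h' <;> rw [h] at h'
      exacts [hq1 h', hqg h', hqg' h']
    · rcases key v hv u hu with h' | h' | h' <;> rw [h] at h'
      exacts [hq1 h', hqg h', hqg' h']

lemma wit_lt {q : G} (hq1 : q ≠ 1) {m m' : I G} (hm : Wit G q m) (hm' : Wit G q m')
    (hlt : m < m') : q = eG G m' ∨ q = (eG G m')⁻¹ := by
  by_contra hcon
  push_neg at hcon
  refine wit_fresh G hm' hq1 hcon.1 hcon.2 ?_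
  -- the witness at m shows q ∈ Pset m' * (Pset m')⁻¹
  obtain ⟨u, hu, v, hv, hrel⟩ := hm
  have hu' : u ∈ Pset G m' := sPair_subset_Pset G hlt hu
  have hv' : v ∈ Pset G m' := by
    rcases hv with hv | hv
    · exact Pset_subset_Pset G hlt hv
    · exact sPair_subset_Pset G hlt hv
  rcases hrel with rfl | rfl
  · exact Set.mul_mem_mul hu' (Set.inv_mem_inv.mpr hv')
  · exact Set.mul_mem_mul hv' (Set.inv_mem_inv.mpr hu')

lemma wit_finite {q : G} (hq1 : q ≠ 1) : {m : I G | Wit G q m}.Finite := by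
  set D : Set (I G) := {(eG G).symm q, (eG G).symm q⁻¹} with hD
  have hsub : {m : I G | Wit G q m} ⊆ ({m : I G | Wit G q m} \ D) ∪ D := by
    intro m hm
    by_cases h : m ∈ D
    · exact Or.inr h
    · exact Or.inl ⟨hm, h⟩
  refine Set.Finite.subset (Set.Finite.union ?_ (Set.toFinite D)) hsub
  refine Set.Subsingleton.finite ?_
  intro m hm m' hm'
  by_contra hne
  rcases lt_or_gt_of_ne hne with hlt | hlt
  · rcases wit_lt G hq1 hm.1 hm'.1 hlt with h | h
    · exact hm'.2 (Or.inl (by rw [h, Equiv.symm_apply_apply]))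
    · refine hm'.2 (Or.inr ?_)
      have : (eG G).symm q⁻¹ = m' := by rw [h, inv_inv, Equiv.symm_apply_apply]
      exact Set.mem_singleton_iff.mpr this.symm
  · rcases wit_lt G hq1 hm'.1 hm.1 hlt with h | h
    · exact hm.2 (Or.inl (by rw [h, Equiv.symm_apply_apply]))
    · refine hm.2 (Or.inr ?_)
      have : (eG G).symm q⁻¹ = m := by rw [h, inv_inv, Equiv.symm_apply_apply]
      exact Set.mem_singleton_iff.mpr this.symm

lemma mem_Aset_iff {x : G} : x ∈ Aset G ↔ ∃ i : I G, x ∈ sPair G i := by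
  unfold Aset sPair
  simp [Set.mem_insert_iff, Set.mem_singleton_iff]

/-- The main finiteness result: for `q ≠ 1`, `qA ∩ A` is finite. -/
lemma smul_inter_finite {q : G} (hq1 : q ≠ 1) : (q • Aset G ∩ Aset G).Finite := by
  have hcover : q • Aset G ∩ Aset G ⊆
      ⋃ m ∈ {m : I G | Wit G q m}, (sPair G m ∪ q • sPair G m) := by
    rintro y ⟨hy1, hy2⟩
    -- y ∈ q • A means q⁻¹ * y ∈ A
    obtain ⟨z, hz, rfl⟩ := hy1
    obtain ⟨i, hi⟩ := (mem_Aset_iff G).mp hy2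
    obtain ⟨j, hj⟩ := (mem_Aset_iff G).mp hz
    have hquot : (q * z) * z⁻¹ = q := by group
    rcases lt_trichotomy i j with hlt | heq | hlt
    · -- z is the newer element, at step j; y = q * z ∈ Pset j side
      have hwit : Wit G q j := by
        refine ⟨z, hj, q * z, Or.inl (sPair_subset_Pset G hlt hi), Or.inr ?_⟩
        exact hquot
      refine Set.mem_biUnion hwit ?_
      exact Or.inr (Set.smul_mem_smul_set hj)
    · subst heq
      have hwit : Wit G q i := ⟨q * z, hi, z, Or.inr hj, Or.inl hquot⟩
      exact Set.mem_biUnion hwit (Or.inl hi)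
    · -- y = q*z is the newer element, at step i
      have hwit : Wit G q i :=
        ⟨q * z, hi, z, Or.inl (sPair_subset_Pset G hlt hj), Or.inl hquot⟩
      exact Set.mem_biUnion hwit (Or.inl hi)
  refine Set.Finite.subset ?_ hcover
  refine Set.Finite.biUnion (wit_finite G hq1) ?_
  intro m _
  have hfin : (sPair G m).Finite := (Set.finite_singleton _).insert _
  exact hfin.union hfin.smul_set

lemma Aset_infinite : (Aset G).Infinite := by
  intro hfin
  have : (Aset G * (Aset G)⁻¹).Finite := hfin.mul hfin.inv
  rw [Aset_mul_inv] at this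
  exact Set.infinite_univ this

lemma combDer_Aset : combDer (Aset G) = {(1 : G)} := by
  ext g
  simp only [combDer, Set.mem_setOf_eq, Set.mem_singleton_iff]
  constructor
  · intro h
    by_contra hg
    exact h (smul_inter_finite G hg)
  · rintro rfl
    rw [one_smul, Set.inter_self]
    exact Aset_infinite G

end

end BanakhProtasov

/-- Every infinite group `G` contains a subset `A` with `G = A * A⁻¹` and
`∆(A) = {e}`. -/
theorem exists_subset_mul_inv_univ_combDer_singleton
    {G : Type*} [Group G] [Infinite G] :
    ∃ A : Set G, A * A⁻¹ = Set.univ ∧ combDer A = {(1 : G)} := by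
  exact ⟨BanakhProtasov.Aset G, BanakhProtasov.Aset_mul_inv G, BanakhProtasov.combDer_Aset G⟩
end
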